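/- arXiv:2208.05137 — 6 statements merged into one kernel-verified Lean document; each statement's English description precedes it below -/
import Mathlib

section
/- As formal power series, 1 + 2 Σ_{τ=1}^∞ (-1)^τ q^(τ²) = ∏_{n=1}^∞ (1-q^n)/(1+q^n). -/
open PowerSeries

/-- The infinite sum of a sequence of formal power series whose `τ`-th term has
`X`-order at least `τ` (so that each coefficient stabilizes): the `k`-th
coefficient is that of the partial sum of the first `k+1` terms. -/
noncomputable def isum (f : ℕ → PowerSeries ℚ) : PowerSeries ℚ :=
  PowerSeries.mk fun k => PowerSeries.coeff k (∑ i ∈ Finset.range (k + 1), f i)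

/-- The infinite product of a sequence of formal power series whose `n`-th factor
is `1 + O(X^(n+1))` (so that each coefficient stabilizes): the `k`-th
coefficient is that of the partial product of the first `k+1` factors. -/
noncomputable def iprod (f : ℕ → PowerSeries ℚ) : PowerSeries ℚ :=
  PowerSeries.mk fun k => PowerSeries.coeff k (∏ i ∈ Finset.range (k + 1), f i)

open Finset

noncomputable section
namespace GaussAux

abbrev K : Type := LaurentSeries ℚ


def phi : PowerSeries ℚ →+* K := HahnSeries.ofPowerSeries ℤ ℚ
lemma phi_inj : Function.Injective phi := HahnSeries.ofPowerSeries_injective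
def x : K := phi PowerSeries.X

lemma one_sub_x_pow_ne (m : ℕ) : (1 : K) - x ^ (m+1) ≠ 0 := by
  have : (1 : K) - x ^ (m+1) = phi (1 - PowerSeries.X ^ (m+1)) := by
    simp [x, map_sub, map_pow]
  rw [this]
  intro h
  have h2 : (1 - PowerSeries.X ^ (m+1) : PowerSeries ℚ) = 0 := by
    apply phi_inj; simpa using h
  have := congrArg (PowerSeries.constantCoeff) h2
  simp [PowerSeries.constantCoeff_X] at this

/-- `u d t = ∏_{i=d+1}^{d+t} (1 - x^i)` -/
def u (d t : ℕ) : K := ∏ i ∈ range t, (1 - x ^ (d+1+i))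

lemma u_ne (d t : ℕ) : u d t ≠ 0 :=
  Finset.prod_ne_zero_iff.2 fun i _ => by
    have : d + 1 + i = (d + i) + 1 := by omega
    rw [this]; exact one_sub_x_pow_ne (d + i)

/-- `p m = (q;q)_m` -/
def p (m : ℕ) : K := u 0 m

lemma p_ne (m : ℕ) : p m ≠ 0 := u_ne 0 m

lemma p_split (d t : ℕ) : p (d + t) = p d * u d t := by
  simp only [p, u]
  rw [prod_range_add]
  congr 1
  apply prod_congr rfl; intro i _; congr 2; omega

lemma p_succ (m : ℕ) : p (m+1) = p m * (1 - x ^ (m+1)) := by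
  have := p_split m 1
  simpa [u] using this


/-- Gaussian binomial `[m choose k]_q` as an element of `K`, zero out of range. -/
def b (m : ℕ) (k : ℤ) : K :=
  if 0 ≤ k ∧ k ≤ m then p m / (p k.toNat * p (m - k.toNat)) else 0

lemma b_out (m : ℕ) (k : ℤ) (h : ¬ (0 ≤ k ∧ k ≤ m)) : b m k = 0 := if_neg h

lemma b_nat (m a : ℕ) (h : a ≤ m) : b m (a : ℤ) = p m / (p a * p (m - a)) := by
  rw [b, if_pos ⟨Int.natCast_nonneg a, by exact_mod_cast h⟩, Int.toNat_natCast]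

lemma p_zero : p 0 = 1 := by simp [p, u]

lemma b_zero (m : ℕ) : b m 0 = 1 := by
  have h := b_nat m 0 (Nat.zero_le m)
  rw [show ((0:ℕ):ℤ) = 0 from rfl] at h
  rw [h, p_zero, Nat.sub_zero, one_mul, div_self (p_ne m)]

lemma b_top (m : ℕ) : b m (m : ℤ) = 1 := by
  have h := b_nat m m le_rfl
  rw [h, Nat.sub_self, p_zero, mul_one, div_self (p_ne m)]

lemma pascal (m : ℕ) (k : ℤ) :
    b (m+1) k = b m (k-1) + x ^ k * b m k := by
  rcases lt_or_ge k 0 with hk | hk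
  · rw [b_out _ _ (by omega), b_out _ _ (by omega), b_out _ _ (by omega)]
    ring
  obtain ⟨a, rfl⟩ := Int.eq_ofNat_of_zero_le hk
  rcases Nat.lt_or_ge m a with hm | hm
  · -- a ≥ m+1
    rcases Nat.lt_or_ge (m+1) a with hm2 | hm2
    · rw [b_out _ _ (by push_cast; omega), b_out _ _ (by push_cast; omega),
        b_out _ _ (by push_cast; omega)]
      ring
    · -- a = m+1
      have ha : a = m + 1 := by omega
      subst ha
      rw [b_top (m+1), b_out m ((m+1:ℕ):ℤ) (by push_cast; omega),
        show ((m+1:ℕ):ℤ) - 1 = (m:ℤ) by push_cast; ring, b_top m]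
      ring
  · -- a ≤ m
    rcases Nat.eq_zero_or_pos a with rfl | hapos
    · simp only [Nat.cast_zero, b_zero, zero_sub]
      rw [b_out _ _ (by omega)]
      simp
    -- 1 ≤ a ≤ m
    obtain ⟨c, rfl⟩ : ∃ c, a = c + 1 := ⟨a - 1, by omega⟩
    obtain ⟨d, rfl⟩ : ∃ d, m = (c + 1) + d := ⟨m - (c+1), by omega⟩
    have e1 : b ((c+1+d)+1) ((c+1 : ℕ) : ℤ) =
        p (c+1+d+1) / (p (c+1) * p (d+1)) := by
      rw [b_nat _ _ (by omega), show (c+1+d+1) - (c+1) = d+1 from by omega]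
    have e2 : b (c+1+d) (((c+1:ℕ):ℤ) - 1) = p (c+1+d) / (p c * p (d+1)) := by
      rw [show (((c+1:ℕ):ℤ) - 1) = ((c:ℕ):ℤ) by push_cast; ring,
        b_nat _ _ (by omega), show (c+1+d) - c = d+1 from by omega]
    have e3 : b (c+1+d) ((c+1:ℕ):ℤ) = p (c+1+d) / (p (c+1) * p d) := by
      rw [b_nat _ _ (by omega), show (c+1+d) - (c+1) = d from by omega]
    rw [e1, e2, e3]
    have hp1 : p (c+1+d+1) = p (c+1+d) * (1 - x ^ (c+1+d+1)) := p_succ _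
    have hp2 : p (c+1) = p c * (1 - x ^ (c+1)) := p_succ _
    have hp3 : p (d+1) = p d * (1 - x ^ (d+1)) := p_succ _
    have hx : x ^ ((((c+1):ℕ)):ℤ) = x ^ (c+1:ℕ) := zpow_natCast x (c+1)
    rw [hp1, hp2, hp3, hx]
    have key : (1 : K) - x ^ (c+1+d+1) =
        (1 - x ^ (c+1)) + x ^ (c+1) * (1 - x ^ (d+1)) := by
      have : x ^ (c+1) * x ^ (d+1) = x ^ (c+1+d+1) := by
        rw [← pow_add]; congr 1
      rw [mul_sub, mul_one, this]; ring
    rw [key]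
    have hpc := p_ne c
    have hpd := p_ne d
    have hX1 := one_sub_x_pow_ne c
    have hX2 := one_sub_x_pow_ne d
    field_simp
    try ring

lemma absorb (m : ℕ) (k : ℤ) :
    (1 - x ^ ((m:ℤ) + 1 - k)) * b (m+1) k = (1 - x ^ (m+1)) * b m k := by
  rcases lt_or_ge k 0 with hk | hk
  · rw [b_out _ _ (by omega), b_out _ _ (by omega)]; ring
  obtain ⟨a, rfl⟩ := Int.eq_ofNat_of_zero_le hk
  rcases Nat.lt_or_ge m a with hm | hm
  · rcases Nat.lt_or_ge (m+1) a with hm2 | hm2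
    · rw [b_out _ _ (by push_cast; omega), b_out _ _ (by push_cast; omega)]; ring
    · have ha : a = m + 1 := by omega
      subst ha
      rw [b_out m _ (by push_cast; omega),
        show ((m:ℤ) + 1 - ((m+1:ℕ):ℤ)) = 0 by push_cast; ring]
      simp
  · -- a ≤ m
    obtain ⟨d, rfl⟩ : ∃ d, m = a + d := ⟨m - a, by omega⟩
    have e1 : b ((a+d)+1) ((a:ℕ):ℤ) = p (a+d+1) / (p a * p (d+1)) := by
      rw [b_nat _ _ (by omega), show (a+d+1) - a = d+1 from by omega]
    have e2 : b (a+d) ((a:ℕ):ℤ) = p (a+d) / (p a * p d) := by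
      rw [b_nat _ _ (by omega), show (a+d) - a = d from by omega]
    rw [e1, e2,
      show ((a+d : ℕ):ℤ) + 1 - ((a:ℕ):ℤ) = ((d+1 : ℕ):ℤ) by push_cast; ring,
      zpow_natCast]
    rw [p_succ (a+d), p_succ d]
    have hpa := p_ne a
    have hpd := p_ne d
    have hX2 := one_sub_x_pow_ne d
    field_simp
    try ring

lemma x_ne : x ≠ 0 := by
  intro h
  have : (PowerSeries.X : PowerSeries ℚ) = 0 := phi_inj (by simpa [x] using h)
  exact PowerSeries.X_ne_zero this

/-- the Gauss alternating sum at level `n` -/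
def S (n : ℕ) : K :=
  ∑ j ∈ Icc (-(n:ℤ)) (n:ℤ), (-1 : K) ^ j * x ^ (j^2) * b (2*n) ((n:ℤ) + j)

lemma Sstep (n : ℕ) : S (n+1) = (1 - x ^ (2*n+1)) * S n := by
  have hxne := x_ne
  have hne1 : (-1 : K) ≠ 0 := by norm_num
  have step1 : S (n+1) =
      (∑ j ∈ Icc (-(n:ℤ)-1) ((n:ℤ)+1), (-1:K)^j * x^(j^2) * b (2*n+1) ((n:ℤ)+j))
      + ∑ j ∈ Icc (-(n:ℤ)-1) ((n:ℤ)+1),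
          (-1:K)^j * x^(j^2 + ((n:ℤ)+1+j)) * b (2*n+1) ((n:ℤ)+1+j) := by
    rw [S, ← Finset.sum_add_distrib,
        show (-(((n+1):ℕ):ℤ)) = -(n:ℤ)-1 by push_cast; ring,
        show ((((n+1):ℕ)):ℤ) = (n:ℤ)+1 from by push_cast; ring]
    apply Finset.sum_congr rfl
    intro j hj
    have hpascal := pascal (2*n+1) ((n:ℤ)+1+j)
    rw [show 2*(n+1) = 2*n+1+1 from by omega]
    rw [hpascal, show (n:ℤ)+1+j-1 = (n:ℤ)+j from by ring,
      zpow_add₀ hxne (j^2) ((n:ℤ)+1+j)]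
    ring
  have step2 : (∑ j ∈ Icc (-(n:ℤ)-1) ((n:ℤ)+1),
      (-1:K)^j * x^(j^2 + ((n:ℤ)+1+j)) * b (2*n+1) ((n:ℤ)+1+j))
      = ∑ j ∈ Icc (-(n:ℤ)) ((n:ℤ)+2),
        (-1:K)^(j-1) * x^((j-1)^2 + ((n:ℤ)+j)) * b (2*n+1) ((n:ℤ)+j) := by
    rw [show Icc (-(n:ℤ)) ((n:ℤ)+2)
          = (Icc (-(n:ℤ)-1) ((n:ℤ)+1)).map (addRightEmbedding 1) from by
        rw [Finset.map_add_right_Icc]; congr 1 <;> ring]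
    rw [Finset.sum_map]
    apply Finset.sum_congr rfl
    intro j hj
    simp only [addRightEmbedding_apply]
    rw [show j+1-1 = j from by ring, show (n:ℤ)+(j+1) = (n:ℤ)+1+j from by ring]
  -- extend both sums to the common interval
  have hsub1 : Icc (-(n:ℤ)-1) ((n:ℤ)+1) ⊆ Icc (-(n:ℤ)-1) ((n:ℤ)+2) :=
    Finset.Icc_subset_Icc le_rfl (by omega)
  have hsub2 : Icc (-(n:ℤ)) ((n:ℤ)+2) ⊆ Icc (-(n:ℤ)-1) ((n:ℤ)+2) :=
    Finset.Icc_subset_Icc (by omega) le_rfl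
  have ext1 : (∑ j ∈ Icc (-(n:ℤ)-1) ((n:ℤ)+1), (-1:K)^j * x^(j^2) * b (2*n+1) ((n:ℤ)+j))
      = ∑ j ∈ Icc (-(n:ℤ)-1) ((n:ℤ)+2), (-1:K)^j * x^(j^2) * b (2*n+1) ((n:ℤ)+j) := by
    apply (Finset.sum_subset hsub1 ?_)
    intro j hj hnj
    simp only [Finset.mem_Icc] at hj hnj
    rw [b_out _ _ (by omega), mul_zero]
  have ext2 : (∑ j ∈ Icc (-(n:ℤ)) ((n:ℤ)+2),
        (-1:K)^(j-1) * x^((j-1)^2 + ((n:ℤ)+j)) * b (2*n+1) ((n:ℤ)+j))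
      = ∑ j ∈ Icc (-(n:ℤ)-1) ((n:ℤ)+2),
        (-1:K)^(j-1) * x^((j-1)^2 + ((n:ℤ)+j)) * b (2*n+1) ((n:ℤ)+j) := by
    apply (Finset.sum_subset hsub2 ?_)
    intro j hj hnj
    simp only [Finset.mem_Icc] at hj hnj
    rw [b_out _ _ (by omega), mul_zero]
  have step3 : S (n+1) = ∑ j ∈ Icc (-(n:ℤ)-1) ((n:ℤ)+2),
      (-1:K)^j * x^(j^2) * ((1 - x ^ ((((2*n):ℕ):ℤ) + 1 - ((n:ℤ)+j))) * b (2*n+1) ((n:ℤ)+j)) := by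
    rw [step1, step2, ext1, ext2, ← Finset.sum_add_distrib]
    apply Finset.sum_congr rfl
    intro j hj
    have h1 : (-1:K)^(j-1) = -(-1:K)^j := by
      rw [zpow_sub₀ hne1, zpow_one]
      field_simp
    have h2 : (j-1)^2 + ((n:ℤ)+j) = j^2 + ((((2*n):ℕ):ℤ) + 1 - ((n:ℤ)+j)) := by
      push_cast; ring
    rw [h1, h2, zpow_add₀ hxne (j^2) ((((2*n):ℕ):ℤ) + 1 - ((n:ℤ)+j))]
    ring
  have step4 : S (n+1) = (1 - x^(2*n+1)) * ∑ j ∈ Icc (-(n:ℤ)-1) ((n:ℤ)+2),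
      (-1:K)^j * x^(j^2) * b (2*n) ((n:ℤ)+j) := by
    rw [step3, Finset.mul_sum]
    apply Finset.sum_congr rfl
    intro j hj
    rw [show 2*n+1 = (2*n)+1 from rfl, absorb (2*n) ((n:ℤ)+j)]
    ring
  rw [step4, S]
  congr 1
  symm
  apply (Finset.sum_subset (Finset.Icc_subset_Icc (by omega) (by omega)) ?_)
  intro j hj hnj
  simp only [Finset.mem_Icc] at hj hnj
  rw [b_out _ _ (by push_cast; omega), mul_zero]

lemma Sval (n : ℕ) : S n = ∏ i ∈ range n, (1 - x ^ (2*i+1)) := by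
  induction n with
  | zero =>
    rw [S]
    simp [b_zero]
  | succ n ih =>
    rw [Sstep n, ih, prod_range_succ]
    ring

lemma u_zero (d : ℕ) : u d 0 = 1 := by simp [u]

lemma p_eq (n : ℕ) : p n = ∏ i ∈ range n, (1 - x ^ (i+1)) := by
  unfold p u
  apply prod_congr rfl
  intro i _
  congr 2
  omega

lemma pairsum (f : ℤ → K) (n : ℕ) :
    ∑ j ∈ Icc (-(n:ℤ)) (n:ℤ), f j
      = f 0 + ∑ j ∈ range n, (f ((j:ℤ)+1) + f (-((j:ℤ)+1))) := by
  induction n with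
  | zero => simp
  | succ n ih =>
    have h1 : Icc (-((n+1:ℕ):ℤ)) ((n+1:ℕ):ℤ)
        = insert (-((n:ℤ)+1)) (insert ((n:ℤ)+1) (Icc (-(n:ℤ)) (n:ℤ))) := by
      ext j
      simp only [Finset.mem_Icc, Finset.mem_insert]
      push_cast
      omega
    rw [h1, Finset.sum_insert (by simp only [Finset.mem_insert, Finset.mem_Icc]; omega),
      Finset.sum_insert (by simp only [Finset.mem_Icc]; omega),
      sum_range_succ, ih]
    push_cast
    ring

lemma hbval (n j : ℕ) (h : j ≤ n) :
    b (2*n) ((n:ℤ) + j) * p n = u (n-j) j * u (n+j) (n-j) := by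
  have h1 : b (2*n) ((n:ℤ) + j) = p (2*n) / (p (n+j) * p (n-j)) := by
    rw [show (n:ℤ) + j = ((n+j:ℕ):ℤ) from by push_cast; ring,
      b_nat _ _ (by omega), show 2*n - (n+j) = n-j from by omega]
  have h2 : p (2*n) = p (n+j) * u (n+j) (n-j) := by
    rw [show 2*n = (n+j) + (n-j) from by omega]
    exact p_split _ _
  have h3 : p n = p (n-j) * u (n-j) j := by
    have h4 := p_split (n-j) j
    rw [show (n-j)+j = n from by omega] at h4
    exact h4
  rw [h1, h2]
  nth_rewrite 1 [h3]
  field_simp [p_ne]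

lemma hsym (n j : ℕ) (h : j ≤ n) :
    b (2*n) ((n:ℤ) - j) = b (2*n) ((n:ℤ) + j) := by
  rw [show (n:ℤ) - j = ((n-j:ℕ):ℤ) from by push_cast [h]; ring,
    show (n:ℤ) + j = ((n+j:ℕ):ℤ) from by push_cast; ring,
    b_nat _ _ (by omega), b_nat _ _ (by omega),
    show 2*n - (n-j) = n+j from by omega, show 2*n - (n+j) = n-j from by omega]
  ring

lemma neg_one_zpow (a : ℕ) : (-1:K) ^ (-(a:ℤ)) = (-1:K) ^ a := by
  rw [zpow_neg, zpow_natCast, ← inv_pow]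
  norm_num

/-- decomposition of `p (2n)` into odd and even factors -/
lemma poe (n : ℕ) : p (2*n)
    = (∏ i ∈ range n, (1 - x ^ (2*i+1))) * (∏ i ∈ range n, (1 - x ^ (2*i+2))) := by
  induction n with
  | zero => simp [p_zero]
  | succ n ih =>
    rw [show 2*(n+1) = (2*n+1)+1 from by omega, p_succ, show 2*n+1 = (2*n)+1 from rfl,
      p_succ, ih, prod_range_succ, prod_range_succ]
    ring_nf

lemma evenprod (n : ℕ) :
    p n * (∏ i ∈ range n, (1 + x ^ (i+1))) = ∏ i ∈ range n, (1 - x ^ (2*i+2)) := by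
  rw [p_eq, ← prod_mul_distrib]
  apply prod_congr rfl
  intro i _
  rw [show 2*i+2 = (i+1)+(i+1) from by omega, pow_add]
  ring

/-- the central cleared-denominator identity, in `K` -/
lemma diamondK (n : ℕ) :
    (∏ i ∈ range n, (1 + x ^ (i+1))) * u n n
      + ∑ j ∈ range n, 2 * (-1:K)^(j+1) * x^((j+1)^2)
          * (u (n-(j+1)) (j+1) * u (n+(j+1)) (n-(j+1)) * ∏ i ∈ range n, (1 + x ^ (i+1)))
      = p n * u n n := by
  have hBn : ∀ m : ℕ, (m:ℤ) + 0 = ((m:ℕ):ℤ) := by intro m; ring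
  have key : S n * (p n * ∏ i ∈ range n, (1 + x ^ (i+1)))
      = (∏ i ∈ range n, (1 + x ^ (i+1))) * u n n
        + ∑ j ∈ range n, 2 * (-1:K)^(j+1) * x^((j+1)^2)
          * (u (n-(j+1)) (j+1) * u (n+(j+1)) (n-(j+1)) * ∏ i ∈ range n, (1 + x ^ (i+1))) := by
    rw [S, pairsum (fun j => (-1 : K) ^ j * x ^ (j^2) * b (2*n) ((n:ℤ) + j)) n]
    rw [add_mul, Finset.sum_mul]
    congr 1
    · -- center term
      simp only [zpow_zero, one_mul]
      have h0 : (0:ℤ)^2 = 0 := by norm_num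
      rw [show ((n:ℤ) + 0) = (n:ℤ) + (0:ℕ) from by push_cast; ring]
      rw [show x ^ ((0:ℤ)^2) = 1 from by rw [h0, zpow_zero]]
      rw [one_mul]
      have hb := hbval n 0 (Nat.zero_le n)
      calc b (2*n) ((n:ℤ) + (0:ℕ)) * (p n * ∏ i ∈ range n, (1 + x ^ (i+1)))
          = (b (2*n) ((n:ℤ) + (0:ℕ)) * p n) * ∏ i ∈ range n, (1 + x ^ (i+1)) := by ring
        _ = (u (n-0) 0 * u (n+0) (n-0)) * ∏ i ∈ range n, (1 + x ^ (i+1)) := by rw [hb]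
        _ = (∏ i ∈ range n, (1 + x ^ (i+1))) * u n n := by
            rw [u_zero, Nat.sub_zero, Nat.add_zero, one_mul]; ring
    · apply Finset.sum_congr rfl
      intro j hj
      have hjn : j + 1 ≤ n := mem_range.mp hj
      have c1 : (-1:K) ^ ((j:ℤ)+1) = (-1:K) ^ (j+1:ℕ) := by
        rw [show ((j:ℤ)+1) = ((j+1:ℕ):ℤ) from by push_cast; ring, zpow_natCast]
      have c2 : (-1:K) ^ (-((j:ℤ)+1)) = (-1:K) ^ (j+1:ℕ) := by
        rw [show ((j:ℤ)+1) = ((j+1:ℕ):ℤ) from by push_cast; ring, neg_one_zpow]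
      have c3 : x ^ (((j:ℤ)+1)^2) = x ^ ((j+1)^2 : ℕ) := by
        rw [show (((j:ℤ)+1)^2) = (((j+1)^2 : ℕ):ℤ) from by push_cast; ring, zpow_natCast]
      have c4 : x ^ ((-((j:ℤ)+1))^2) = x ^ ((j+1)^2 : ℕ) := by
        rw [show ((-((j:ℤ)+1))^2) = (((j+1)^2 : ℕ):ℤ) from by push_cast; ring, zpow_natCast]
      have c5 : b (2*n) ((n:ℤ) + -((j:ℤ)+1)) = b (2*n) ((n:ℤ) + ((j+1:ℕ):ℤ)) := by
        rw [show ((n:ℤ) + -((j:ℤ)+1)) = (n:ℤ) - ((j+1:ℕ):ℤ) from by push_cast; ring]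
        rw [hsym n (j+1) hjn]
      have c6 : b (2*n) ((n:ℤ) + ((j:ℤ)+1)) = b (2*n) ((n:ℤ) + ((j+1:ℕ):ℤ)) := by
        norm_cast
      have hb := hbval n (j+1) hjn
      calc ((-1:K) ^ ((j:ℤ)+1) * x ^ (((j:ℤ)+1)^2) * b (2*n) ((n:ℤ) + ((j:ℤ)+1))
            + (-1:K) ^ (-((j:ℤ)+1)) * x ^ ((-((j:ℤ)+1))^2) * b (2*n) ((n:ℤ) + -((j:ℤ)+1)))
            * (p n * ∏ i ∈ range n, (1 + x ^ (i+1)))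
          = 2 * (-1:K)^(j+1) * x^((j+1)^2)
            * ((b (2*n) ((n:ℤ) + ((j+1:ℕ):ℤ)) * p n) * ∏ i ∈ range n, (1 + x ^ (i+1))) := by
            rw [c1, c2, c3, c4, c5, c6]; ring
        _ = 2 * (-1:K)^(j+1) * x^((j+1)^2)
            * (u (n-(j+1)) (j+1) * u (n+(j+1)) (n-(j+1)) * ∏ i ∈ range n, (1 + x ^ (i+1))) := by
            rw [show ((n:ℤ) + ((j+1:ℕ):ℤ)) = (n:ℤ) + ((j+1:ℕ)) from rfl, hb]
  rw [← key, Sval]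
  have h2 : p (2*n) = p n * u n n := by
    rw [show 2*n = n + n from by omega]; exact p_split n n
  calc (∏ i ∈ range n, (1 - x ^ (2*i+1))) * (p n * ∏ i ∈ range n, (1 + x ^ (i+1)))
      = (∏ i ∈ range n, (1 - x ^ (2*i+1))) * (∏ i ∈ range n, (1 - x ^ (2*i+2))) := by
        rw [evenprod]
    _ = p (2*n) := (poe n).symm
    _ = p n * u n n := h2

/-! ### Transfer to `ℚ⟦X⟧` -/

def U (d t : ℕ) : PowerSeries ℚ := ∏ i ∈ range t, (1 - PowerSeries.X ^ (d+1+i))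
def P (n : ℕ) : PowerSeries ℚ := ∏ i ∈ range n, (1 - PowerSeries.X ^ (i+1))
def B (n : ℕ) : PowerSeries ℚ := ∏ i ∈ range n, (1 + PowerSeries.X ^ (i+1))

lemma phiU (d t : ℕ) : phi (U d t) = u d t := by
  unfold U u
  rw [map_prod]
  apply prod_congr rfl
  intro i _
  rw [map_sub, map_one, map_pow]
  rfl

lemma phiP (n : ℕ) : phi (P n) = p n := by
  unfold P
  rw [p_eq, map_prod]
  apply prod_congr rfl
  intro i _
  rw [map_sub, map_one, map_pow]
  rfl

lemma phiB (n : ℕ) : phi (B n) = ∏ i ∈ range n, (1 + x ^ (i+1)) := by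
  unfold B
  rw [map_prod]
  apply prod_congr rfl
  intro i _
  rw [map_add, map_one, map_pow]
  rfl

/-- the central identity, now in `ℚ⟦X⟧` -/
lemma diamondPS (n : ℕ) :
    B n * U n n
      + ∑ j ∈ range n, 2 * (-1 : PowerSeries ℚ)^(j+1) * PowerSeries.X^((j+1)^2)
          * (U (n-(j+1)) (j+1) * U (n+(j+1)) (n-(j+1)) * B n)
      = P n * U n n := by
  apply phi_inj
  have hterm : ∀ j ∈ range n,
      phi (2 * (-1 : PowerSeries ℚ)^(j+1) * PowerSeries.X^((j+1)^2)
          * (U (n-(j+1)) (j+1) * U (n+(j+1)) (n-(j+1)) * B n))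
        = 2 * (-1:K)^(j+1) * x^((j+1)^2)
          * (u (n-(j+1)) (j+1) * u (n+(j+1)) (n-(j+1)) * ∏ i ∈ range n, (1 + x ^ (i+1))) := by
    intro j _
    rw [map_mul, map_mul, map_mul, map_mul, map_mul, map_ofNat, map_pow, map_neg,
      map_one, map_pow, phiU, phiU, phiB]
    rfl
  rw [map_add, map_mul, map_sum, map_mul, phiB, phiP, phiU,
    Finset.sum_congr rfl hterm]
  exact diamondK n

/-! ### coefficient extraction -/

lemma constU (d t : ℕ) : PowerSeries.constantCoeff (U d t) = 1 := by
  unfold U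
  rw [map_prod]
  apply Finset.prod_eq_one
  intro i _
  rw [map_sub, map_one, map_pow]
  simp

lemma constB (n : ℕ) : PowerSeries.constantCoeff (B n) = 1 := by
  unfold B
  rw [map_prod]
  apply Finset.prod_eq_one
  intro i _
  rw [map_add, map_one, map_pow]
  simp

lemma U_ne (d t : ℕ) : U d t ≠ 0 := fun h => by simpa [h] using constU d t

lemma B_ne (n : ℕ) : B n ≠ 0 := fun h => by simpa [h] using constB n

lemma DU (d t : ℕ) : (PowerSeries.X : PowerSeries ℚ)^(d+1) ∣ U d t - 1 := by
  induction t with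
  | zero => simpa [U] using dvd_zero _
  | succ t ih =>
    have : U d (t+1) - 1 = (U d t - 1) - U d t * PowerSeries.X^(d+1+t) := by
      unfold U
      rw [prod_range_succ]
      ring
    rw [this]
    exact dvd_sub ih (Dvd.dvd.mul_left (pow_dvd_pow _ (by omega)) _)

lemma DUinv (n : ℕ) : (PowerSeries.X : PowerSeries ℚ)^(n+1) ∣ (U n n)⁻¹ - 1 := by
  have hinv : (U n n)⁻¹ * U n n = 1 :=
    PowerSeries.inv_mul_cancel _ (by rw [constU]; norm_num)
  have : (U n n)⁻¹ - 1 = (U n n)⁻¹ * (1 - U n n) := by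
    rw [mul_sub, mul_one, hinv]
  rw [this]
  have h2 : (PowerSeries.X : PowerSeries ℚ)^(n+1) ∣ 1 - U n n := by
    rw [show (1 - U n n) = -(U n n - 1) from by ring]
    exact dvd_neg.mpr (DU n n)
  exact h2.mul_left _

lemma coeff_aux (k m r : ℕ) (Z : PowerSeries ℚ)
    (hZ : (PowerSeries.X : PowerSeries ℚ)^r ∣ Z - 1) (hkr : k < m + r) :
    PowerSeries.coeff k (PowerSeries.X^m * Z)
      = PowerSeries.coeff k ((PowerSeries.X : PowerSeries ℚ)^m) := by
  rw [PowerSeries.coeff_X_pow_mul', PowerSeries.coeff_X_pow]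
  split_ifs with h1 h2 h3
  · -- m ≤ k and k = m
    have hc : PowerSeries.coeff (k-m) (Z - 1) = 0 :=
      PowerSeries.X_pow_dvd_iff.mp hZ _ (by omega)
    rw [map_sub] at hc
    have : PowerSeries.coeff (k-m) Z = PowerSeries.coeff (k-m) 1 := by linarith
    rw [this, show k - m = 0 from by omega]
    simp
  · have hc : PowerSeries.coeff (k-m) (Z - 1) = 0 :=
      PowerSeries.X_pow_dvd_iff.mp hZ _ (by omega)
    rw [map_sub] at hc
    have : PowerSeries.coeff (k-m) Z = PowerSeries.coeff (k-m) 1 := by linarith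
    rw [this, PowerSeries.coeff_one, if_neg (by omega)]
  · omega
  · rfl

set_option maxHeartbeats 1000000 in
lemma keyPS (n : ℕ) :
    P n * (B n)⁻¹
      = 1 + ∑ j ∈ range n, 2 * (-1 : PowerSeries ℚ)^(j+1) * PowerSeries.X^((j+1)^2)
          * (U (n-(j+1)) (j+1) * U (n+(j+1)) (n-(j+1)) * (U n n)⁻¹) := by
  have hBinv : (B n)⁻¹ * B n = 1 :=
    PowerSeries.inv_mul_cancel _ (by rw [constB]; norm_num)
  have hUinv : (U n n)⁻¹ * U n n = 1 :=
    PowerSeries.inv_mul_cancel _ (by rw [constU]; norm_num)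
  have hne : B n * U n n ≠ 0 := mul_ne_zero (B_ne n) (U_ne n n)
  apply mul_right_cancel₀ hne
  calc P n * (B n)⁻¹ * (B n * U n n) = P n * U n n * ((B n)⁻¹ * B n) := by ring
    _ = P n * U n n := by rw [hBinv, mul_one]
    _ = B n * U n n + ∑ j ∈ range n, 2 * (-1 : PowerSeries ℚ)^(j+1) * PowerSeries.X^((j+1)^2)
          * (U (n-(j+1)) (j+1) * U (n+(j+1)) (n-(j+1)) * B n) := (diamondPS n).symm
    _ = (1 + ∑ j ∈ range n, 2 * (-1 : PowerSeries ℚ)^(j+1) * PowerSeries.X^((j+1)^2)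
          * (U (n-(j+1)) (j+1) * U (n+(j+1)) (n-(j+1)) * (U n n)⁻¹)) * (B n * U n n) := by
        rw [add_mul, one_mul, Finset.sum_mul]
        congr 1
        apply Finset.sum_congr rfl
        intro j _
        rw [show (2 * (-1 : PowerSeries ℚ)^(j+1) * PowerSeries.X^((j+1)^2)
              * (U (n-(j+1)) (j+1) * U (n+(j+1)) (n-(j+1)) * (U n n)⁻¹)) * (B n * U n n)
            = 2 * (-1 : PowerSeries ℚ)^(j+1) * PowerSeries.X^((j+1)^2)
              * (U (n-(j+1)) (j+1) * U (n+(j+1)) (n-(j+1)) * B n) * ((U n n)⁻¹ * U n n)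
          from by ring, hUinv, mul_one]

lemma prodinv (n : ℕ) :
    ∏ i ∈ range n, ((1 - PowerSeries.X^(i+1)) * ((1 : PowerSeries ℚ) + PowerSeries.X^(i+1))⁻¹)
      = P n * (B n)⁻¹ := by
  have hBinv : B n * (B n)⁻¹ = 1 :=
    PowerSeries.mul_inv_cancel _ (by rw [constB]; norm_num)
  have h1 : (∏ i ∈ range n, ((1 - PowerSeries.X^(i+1))
      * ((1 : PowerSeries ℚ) + PowerSeries.X^(i+1))⁻¹)) * B n = P n := by
    rw [B, ← prod_mul_distrib, P]
    apply prod_congr rfl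
    intro i _
    rw [mul_assoc, PowerSeries.inv_mul_cancel _ (by simp), mul_one]
  calc (∏ i ∈ range n, ((1 - PowerSeries.X^(i+1))
        * ((1 : PowerSeries ℚ) + PowerSeries.X^(i+1))⁻¹))
      = (∏ i ∈ range n, ((1 - PowerSeries.X^(i+1))
        * ((1 : PowerSeries ℚ) + PowerSeries.X^(i+1))⁻¹)) * (B n * (B n)⁻¹) := by
        rw [hBinv, mul_one]
    _ = ((∏ i ∈ range n, ((1 - PowerSeries.X^(i+1))
        * ((1 : PowerSeries ℚ) + PowerSeries.X^(i+1))⁻¹)) * B n) * (B n)⁻¹ := by ring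
    _ = P n * (B n)⁻¹ := by rw [h1]

end GaussAux


-- Gauss's identity: `1 + 2 Σ_{τ≥1} (-1)^τ q^(τ²) = ∏_{n≥1} (1-q^n)/(1+q^n)`.
open GaussAux in
/-- Gauss's identity: `1 + 2 Σ_{τ≥1} (-1)^τ q^(τ²) = ∏_{n≥1} (1-q^n)/(1+q^n)`. -/
theorem stmt1 :
    1 + 2 * isum (fun τ => (-1 : PowerSeries ℚ) ^ (τ + 1) * X ^ ((τ + 1) ^ 2)) =
      iprod (fun n => (1 - (X : PowerSeries ℚ) ^ (n + 1)) * (1 + X ^ (n + 1))⁻¹) := by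
  ext k
  simp only [isum, iprod, PowerSeries.coeff_mk]
  rw [map_add, show (2 : PowerSeries ℚ) = PowerSeries.C 2 from (map_ofNat _ 2).symm,
    PowerSeries.coeff_C_mul, PowerSeries.coeff_mk, map_sum]
  rw [prodinv (k+1), keyPS (k+1), map_add, map_sum]
  congr 1
  rw [Finset.mul_sum]
  apply Finset.sum_congr rfl
  intro j hj
  have hjk : j < k + 1 := mem_range.mp hj
  set Z1 := U ((k+1)-(j+1)) (j+1)
  set Z2 := U ((k+1)+(j+1)) ((k+1)-(j+1))
  set Z3 := ((U (k+1) (k+1))⁻¹ : PowerSeries ℚ)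
  have h1 : (PowerSeries.X : PowerSeries ℚ)^((k+1)-(j+1)+1) ∣ Z1 - 1 := DU _ _
  have h2 : (PowerSeries.X : PowerSeries ℚ)^((k+1)-(j+1)+1) ∣ Z2 - 1 :=
    dvd_trans (pow_dvd_pow _ (by omega)) (DU _ _)
  have h3 : (PowerSeries.X : PowerSeries ℚ)^((k+1)-(j+1)+1) ∣ Z3 - 1 :=
    dvd_trans (pow_dvd_pow _ (by omega)) (DUinv (k+1))
  have hdvd : (PowerSeries.X : PowerSeries ℚ)^((k+1)-(j+1)+1) ∣ Z1 * Z2 * Z3 - 1 := by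
    have hsplit : Z1 * Z2 * Z3 - 1
        = (Z1 - 1) * (Z2 * Z3) + (Z2 - 1) * Z3 + (Z3 - 1) := by ring
    rw [hsplit]
    exact dvd_add (dvd_add (h1.mul_right _) (h2.mul_right _)) h3
  have hmr : k < (j+1)^2 + ((k+1)-(j+1)+1) := by
    have : j+1 ≤ (j+1)^2 := Nat.le_self_pow (by norm_num) _
    omega
  have hc := coeff_aux k ((j+1)^2) ((k+1)-(j+1)+1) (Z1 * Z2 * Z3) hdvd hmr
  have e1 : (2 : PowerSeries ℚ) * (-1)^(j+1) * PowerSeries.X^((j+1)^2) * (Z1 * Z2 * Z3)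
      = PowerSeries.C (2*(-1)^(j+1)) * (PowerSeries.X^((j+1)^2) * (Z1 * Z2 * Z3)) := by
    rw [map_mul, map_ofNat, map_pow, map_neg, map_one]
    ring
  have e2 : ((-1 : PowerSeries ℚ))^(j+1) * PowerSeries.X^((j+1)^2)
      = PowerSeries.C ((-1)^(j+1)) * PowerSeries.X^((j+1)^2) := by
    rw [map_pow, map_neg, map_one]
  rw [e1, e2, PowerSeries.coeff_C_mul, PowerSeries.coeff_C_mul, hc]
  ring
end
end

section
/- As formal power series, Σ_{τ=0}^∞ (-1)^τ q^(τ(2τ+1)) (1 - q^(2τ+1)) = ∏_{n=1}^∞ (1-q^(2n))/(1+q^(2n-1)). -/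
open PowerSeries Finset

abbrev PS := PowerSeries ℚ

/-- Gaussian binomial with base `X^4`, defined by Pascal's rule. -/
noncomputable def gb : ℕ → ℕ → PS
  | 0, 0 => 1
  | 0, _+1 => 0
  | _+1, 0 => 1
  | n+1, k+1 => gb n (k+1) + X^(4*(n-k)) * gb n k

lemma gb_zero_succ (k : ℕ) : gb 0 (k+1) = 0 := rfl
lemma gb_zero_zero : gb 0 0 = 1 := rfl
lemma gb_pascal (n k : ℕ) : gb (n+1) (k+1) = gb n (k+1) + X^(4*(n-k)) * gb n k := rfl

lemma gb_col_zero : ∀ n, gb n 0 = 1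
  | 0 => rfl
  | _+1 => rfl

lemma gb_eq_zero : ∀ n k : ℕ, n < k → gb n k = 0
  | 0, 0, h => absurd h (lt_irrefl 0)
  | 0, k+1, _ => rfl
  | n+1, 0, h => by omega
  | n+1, k+1, h => by
      rw [gb_pascal, gb_eq_zero n (k+1) (by omega), gb_eq_zero n k (by omega), mul_zero, add_zero]

lemma gb_diag : ∀ n : ℕ, gb n n = 1
  | 0 => rfl
  | n+1 => by
      rw [gb_pascal, gb_eq_zero n (n+1) (by omega), Nat.sub_self, zero_add, mul_zero,
        pow_zero, one_mul, gb_diag n]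

lemma gb_one : ∀ n : ℕ, gb n 1 = ∑ j ∈ range n, (X : PS)^(4*j)
  | 0 => by simp [gb_zero_succ]
  | n+1 => by
      show gb n 1 + X^(4*(n-0)) * gb n 0 = _
      rw [gb_one n, gb_col_zero, mul_one, Nat.sub_zero, sum_range_succ]

lemma gb_one_succ (n : ℕ) : gb (n+1) 1 = X^4 * gb n 1 + 1 := by
  rw [gb_one, gb_one, Finset.mul_sum, sum_range_succ' _ n,
    show (4*0) = 0 from rfl, pow_zero]
  congr 1
  exact sum_congr rfl fun j _ => by ring

/-- The second Pascal rule. -/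
lemma gb_pascal' : ∀ n k : ℕ, gb (n+1) (k+1) = X^(4*(k+1)) * gb n (k+1) + gb n k
  | 0, k => by
      cases k with
      | zero => show gb 0 1 + X^(4*(0-0)) * gb 0 0 = _ ; simp [gb_zero_succ, gb_zero_zero]
      | succ k =>
          rw [gb_pascal 0 (k+1), gb_zero_succ,
            show (4*(0-(k+1))) = 0 from by omega, pow_zero] ; ring
  | n+1, k => by
      rcases lt_trichotomy k (n+1) with h | h | h
      · cases k with
        | zero =>
          rw [gb_col_zero]
          show gb (n+1+1) 1 = X^(4*(0+1)) * gb (n+1) 1 + 1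
          rw [gb_one_succ (n+1), gb_one_succ n]
        | succ j =>
          obtain ⟨e, rfl⟩ : ∃ e, n = j + e := ⟨n - j, by omega⟩
          calc gb (j+e+1+1) (j+1+1)
              = gb (j+e+1) (j+2) + X^(4*(j+e+1-(j+1))) * gb (j+e+1) (j+1) :=
                gb_pascal (j+e+1) (j+1)
            _ = (X^(4*(j+2)) * gb (j+e) (j+2) + gb (j+e) (j+1))
                + X^(4*(j+e+1-(j+1))) * ((X^(4*(j+1)) * gb (j+e) (j+1)) + gb (j+e) j) := by
                rw [gb_pascal' (j+e) (j+1), gb_pascal' (j+e) j]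
            _ = X^(4*(j+1+1)) * (gb (j+e) (j+2) + X^(4*(j+e-(j+1))) * gb (j+e) (j+1))
                + (gb (j+e) (j+1) + X^(4*(j+e-j)) * gb (j+e) j) := by
                rcases Nat.eq_zero_or_pos e with rfl | he
                · simp only [Nat.add_zero]
                  rw [gb_eq_zero j (j+2) (by omega), gb_eq_zero j (j+1) (by omega)]
                  rw [show j+1-(j+1) = 0 from by omega, show j-(j+1) = 0 from by omega,
                    show j-j = 0 from by omega]
                  ring
                · obtain ⟨f, rfl⟩ : ∃ f, e = f + 1 := ⟨e - 1, by omega⟩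
                  rw [show j+(f+1)+1-(j+1) = f+1 from by omega,
                    show j+(f+1)-(j+1) = f from by omega,
                    show j+(f+1)-j = f+1 from by omega]
                  ring
            _ = X^(4*(j+1+1)) * gb (j+e+1) (j+1+1) + gb (j+e+1) (j+1) := by
                rw [gb_pascal (j+e) (j+1), gb_pascal (j+e) j]
      · subst h
        rw [gb_eq_zero (n+1) (n+1+1) (by omega), gb_diag, gb_diag, mul_zero, zero_add]
      · rw [gb_eq_zero (n+1) k (by omega), gb_eq_zero (n+1) (k+1) (by omega),
          gb_eq_zero (n+1+1) (k+1) (by omega), mul_zero, add_zero]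


/-- three-term recurrence going up two rows. -/
lemma gb_R (n k : ℕ) : gb (n+2) (k+2) =
    X^(4*(k+2)) * gb n (k+2) + (1 + X^(4*(n+1))) * gb n (k+1) + X^(4*(n-k)) * gb n k := by
  rcases le_or_gt (k+1) n with h | h
  · calc gb (n+2) (k+2)
        = X^(4*(k+2)) * gb (n+1) (k+2) + gb (n+1) (k+1) := gb_pascal' (n+1) (k+1)
      _ = X^(4*(k+2)) * (gb n (k+2) + X^(4*(n-(k+1))) * gb n (k+1))
          + (gb n (k+1) + X^(4*(n-k)) * gb n k) := by
          rw [gb_pascal n (k+1), gb_pascal n k]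
      _ = _ := by
          obtain ⟨e, rfl⟩ : ∃ e, n = k+1+e := ⟨n-(k+1), by omega⟩
          rw [show k+1+e-(k+1) = e from by omega, show k+1+e-k = e+1 from by omega]
          ring
  · rw [gb_eq_zero n (k+2) (by omega), gb_eq_zero n (k+1) (by omega)]
    rcases eq_or_lt_of_le (Nat.lt_succ_iff.mp h) with h' | h'
    · subst h'
      rw [gb_diag, gb_diag, Nat.sub_self]
      ring
    · rw [gb_eq_zero n k h', gb_eq_zero (n+2) (k+2) (by omega)]
      ring

lemma gb_one_R (m : ℕ) : gb (2*m+2) 1 = X^4 * gb (2*m) 1 + (1 + X^(8*m+4)) := by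
  have h1 : (X:PS)^4 * ∑ j ∈ range (2*m), X^(4*j) = ∑ j ∈ range (2*m), X^(4*(j+1)) := by
    rw [Finset.mul_sum]; exact sum_congr rfl fun j _ => by ring
  rw [gb_one, gb_one, h1, sum_range_succ' _ (2*m+1), sum_range_succ _ (2*m)]
  rw [show 4*(2*m+1) = 8*m+4 from by omega, show (4*0) = 0 from rfl, pow_zero]
  ring

/-- exponent `2d² + d` for `d = i - m` (signed). -/
def ee (m i : ℕ) : ℕ := if m ≤ i then (i-m)*(2*(i-m)+1) else (m-i)*(2*(m-i)-1)

noncomputable def w (m i : ℕ) : PS := (-1:PS)^(i+m) * gb (2*m) i * X^(ee m i)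

noncomputable def T (m : ℕ) : PS := ∑ i ∈ range (2*m+1), w m i

noncomputable def Od (M : ℕ) : PS := ∏ n ∈ range M, (1 - (X:PS)^(2*n+1))

lemma sgn_parity {a b : ℕ} (h : a % 2 = b % 2) : ((-1:PS))^a = (-1)^b := by
  rcases Nat.even_or_odd a with ha | ha
  · have hb : Even b := Nat.even_iff.mpr (by rw [← h]; exact Nat.even_iff.mp ha)
    rw [ha.neg_one_pow, hb.neg_one_pow]
  · have hb : Odd b := Nat.odd_iff.mpr (by rw [← h]; exact Nat.odd_iff.mp ha)
    rw [ha.neg_one_pow, hb.neg_one_pow]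

/-- the per-index monomial identity. -/
lemma claimB (m j : ℕ) (hj : j ≤ 2*m) :
    (-1:PS)^(j+m+1) * X^(ee (m+1) j + 4*j)
      + (-1:PS)^(j+m) * X^(ee (m+1) (j+1)) * (1 + X^(8*m+4))
      + (-1:PS)^(j+m+1) * X^(ee (m+1) (j+2) + 4*(2*m-j)) =
    (-1:PS)^(j+m) * X^(ee m j) * ((1 - X^(4*m+1)) * (1 - X^(4*m+3))) := by
  have hs : ((-1:PS))^(j+m+1) = -((-1:PS))^(j+m) := by rw [pow_succ]; ring
  rw [hs]
  rcases le_or_gt (m+1) j with h | h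
  · -- upper branch : j = m+1+d
    obtain ⟨d, rfl⟩ : ∃ d, j = m+1+d := ⟨j-(m+1), by omega⟩
    rw [show ee (m+1) (m+1+d) = d*(2*d+1) from by simp [ee],
        show ee (m+1) (m+1+d+1) = (d+1)*(2*(d+1)+1) from by
          simp only [ee, if_pos (by omega : m+1 ≤ m+1+d+1)]; congr 1 <;> omega,
        show ee (m+1) (m+1+d+2) = (d+2)*(2*(d+2)+1) from by
          simp only [ee, if_pos (by omega : m+1 ≤ m+1+d+2)]; congr 1 <;> omega,
        show ee m (m+1+d) = (d+1)*(2*(d+1)+1) from by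
          simp only [ee, if_pos (by omega : m ≤ m+1+d)]; congr 1 <;> omega,
        show 2*m-(m+1+d) = m-1-d from by omega]
    obtain ⟨c, rfl⟩ : ∃ c, m = d+1+c := ⟨m-1-d, by omega⟩
    rw [show d+1+c-1-d = c from by omega]
    ring
  · rcases Nat.lt_or_ge j m with h' | h'
    · -- j ≤ m-1, m = j+c, c ≥ 1
      obtain ⟨c, rfl⟩ : ∃ c, m = j+c+1 := ⟨m-j-1, by omega⟩
      rw [show ee (j+c+1+1) j = (c+2)*(2*(c+2)-1) from by
            simp only [ee, if_neg (by omega : ¬ (j+c+1+1 ≤ j))]; congr 1 <;> omega,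
          show ee (j+c+1+1) (j+1) = (c+1)*(2*(c+1)-1) from by
            simp only [ee, if_neg (by omega : ¬ (j+c+1+1 ≤ j+1))]; congr 1 <;> omega,
          show ee (j+c+1) j = (c+1)*(2*(c+1)-1) from by
            simp only [ee, if_neg (by omega : ¬ (j+c+1 ≤ j))]; congr 1 <;> omega,
          show 2*(j+c+1)-j = j+2*c+2 from by omega]
      rcases Nat.eq_zero_or_pos c with rfl | hc
      · -- c = 0 : ee (j+2) (j+2) = 0
        rw [show ee (j+0+1+1) (j+2) = 0 from by simp [ee]]
        rw [show (0+2)*(2*(0+2)-1) = 6 from rfl, show (0+1)*(2*(0+1)-1) = 1 from rfl]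
        ring
      · obtain ⟨b, rfl⟩ : ∃ b, c = b+1 := ⟨c-1, by omega⟩
        rw [show ee (j+(b+1)+1+1) (j+2) = (b+1)*(2*(b+1)-1) from by
              simp only [ee, if_neg (by omega : ¬ (j+(b+1)+1+1 ≤ j+2))]; congr 1 <;> omega]
        rw [show (b+1+2)*(2*(b+1+2)-1) = (b+3)*(2*b+5) from by
              rw [show 2*(b+1+2)-1 = 2*b+5 from by omega],
            show (b+1+1)*(2*(b+1+1)-1) = (b+2)*(2*b+3) from by
              rw [show 2*(b+1+1)-1 = 2*b+3 from by omega],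
            show (b+1)*(2*(b+1)-1) = (b+1)*(2*b+1) from by
              rw [show 2*(b+1)-1 = 2*b+1 from by omega]]
        ring
    · -- j = m
      have hjm : j = m := by omega
      subst hjm
      rw [show ee (j+1) j = 1 from by simp only [ee, if_neg (by omega : ¬ (j+1 ≤ j))]; rw [show j+1-j = 1 from by omega],
          show ee (j+1) (j+1) = 0 from by simp [ee],
          show ee (j+1) (j+2) = 3 from by
            simp only [ee, if_pos (by omega : j+1 ≤ j+2)]
            rw [show j+2-(j+1) = 1 from by omega],
          show ee j j = 0 from by simp [ee],
          show 2*j-j = j from by omega]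
      ring

lemma claimA (m : ℕ) : T (m+1) = ∑ j ∈ range (2*m+1), gb (2*m) j *
    ((-1:PS)^(j+m+1) * X^(ee (m+1) j + 4*j)
      + (-1:PS)^(j+m) * X^(ee (m+1) (j+1)) * (1 + X^(8*m+4))
      + (-1:PS)^(j+m+1) * X^(ee (m+1) (j+2) + 4*(2*m-j))) := by
  set Hf : ℕ → PS := fun j => (-1:PS)^(j+m+1) * X^(ee (m+1) j + 4*j) * gb (2*m) j with hHf
  set Gf : ℕ → PS := fun j =>
    (-1:PS)^(j+m) * X^(ee (m+1) (j+1)) * (1 + X^(8*m+4)) * gb (2*m) j with hGf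
  set Cf : ℕ → PS := fun j =>
    (-1:PS)^(j+m+1) * X^(ee (m+1) (j+2) + 4*(2*m-j)) * gb (2*m) j with hCf
  have key : ∀ i, w (m+1) (i+2) = Hf (i+2) + Gf (i+1) + Cf i := by
    intro i
    show (-1:PS)^(i+2+(m+1)) * gb (2*(m+1)) (i+2) * X^(ee (m+1) (i+2)) = _
    rw [show 2*(m+1) = 2*m+2 from by omega, gb_R (2*m) i,
        show 4*(2*m+1) = 8*m+4 from by omega,
        sgn_parity (show (i+2+(m+1)) % 2 = (i+m+1) % 2 from by omega)]
    simp only [hHf, hGf, hCf]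
    rw [sgn_parity (show (i+2+m+1) % 2 = (i+m+1) % 2 from by omega),
        sgn_parity (show (i+1+m) % 2 = (i+m+1) % 2 from by omega)]
    rw [show 4*(i+2) = 4*(i+2) from rfl]
    ring
  have hT : T (m+1) = (∑ i ∈ range (2*m+1), w (m+1) (i+2)) + w (m+1) 1 + w (m+1) 0 := by
    show (∑ i ∈ range (2*(m+1)+1), w (m+1) i) = _
    rw [show 2*(m+1)+1 = (2*m+2)+1 from by omega, sum_range_succ' _ (2*m+2),
        sum_range_succ' _ (2*m+1)]
  have hHzero : ∀ j, 2*m < j → Hf j = 0 := fun j h => by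
    simp only [hHf]; rw [gb_eq_zero (2*m) j h]; ring
  have hGzero : ∀ j, 2*m < j → Gf j = 0 := fun j h => by
    simp only [hGf]; rw [gb_eq_zero (2*m) j h]; ring
  have hSB : (∑ i ∈ range (2*m+1), Gf (i+1)) + Gf 0 = ∑ j ∈ range (2*m+1), Gf j := by
    rw [← sum_range_succ' Gf (2*m+1), sum_range_succ, hGzero (2*m+1) (by omega), add_zero]
  have hSA : (∑ i ∈ range (2*m+1), Hf (i+2)) + Hf 1 + Hf 0 = ∑ j ∈ range (2*m+1), Hf j := by
    have e1 := sum_range_succ' Hf (2*m+2)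
    have e2 := sum_range_succ' (fun i => Hf (i+1)) (2*m+1)
    rw [e2] at e1
    -- e1 : ∑ range (2m+3) Hf = (∑ i ∈ range (2m+1), Hf (i+2) + Hf 1) + Hf 0
    rw [sum_range_succ Hf (2*m+2), sum_range_succ Hf (2*m+1),
        hHzero (2*m+1) (by omega), hHzero (2*m+2) (by omega), add_zero, add_zero] at e1
    norm_num [Nat.add_assoc] at e1
    exact e1.symm
  have hw0 : w (m+1) 0 = Hf 0 := by
    show (-1:PS)^(0+(m+1)) * gb (2*(m+1)) 0 * X^(ee (m+1) 0) = _
    simp only [hHf]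
    rw [gb_col_zero, gb_col_zero, show ee (m+1) 0 + 4*0 = ee (m+1) 0 from by omega,
        sgn_parity (show (0+(m+1)) % 2 = (0+m+1) % 2 from by omega)]
    ring
  have hw1 : w (m+1) 1 = Hf 1 + Gf 0 := by
    show (-1:PS)^(1+(m+1)) * gb (2*(m+1)) 1 * X^(ee (m+1) 1) = _
    rw [show 2*(m+1) = 2*m+2 from by omega, gb_one_R m]
    simp only [hHf, hGf]
    rw [gb_col_zero,
        sgn_parity (show (1+(m+1)) % 2 = (1+m+1) % 2 from by omega),
        sgn_parity (show (0+m) % 2 = (1+m+1) % 2 from by omega),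
        show ee (m+1) 1 + 4*1 = ee (m+1) 1 + 4 from by omega,
        show ee (m+1) (0+1) = ee (m+1) 1 from by norm_num]
    ring
  have final : T (m+1) = (∑ j ∈ range (2*m+1), Hf j) + (∑ j ∈ range (2*m+1), Gf j)
      + (∑ j ∈ range (2*m+1), Cf j) := by
    rw [hT, hw0, hw1]
    rw [Finset.sum_congr rfl (fun i _ => key i), Finset.sum_add_distrib,
      Finset.sum_add_distrib]
    rw [← hSA, ← hSB]
    ring
  rw [final, ← Finset.sum_add_distrib, ← Finset.sum_add_distrib]
  exact sum_congr rfl fun j _ => by simp only [hHf, hGf, hCf]; ring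

lemma gstar : ∀ m, Od (2*m) = T m
  | 0 => by
    show (∏ n ∈ range (2*0), (1 - (X:PS)^(2*n+1))) = ∑ i ∈ range (2*0+1), w 0 i
    rw [show 2*0 = 0 from rfl, prod_range_zero, sum_range_one]
    show (1:PS) = (-1:PS)^(0+0) * gb 0 0 * X^(ee 0 0)
    rw [gb_diag 0, show ee 0 0 = 0 from by simp [ee]]
    ring
  | m+1 => by
    have h1 : Od (2*(m+1)) = Od (2*m) * ((1 - X^(4*m+1)) * (1 - X^(4*m+3))) := by
      show (∏ n ∈ range (2*(m+1)), (1 - (X:PS)^(2*n+1))) = _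
      rw [show 2*(m+1) = (2*m+1)+1 from by omega, prod_range_succ, prod_range_succ,
          show 2*(2*m)+1 = 4*m+1 from by omega, show 2*(2*m+1)+1 = 4*m+3 from by omega]
      show _ = (∏ n ∈ range (2*m), (1 - (X:PS)^(2*n+1))) * _
      ring
    rw [h1, gstar m, claimA m]
    show (∑ i ∈ range (2*m+1), w m i) * _ = _
    rw [Finset.sum_mul]
    refine sum_congr rfl fun j hj => ?_
    have hj' : j ≤ 2*m := by have := mem_range.mp hj; omega
    show ((-1:PS)^(j+m) * gb (2*m) j * X^(ee m j)) * _ = _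
    rw [claimB m j hj']
    ring

noncomputable def D (a : ℕ) : PS := ∏ s ∈ range a, (1 - X^(4*s+4))

lemma D_zero : D 0 = 1 := prod_range_zero _
lemma D_succ (a : ℕ) : D (a+1) = D a * (1 - X^(4*a+4)) := prod_range_succ _ _
lemma D_add (a b : ℕ) : D (a+b) = D a * ∏ s ∈ range b, (1 - X^(4*(a+s)+4)) :=
  prod_range_add _ a b

lemma gb_mul_D (n : ℕ) : ∀ k, k ≤ n → gb n k * (D k * D (n-k)) = D n := by
  induction n with
  | zero =>
    intro k hk
    obtain rfl : k = 0 := by omega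
    simp [gb_zero_zero, D_zero]
  | succ n ih =>
    intro k hk
    cases k with
    | zero => rw [gb_col_zero, D_zero, one_mul, one_mul, Nat.sub_zero]
    | succ k =>
      rcases eq_or_lt_of_le hk with h' | h'
      · obtain rfl : k = n := by omega
        rw [gb_diag, Nat.sub_self, D_zero, one_mul, mul_one]
      · have hk2 : k + 1 ≤ n := by omega
        obtain ⟨e, rfl⟩ : ∃ e, n = k+1+e := ⟨n-(k+1), by omega⟩
        rw [gb_pascal, show k+1+e+1-(k+1) = e+1 from by omega,
          show k+1+e-k = e+1 from by omega, D_succ e, D_succ (k+1+e)]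
        have ih1 : gb (k+1+e) (k+1) * (D (k+1) * D e) = D (k+1+e) := by
          have := ih (k+1) (by omega)
          rwa [show k+1+e-(k+1) = e from by omega] at this
        have ih2 : gb (k+1+e) k * (D k * D (e+1)) = D (k+1+e) := by
          have := ih k (by omega)
          rwa [show k+1+e-k = e+1 from by omega] at this
        have hDk : D (k+1) = D k * (1 - X^(4*k+4)) := D_succ k
        have hDe : D (e+1) = D e * (1 - X^(4*e+4)) := D_succ e
        have ih2' : gb (k+1+e) k * (D (k+1) * (D e * (1 - X^(4*e+4))))
            = D (k+1+e) * (1 - X^(4*k+4)) := by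
          rw [hDk, ← hDe]
          linear_combination (1 - (X:PS)^(4*k+4)) * ih2
        linear_combination (1 - (X:PS)^(4*e+4)) * ih1 + X^(4*(e+1)) * ih2'

lemma cc_one_sub (c : ℕ) (hc : 0 < c) : constantCoeff (R := ℚ) (1 - X^c) = 1 := by
  rw [map_sub, map_one, map_pow, constantCoeff_X, zero_pow (by omega), sub_zero]

lemma cc_one_add (c : ℕ) (hc : 0 < c) : constantCoeff (R := ℚ) (1 + X^c) = 1 := by
  rw [map_add, map_one, map_pow, constantCoeff_X, zero_pow (by omega), add_zero]

lemma dvd_cancel_unit {N : ℕ} {z u : PS} (hu : constantCoeff (R := ℚ) u ≠ 0)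
    (h : (X:PS)^N ∣ z * u) : (X:PS)^N ∣ z := by
  have hz : z = z * u * u⁻¹ := by
    rw [mul_assoc, PowerSeries.mul_inv_cancel u hu, mul_one]
  rw [hz]
  exact h.mul_right _

lemma prod_one_mod {N : ℕ} {M : ℕ} {f : ℕ → PS}
    (h : ∀ i ∈ range M, (X:PS)^N ∣ f i - 1) :
    (X:PS)^N ∣ (∏ i ∈ range M, f i) - 1 := by
  induction M with
  | zero => simp
  | succ M ih =>
    rw [prod_range_succ]
    have h1 := h M (mem_range.mpr (by omega))
    have h2 := ih fun i hi => h i (mem_range.mpr (by have := mem_range.mp hi; omega))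
    have : (∏ i ∈ range M, f i) * f M - 1
        = ((∏ i ∈ range M, f i) - 1) * f M + (f M - 1) := by ring
    rw [this]
    exact dvd_add (h2.mul_right _) h1

lemma binomD (r i : ℕ) (hi : i ≤ 2*r) :
    (X:PS)^(4*(min i (2*r-i))+4) ∣ gb (2*r) i * D r - 1 := by
  set K := 4*(min i (2*r-i))+4 with hK
  have hDcc : ∀ a, constantCoeff (R := ℚ) (D a) = 1 := by
    intro a
    rw [D, map_prod]
    exact prod_eq_one fun s _ => cc_one_sub _ (by omega)
  have key : (X:PS)^K ∣ D (2*r) * D r - D i * D (2*r-i) := by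
    rcases le_or_gt i r with h | h
    · have e1 : D (2*r) = D (2*r-i) * ∏ s ∈ range i, (1 - X^(4*(2*r-i+s)+4)) := by
        rw [← D_add, show 2*r-i+i = 2*r from by omega]
      have e2 : D r = D i * ∏ s ∈ range (r-i), (1 - X^(4*(i+s)+4)) := by
        rw [← D_add, show i+(r-i) = r from by omega]
      rw [e1, e2]
      have hq : (X:PS)^K ∣ (∏ s ∈ range i, (1 - X^(4*(2*r-i+s)+4)))
          * (∏ s ∈ range (r-i), (1 - X^(4*(i+s)+4))) - 1 := by
        have := prod_one_mod (N := K) (M := i)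
          (f := fun s => 1 - X^(4*(2*r-i+s)+4)) (fun s _ => by
            rw [show (1:PS) - X^(4*(2*r-i+s)+4) - 1 = -(X^(4*(2*r-i+s)+4)) from by ring]
            exact ((pow_dvd_pow X (by omega)).trans dvd_rfl).neg_right)
        have h2 := prod_one_mod (N := K) (M := r-i)
          (f := fun s => 1 - X^(4*(i+s)+4)) (fun s _ => by
            rw [show (1:PS) - X^(4*(i+s)+4) - 1 = -(X^(4*(i+s)+4)) from by ring]
            exact ((pow_dvd_pow X (by omega)).trans dvd_rfl).neg_right)
        have hmul : (∏ s ∈ range i, ((1:PS) - X^(4*(2*r-i+s)+4)))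
            * (∏ s ∈ range (r-i), ((1:PS) - X^(4*(i+s)+4))) - 1
            = ((∏ s ∈ range i, ((1:PS) - X^(4*(2*r-i+s)+4))) - 1)
              * (∏ s ∈ range (r-i), ((1:PS) - X^(4*(i+s)+4)))
              + ((∏ s ∈ range (r-i), ((1:PS) - X^(4*(i+s)+4))) - 1) := by ring
        rw [hmul]
        exact dvd_add (this.mul_right _) h2
      calc (X:PS)^K ∣ (D i * D (2*r-i)) *
            ((∏ s ∈ range i, (1 - X^(4*(2*r-i+s)+4)))
              * (∏ s ∈ range (r-i), (1 - X^(4*(i+s)+4))) - 1) := hq.mul_left _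
        _ = D (2*r-i) * (∏ s ∈ range i, (1 - X^(4*(2*r-i+s)+4)))
            * (D i * ∏ s ∈ range (r-i), (1 - X^(4*(i+s)+4))) - D i * D (2*r-i) := by ring
    · have e1 : D (2*r) = D i * ∏ s ∈ range (2*r-i), (1 - X^(4*(i+s)+4)) := by
        rw [← D_add, show i+(2*r-i) = 2*r from by omega]
      have e2 : D r = D (2*r-i) * ∏ s ∈ range (i-r), (1 - X^(4*(2*r-i+s)+4)) := by
        rw [← D_add, show 2*r-i+(i-r) = r from by omega]
      rw [e1, e2]
      have hq : (X:PS)^K ∣ (∏ s ∈ range (2*r-i), (1 - X^(4*(i+s)+4)))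
          * (∏ s ∈ range (i-r), (1 - X^(4*(2*r-i+s)+4))) - 1 := by
        have h1 := prod_one_mod (N := K) (M := 2*r-i)
          (f := fun s => 1 - X^(4*(i+s)+4)) (fun s _ => by
            rw [show (1:PS) - X^(4*(i+s)+4) - 1 = -(X^(4*(i+s)+4)) from by ring]
            exact (pow_dvd_pow X (by omega)).neg_right)
        have h2 := prod_one_mod (N := K) (M := i-r)
          (f := fun s => 1 - X^(4*(2*r-i+s)+4)) (fun s _ => by
            rw [show (1:PS) - X^(4*(2*r-i+s)+4) - 1 = -(X^(4*(2*r-i+s)+4)) from by ring]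
            exact (pow_dvd_pow X (by omega)).neg_right)
        have hmul : (∏ s ∈ range (2*r-i), ((1:PS) - X^(4*(i+s)+4)))
            * (∏ s ∈ range (i-r), ((1:PS) - X^(4*(2*r-i+s)+4))) - 1
            = ((∏ s ∈ range (2*r-i), ((1:PS) - X^(4*(i+s)+4))) - 1)
              * (∏ s ∈ range (i-r), ((1:PS) - X^(4*(2*r-i+s)+4)))
              + ((∏ s ∈ range (i-r), ((1:PS) - X^(4*(2*r-i+s)+4))) - 1) := by ring
        rw [hmul]
        exact dvd_add (h1.mul_right _) h2
      calc (X:PS)^K ∣ (D i * D (2*r-i)) *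
            ((∏ s ∈ range (2*r-i), (1 - X^(4*(i+s)+4)))
              * (∏ s ∈ range (i-r), (1 - X^(4*(2*r-i+s)+4))) - 1) := hq.mul_left _
        _ = D i * (∏ s ∈ range (2*r-i), (1 - X^(4*(i+s)+4)))
            * (D (2*r-i) * ∏ s ∈ range (i-r), (1 - X^(4*(2*r-i+s)+4))) - D i * D (2*r-i) := by
            ring
  -- now cancel the unit D i * D (2*r-i)
  have hG : gb (2*r) i * (D i * D (2*r-i)) = D (2*r) := gb_mul_D (2*r) i hi
  apply dvd_cancel_unit (u := D i * D (2*r-i))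
    (by rw [map_mul, hDcc, hDcc, one_mul]; exact one_ne_zero)
  calc (X:PS)^K ∣ D (2*r) * D r - D i * D (2*r-i) := key
    _ = (gb (2*r) i * D r - 1) * (D i * D (2*r-i)) := by linear_combination (D r) * hG.symm

noncomputable def Aa (M : ℕ) : PS := ∏ n ∈ range M, (1 + X^(2*n+1))
noncomputable def Bb (M : ℕ) : PS := ∏ n ∈ range M, (1 - X^(2*n+2))
noncomputable def Ee (M : ℕ) : PS := ∏ n ∈ range M, (1 - X^(4*n+2))
noncomputable def Pp (M : ℕ) : PS := ∏ n ∈ range M, ((1 - X^(2*n+2)) * (1 + X^(2*n+1))⁻¹)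

lemma cc_Od (M : ℕ) : constantCoeff (R := ℚ) (Od M) = 1 := by
  rw [Od, map_prod]; exact prod_eq_one fun n _ => cc_one_sub _ (by omega)

lemma cc_Aa (M : ℕ) : constantCoeff (R := ℚ) (Aa M) = 1 := by
  rw [Aa, map_prod]; exact prod_eq_one fun n _ => cc_one_add _ (by omega)

lemma Pp_mul_Aa (M : ℕ) : Pp M * Aa M = Bb M := by
  induction M with
  | zero => simp [Pp, Aa, Bb]
  | succ M ih =>
    have ha : (1 + (X:PS)^(2*M+1)) * (1 + X^(2*M+1))⁻¹ = 1 :=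
      PowerSeries.mul_inv_cancel _ (by rw [cc_one_add _ (by omega)]; exact one_ne_zero)
    simp only [Pp, Aa, Bb] at ih ⊢
    rw [prod_range_succ, prod_range_succ, prod_range_succ]
    linear_combination ((1 - (X:PS)^(2*M+2)) * (1+X^(2*M+1))⁻¹ * (1+X^(2*M+1))) * ih
      + ((∏ n ∈ range M, ((1:PS) - X^(2*n+2))) * (1-X^(2*M+2))) * ha

lemma ext_Pp (N t : ℕ) : (X:PS)^N ∣ Pp (N+t) - Pp N := by
  have hQ : (X:PS)^N ∣ (∏ s ∈ range t,
      ((1 - X^(2*(N+s)+2)) * (1 + X^(2*(N+s)+1))⁻¹)) - 1 := by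
    apply prod_one_mod
    intro s _
    have ha : (1 + (X:PS)^(2*(N+s)+1)) * (1 + X^(2*(N+s)+1))⁻¹ = 1 :=
      PowerSeries.mul_inv_cancel _ (by rw [cc_one_add _ (by omega)]; exact one_ne_zero)
    have hg : (1 - (X:PS)^(2*(N+s)+2)) * (1 + X^(2*(N+s)+1))⁻¹ - 1
        = -((X^(2*(N+s)+1) + X^(2*(N+s)+2)) * (1 + X^(2*(N+s)+1))⁻¹) := by
      linear_combination ha
    rw [hg]
    exact ((dvd_add (pow_dvd_pow X (by omega)) (pow_dvd_pow X (by omega))).mul_right _).neg_right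
  have : Pp (N+t) - Pp N = Pp N * ((∏ s ∈ range t,
      ((1 - X^(2*(N+s)+2)) * (1 + X^(2*(N+s)+1))⁻¹)) - 1) := by
    rw [Pp, prod_range_add]
    simp only [Pp]
    ring
  rw [this]
  exact hQ.mul_left _

lemma Aa_mul_Od (M : ℕ) : Aa M * Od M = Ee M := by
  rw [Aa, Od, Ee, ← prod_mul_distrib]
  exact prod_congr rfl fun n _ => by ring

lemma Bb_split (r : ℕ) : Bb (2*r) = D r * Ee r := by
  induction r with
  | zero => simp [Bb, D, Ee]
  | succ r ih =>
    simp only [Bb, D, Ee] at ih ⊢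
    rw [show 2*(r+1) = (2*r+1)+1 from by omega, prod_range_succ, prod_range_succ,
      prod_range_succ, prod_range_succ, ih]
    ring

lemma Ee_split (r : ℕ) : Ee (2*r) = Ee r * ∏ s ∈ range r, ((1:PS) - X^(4*(r+s)+2)) := by
  rw [Ee, show 2*r = r+r from by omega, prod_range_add]
  rfl

lemma termwise (N τ : ℕ) (hτ : τ < N) :
    (X:PS)^N ∣ (D N * w N (N+τ) + D N * w N (N-1-τ)
      - (-1:PS)^τ * X^(τ*(2*τ+1)) * (1 - X^(2*τ+1))) := by
  have h1 := binomD N (N+τ) (by omega)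
  have h2 := binomD N (N-1-τ) (by omega)
  rw [show min (N+τ) (2*N-(N+τ)) = N-τ from by omega] at h1
  rw [show min (N-1-τ) (2*N-(N-1-τ)) = N-1-τ from by omega] at h2
  have e1 : ee N (N+τ) = τ*(2*τ+1) := by
    simp only [ee, if_pos (by omega : N ≤ N+τ)]
    rw [show N+τ-N = τ from by omega]
  have e2 : ee N (N-1-τ) = (τ+1)*(2*τ+1) := by
    simp only [ee, if_neg (by omega : ¬ (N ≤ N-1-τ))]
    rw [show N-(N-1-τ) = τ+1 from by omega, show 2*(τ+1)-1 = 2*τ+1 from by omega]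
  have hw : D N * w N (N+τ) + D N * w N (N-1-τ) - (-1:PS)^τ * X^(τ*(2*τ+1)) * (1 - X^(2*τ+1))
      = (-1:PS)^τ * X^(τ*(2*τ+1)) * (gb (2*N) (N+τ) * D N - 1)
        - (-1:PS)^τ * X^((τ+1)*(2*τ+1)) * (gb (2*N) (N-1-τ) * D N - 1) := by
    show D N * ((-1:PS)^(N+τ+N) * gb (2*N) (N+τ) * X^(ee N (N+τ)))
        + D N * ((-1:PS)^((N-1-τ)+N) * gb (2*N) (N-1-τ) * X^(ee N (N-1-τ))) - _ = _
    rw [e1, e2, sgn_parity (show (N+τ+N) % 2 = τ % 2 from by omega),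
        sgn_parity (show ((N-1-τ)+N) % 2 = (τ+1) % 2 from by omega), pow_succ]
    ring
  rw [hw]
  apply dvd_sub
  · have hle : N ≤ (4*(N-τ)+4) + τ*(2*τ+1) := by
      have l1 : N ≤ (4*(N-τ)+4) + τ := by omega
      have l2 : τ ≤ τ*(2*τ+1) := by
        calc τ = τ*1 := (mul_one τ).symm
          _ ≤ τ*(2*τ+1) := Nat.mul_le_mul_left τ (by omega)
      omega
    have hd : (X:PS)^N ∣ (gb (2*N) (N+τ) * D N - 1) * X^(τ*(2*τ+1)) :=
      (pow_dvd_pow X hle).trans (by rw [pow_add]; exact mul_dvd_mul h1 dvd_rfl)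
    have : (-1:PS)^τ * X^(τ*(2*τ+1)) * (gb (2*N) (N+τ) * D N - 1)
        = ((gb (2*N) (N+τ) * D N - 1) * X^(τ*(2*τ+1))) * (-1)^τ := by ring
    rw [this]
    exact hd.mul_right _
  · have hle : N ≤ (4*(N-1-τ)+4) + (τ+1)*(2*τ+1) := by
      have l1 : N ≤ (4*(N-1-τ)+4) + (τ+1) := by omega
      have l2 : τ+1 ≤ (τ+1)*(2*τ+1) := by
        calc τ+1 = (τ+1)*1 := (mul_one _).symm
          _ ≤ (τ+1)*(2*τ+1) := Nat.mul_le_mul_left _ (by omega)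
      omega
    have hd : (X:PS)^N ∣ (gb (2*N) (N-1-τ) * D N - 1) * X^((τ+1)*(2*τ+1)) :=
      (pow_dvd_pow X hle).trans (by rw [pow_add]; exact mul_dvd_mul h2 dvd_rfl)
    have : (-1:PS)^τ * X^((τ+1)*(2*τ+1)) * (gb (2*N) (N-1-τ) * D N - 1)
        = ((gb (2*N) (N-1-τ) * D N - 1) * X^((τ+1)*(2*τ+1))) * (-1)^τ := by ring
    rw [this]
    exact hd.mul_right _

lemma main_sum (N : ℕ) (hN : 0 < N) :
    (X:PS)^N ∣ (∑ τ ∈ range N, (-1:PS)^τ * X^(τ*(2*τ+1)) * (1 - X^(2*τ+1)))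
      - D N * Od (2*N) := by
  rw [gstar N]
  have hmul : D N * T N = ∑ i ∈ range (2*N+1), D N * w N i := by
    rw [T, Finset.mul_sum]
  rw [hmul]
  have hdec : ∑ i ∈ range (2*N+1), D N * w N i
      = (∑ τ ∈ range N, (D N * w N (N+τ) + D N * w N (N-1-τ))) + D N * w N (2*N) := by
    rw [sum_range_succ _ (2*N), show 2*N = N+N from by omega,
      Finset.sum_range_add (fun i => D N * w N i) N N,
      ← sum_range_reflect (fun i => D N * w N i) N, ← Finset.sum_add_distrib]
    rw [show N+N = 2*N from by omega]
    congr 1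
    exact sum_congr rfl fun τ hτ => by rw [add_comm]
  rw [hdec]
  have hlast : (X:PS)^N ∣ D N * w N (2*N) := by
    have he : ee N (2*N) = N*(2*N+1) := by
      simp only [ee, if_pos (by omega : N ≤ 2*N)]
      rw [show 2*N-N = N from by omega]
    have hle : N ≤ N*(2*N+1) := by
      calc N = N*1 := (mul_one N).symm
        _ ≤ N*(2*N+1) := Nat.mul_le_mul_left N (by omega)
    show (X:PS)^N ∣ D N * ((-1:PS)^(2*N+N) * gb (2*N) (2*N) * X^(ee N (2*N)))
    rw [he]
    exact ((pow_dvd_pow X hle).mul_left _).mul_left _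
  have hsum : (X:PS)^N ∣ (∑ τ ∈ range N, (D N * w N (N+τ) + D N * w N (N-1-τ)))
      - ∑ τ ∈ range N, (-1:PS)^τ * X^(τ*(2*τ+1)) * (1 - X^(2*τ+1)) := by
    rw [← Finset.sum_sub_distrib]
    exact Finset.dvd_sum fun τ hτ => termwise N τ (mem_range.mp hτ)
  have : (∑ τ ∈ range N, (-1:PS)^τ * X^(τ*(2*τ+1)) * (1 - X^(2*τ+1)))
      - ((∑ τ ∈ range N, (D N * w N (N+τ) + D N * w N (N-1-τ))) + D N * w N (2*N))
      = -(((∑ τ ∈ range N, (D N * w N (N+τ) + D N * w N (N-1-τ)))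
        - ∑ τ ∈ range N, (-1:PS)^τ * X^(τ*(2*τ+1)) * (1 - X^(2*τ+1))) + D N * w N (2*N)) := by
    ring
  rw [this]
  exact (dvd_add hsum hlast).neg_right

lemma main_cong (N : ℕ) (hN : 0 < N) :
    (X:PS)^N ∣ (∑ τ ∈ range N, (-1:PS)^τ * X^(τ*(2*τ+1)) * (1 - X^(2*τ+1))) - Pp N := by
  set S := ∑ τ ∈ range N, (-1:PS)^τ * X^(τ*(2*τ+1)) * (1 - X^(2*τ+1)) with hS
  have h5 := main_sum N hN
  have h6 : (X:PS)^N ∣ (∏ s ∈ range N, ((1:PS) - X^(4*(N+s)+2))) - 1 := by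
    apply prod_one_mod
    intro s _
    rw [show (1:PS) - X^(4*(N+s)+2) - 1 = -(X^(4*(N+s)+2)) from by ring]
    exact (pow_dvd_pow X (by omega)).neg_right
  have h7 : (X:PS)^N ∣ S * Ee (2*N) - Bb (2*N) * Od (2*N) := by
    rw [Ee_split N, Bb_split N]
    have : S * (Ee N * ∏ s ∈ range N, ((1:PS) - X^(4*(N+s)+2))) - (D N * Ee N) * Od (2*N)
        = Ee N * (S * ((∏ s ∈ range N, ((1:PS) - X^(4*(N+s)+2))) - 1)
          + (S - D N * Od (2*N))) := by ring
    rw [this]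
    exact (dvd_add (h6.mul_left S) h5).mul_left _
  have h8 : (X:PS)^N ∣ (S * Aa (2*N) - Bb (2*N)) * Od (2*N) := by
    have : (S * Aa (2*N) - Bb (2*N)) * Od (2*N)
        = S * (Aa (2*N) * Od (2*N)) - Bb (2*N) * Od (2*N) := by ring
    rw [this, Aa_mul_Od]
    exact h7
  have h9 : (X:PS)^N ∣ S * Aa (2*N) - Bb (2*N) :=
    dvd_cancel_unit (by rw [cc_Od]; exact one_ne_zero) h8
  have h10 : (X:PS)^N ∣ (S - Pp (2*N)) * Aa (2*N) := by
    rw [sub_mul, Pp_mul_Aa]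
    exact h9
  have h11 : (X:PS)^N ∣ S - Pp (2*N) :=
    dvd_cancel_unit (by rw [cc_Aa]; exact one_ne_zero) h10
  have h12 : (X:PS)^N ∣ Pp (2*N) - Pp N := by
    have := ext_Pp N N
    rwa [show N+N = 2*N from by omega] at this
  have : S - Pp N = (S - Pp (2*N)) + (Pp (2*N) - Pp N) := by ring
  rw [this]
  exact dvd_add h11 h12

/-- Gauss's identity:
`Σ_{τ≥0} (-1)^τ q^(τ(2τ+1)) (1 - q^(2τ+1)) = ∏_{n≥1} (1-q^(2n))/(1+q^(2n-1))`. -/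
theorem stmt2 :
    isum (fun τ => (-1 : PowerSeries ℚ) ^ τ * X ^ (τ * (2 * τ + 1)) * (1 - X ^ (2 * τ + 1))) =
      iprod (fun n =>
        (1 - (X : PowerSeries ℚ) ^ (2 * (n + 1))) * (1 + X ^ (2 * (n + 1) - 1))⁻¹) := by
  apply PowerSeries.ext
  intro k
  simp only [isum, iprod, coeff_mk]
  have hP : (∏ i ∈ range (k+1), ((1 - (X:PS)^(2*(i+1))) * (1 + X^(2*(i+1)-1))⁻¹)) = Pp (k+1) :=
    prod_congr rfl fun n _ => by
      rw [show 2*(n+1) = 2*n+2 from by omega, show 2*n+2-1 = 2*n+1 from by omega]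
  rw [hP]
  have h := main_cong (k+1) (by omega)
  have h0 := (PowerSeries.X_pow_dvd_iff.mp h) k (by omega)
  rw [map_sub] at h0
  exact sub_eq_zero.mp h0
end

section
/- The number of partitions of n with all parts not congruent to 2 modulo 4 equals the number of partitions of n whose odd parts are distinct, for every n ≥ 0. -/
open Multiset

namespace Stmt5Aux

/-- Transform the block of copies of `a` in `s`: if `a` is odd with multiplicity `m`,
produce `m % 2` copies of `a` and `m / 2` copies of `2 * a`. -/
def fAux (s : Multiset ℕ) (a : ℕ) : Multiset ℕ :=
  if a % 2 = 1 then
    Multiset.replicate (s.count a % 2) a + Multiset.replicate (s.count a / 2) (2 * a)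
  else 0

/-- Forward map: from partitions with no part `≡ 2 [MOD 4]` to partitions with distinct
odd parts. -/
def fMap (s : Multiset ℕ) : Multiset ℕ :=
  s.filter (fun x => x % 4 = 0) + ∑ a ∈ s.toFinset, fAux s a

/-- Inverse map: split every part `≡ 2 [MOD 4]` into two halves. -/
def gMap (t : Multiset ℕ) : Multiset ℕ :=
  t.filter (fun x => ¬ x % 4 = 2) + (t.filter (fun x => x % 4 = 2)).map (· / 2)
    + (t.filter (fun x => x % 4 = 2)).map (· / 2)

lemma count_fAux_odd (s : Multiset ℕ) (a b : ℕ) (hb : b % 2 = 1) :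
    (fAux s a).count b = if a = b then s.count b % 2 else 0 := by
  by_cases hab : a = b
  · subst hab
    rw [fAux, if_pos hb, if_pos rfl, count_add, count_replicate, count_replicate,
      if_pos rfl, if_neg (by omega)]
    omega
  · by_cases ha : a % 2 = 1
    · rw [fAux, if_pos ha, if_neg hab, count_add, count_replicate, count_replicate,
        if_neg hab, if_neg (by omega)]
    · simp [fAux, ha, hab]

lemma count_fAux_two (s : Multiset ℕ) (a b : ℕ) (hb : b % 4 = 2) :
    (fAux s a).count b = if a = b / 2 then s.count (b / 2) / 2 else 0 := by
  by_cases hab : a = b / 2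
  · subst hab
    rw [fAux, if_pos (by omega : b / 2 % 2 = 1), if_pos rfl, count_add, count_replicate,
      count_replicate, if_neg (by omega), if_pos (by omega)]
    omega
  · by_cases ha : a % 2 = 1
    · rw [fAux, if_pos ha, if_neg hab, count_add, count_replicate, count_replicate,
        if_neg (by omega), if_neg (by omega)]
    · simp [fAux, ha, hab]

lemma count_fAux_four (s : Multiset ℕ) (a b : ℕ) (hb : b % 4 = 0) :
    (fAux s a).count b = 0 := by
  by_cases ha : a % 2 = 1
  · rw [fAux, if_pos ha, count_add, count_replicate, count_replicate,
      if_neg (by omega), if_neg (by omega)]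
  · simp [fAux, ha]

lemma count_fMap_odd (s : Multiset ℕ) (b : ℕ) (hb : b % 2 = 1) :
    (fMap s).count b = s.count b % 2 := by
  rw [fMap, count_add, count_filter, if_neg (by omega), count_sum',
    Finset.sum_congr rfl (fun a _ => count_fAux_odd s a b hb),
    Finset.sum_ite_eq' s.toFinset b (fun _ => s.count b % 2)]
  by_cases hmem : b ∈ s.toFinset
  · simp [hmem]
  · have : s.count b = 0 := count_eq_zero.2 (by simpa using hmem)
    simp [hmem, this]

lemma count_fMap_two (s : Multiset ℕ) (b : ℕ) (hb : b % 4 = 2) :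
    (fMap s).count b = s.count (b / 2) / 2 := by
  rw [fMap, count_add, count_filter, if_neg (by omega), count_sum',
    Finset.sum_congr rfl (fun a _ => count_fAux_two s a b hb),
    Finset.sum_ite_eq' s.toFinset (b / 2) (fun _ => s.count (b / 2) / 2)]
  by_cases hmem : b / 2 ∈ s.toFinset
  · simp [hmem]
  · have : s.count (b / 2) = 0 := count_eq_zero.2 (by simpa using hmem)
    simp [hmem, this]

lemma count_fMap_four (s : Multiset ℕ) (b : ℕ) (hb : b % 4 = 0) :
    (fMap s).count b = s.count b := by
  rw [fMap, count_add, count_filter, if_pos hb, count_sum',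
    Finset.sum_congr rfl (fun a _ => count_fAux_four s a b hb)]
  simp

lemma count_piece_odd (t : Multiset ℕ) (b : ℕ) (hb : b % 2 = 1) :
    ((t.filter (fun x => x % 4 = 2)).map (· / 2)).count b = t.count (2 * b) := by
  rw [Multiset.count_map, Multiset.filter_filter,
    Multiset.filter_congr (q := fun a => 2 * b = a) (fun x _ => by constructor <;> omega),
    ← Multiset.count_eq_card_filter_eq]

lemma count_piece_even (t : Multiset ℕ) (b : ℕ) (hb : b % 2 = 0) :
    ((t.filter (fun x => x % 4 = 2)).map (· / 2)).count b = 0 := by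
  rw [Multiset.count_map, Multiset.card_eq_zero, Multiset.filter_eq_nil]
  intro a ha
  rw [Multiset.mem_filter] at ha
  rintro ⟨h1, h2⟩
  omega

lemma count_gMap_odd (t : Multiset ℕ) (b : ℕ) (hb : b % 2 = 1) :
    (gMap t).count b = t.count b + 2 * t.count (2 * b) := by
  rw [gMap, count_add, count_add, count_filter, if_pos (by omega : ¬ b % 4 = 2),
    count_piece_odd t b hb]
  ring

lemma count_gMap_two (t : Multiset ℕ) (b : ℕ) (hb : b % 4 = 2) :
    (gMap t).count b = 0 := by
  rw [gMap, count_add, count_add, count_filter, if_neg (by omega),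
    count_piece_even t b (by omega)]

lemma count_gMap_four (t : Multiset ℕ) (b : ℕ) (hb : b % 4 = 0) :
    (gMap t).count b = t.count b := by
  rw [gMap, count_add, count_add, count_filter, if_pos (by omega : ¬ b % 4 = 2),
    count_piece_even t b (by omega)]
  omega

lemma sum_finset_sum (s : Multiset ℕ) (A : Finset ℕ) (f : ℕ → Multiset ℕ) :
    (∑ a ∈ A, f a).sum = ∑ a ∈ A, (f a).sum := by
  classical
  induction A using Finset.induction with
  | empty => simp
  | insert _ _ h ih => rw [Finset.sum_insert h, Finset.sum_insert h, Multiset.sum_add, ih]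

lemma sum_fAux (s : Multiset ℕ) (a : ℕ) :
    (fAux s a).sum = if a % 2 = 1 then s.count a * a else 0 := by
  by_cases ha : a % 2 = 1
  · rw [fAux, if_pos ha, if_pos ha, Multiset.sum_add, Multiset.sum_replicate,
      Multiset.sum_replicate, smul_eq_mul, smul_eq_mul,
      show s.count a / 2 * (2 * a) = 2 * (s.count a / 2) * a by ring, ← Nat.add_mul]
    congr 1
    omega
  · simp [fAux, ha]

lemma sum_count_mul (u : Multiset ℕ) : u.sum = ∑ a ∈ u.toFinset, u.count a * a := by
  conv_lhs => rw [← Multiset.toFinset_sum_count_nsmul_eq u]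
  rw [sum_finset_sum u]
  refine Finset.sum_congr rfl (fun a _ => ?_)
  rw [show u.count a • ({a} : Multiset ℕ) = Multiset.replicate (u.count a) a from
      Multiset.nsmul_singleton a (u.count a), Multiset.sum_replicate, smul_eq_mul]

lemma sum_fMap (s : Multiset ℕ) (hs : ∀ i ∈ s, i % 4 ≠ 2) : (fMap s).sum = s.sum := by
  rw [fMap, Multiset.sum_add, sum_finset_sum s,
    Finset.sum_congr rfl (fun a _ => sum_fAux s a)]
  have hsplit : s.sum = (s.filter (fun x => x % 4 = 0)).sum
      + (s.filter (fun x => ¬ x % 4 = 0)).sum := by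
    rw [← Multiset.sum_add, Multiset.filter_add_not]
  rw [hsplit]
  congr 1
  have hf : s.filter (fun x => ¬ x % 4 = 0) = s.filter (fun x => x % 2 = 1) :=
    Multiset.filter_congr (fun x hx => by have := hs x hx; constructor <;> omega)
  rw [hf]
  set u := s.filter (fun x => x % 2 = 1) with hu
  have hsub : u.toFinset ⊆ s.toFinset :=
    Multiset.toFinset_subset.2 (Multiset.subset_of_le (Multiset.filter_le _ s))
  rw [sum_count_mul u,
    Finset.sum_subset hsub (fun x _ hxu => by
      have : u.count x = 0 := count_eq_zero.2 (by simpa using hxu)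
      simp [this])]
  refine Finset.sum_congr rfl (fun a _ => ?_)
  rw [hu, count_filter]
  by_cases ha : a % 2 = 1 <;> simp [ha]

lemma sum_gMap (t : Multiset ℕ) : (gMap t).sum = t.sum := by
  have h : ((t.filter (fun x => x % 4 = 2)).map (· / 2)).sum
      + ((t.filter (fun x => x % 4 = 2)).map (· / 2)).sum
      = (t.filter (fun x => x % 4 = 2)).sum := by
    rw [← Multiset.sum_map_add, Multiset.map_congr rfl (fun x hx => by
      have : x % 4 = 2 := (Multiset.mem_filter.1 hx).2
      show x / 2 + x / 2 = id x
      simp only [id]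
      omega), Multiset.map_id]
  rw [gMap, Multiset.sum_add, Multiset.sum_add, add_assoc, h, add_comm,
    ← Multiset.sum_add, Multiset.filter_add_not]

lemma pos_fMap (s : Multiset ℕ) (hpos : ∀ i ∈ s, 0 < i) : ∀ i ∈ fMap s, 0 < i := by
  intro i hi
  rw [fMap, Multiset.mem_add] at hi
  rcases hi with hi | hi
  · exact hpos i (Multiset.mem_filter.1 hi).1
  · obtain ⟨a, _, hia⟩ := Multiset.mem_sum.1 hi
    by_cases ha : a % 2 = 1
    · rw [fAux, if_pos ha, Multiset.mem_add] at hia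
      rcases hia with hia | hia <;>
        · obtain ⟨-, rfl⟩ := Multiset.mem_replicate.1 hia
          omega
    · rw [fAux, if_neg ha] at hia
      simp at hia

lemma pos_gMap (t : Multiset ℕ) (hpos : ∀ i ∈ t, 0 < i) : ∀ i ∈ gMap t, 0 < i := by
  intro i hi
  rw [gMap, Multiset.mem_add, Multiset.mem_add] at hi
  rcases hi with (hi | hi) | hi
  · exact hpos i (Multiset.mem_filter.1 hi).1
  all_goals
    obtain ⟨a, ha, rfl⟩ := Multiset.mem_map.1 hi
    have : a % 4 = 2 := (Multiset.mem_filter.1 ha).2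
    omega

lemma g_f (s : Multiset ℕ) (hs : ∀ i ∈ s, i % 4 ≠ 2) : gMap (fMap s) = s := by
  rw [Multiset.ext]
  intro b
  rcases (show b % 2 = 1 ∨ b % 4 = 0 ∨ b % 4 = 2 by omega) with hb | hb | hb
  · rw [count_gMap_odd _ _ hb, count_fMap_odd _ _ hb,
      count_fMap_two _ _ (show 2 * b % 4 = 2 by omega), show 2 * b / 2 = b by omega]
    omega
  · rw [count_gMap_four _ _ hb, count_fMap_four _ _ hb]
  · rw [count_gMap_two _ _ hb, eq_comm, count_eq_zero]
    exact fun h => hs b h hb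

lemma f_g (t : Multiset ℕ) (ht : ∀ i, Odd i → t.count i ≤ 1) : fMap (gMap t) = t := by
  rw [Multiset.ext]
  intro b
  rcases (show b % 2 = 1 ∨ b % 4 = 0 ∨ b % 4 = 2 by omega) with hb | hb | hb
  · rw [count_fMap_odd _ _ hb, count_gMap_odd _ _ hb]
    have := ht b (Nat.odd_iff.2 hb)
    omega
  · rw [count_fMap_four _ _ hb, count_gMap_four _ _ hb]
  · rw [count_fMap_two _ _ hb, count_gMap_odd _ _ (show b / 2 % 2 = 1 by omega),
      show 2 * (b / 2) = b by omega]
    have := ht (b / 2) (Nat.odd_iff.2 (by omega))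
    omega

end Stmt5Aux

open Stmt5Aux in
/-- The number of partitions of `n` with no part congruent to `2` modulo `4` equals
the number of partitions of `n` whose odd parts are distinct. -/
theorem stmt5 (n : ℕ) :
    Nat.card {π : Nat.Partition n // ∀ i ∈ π.parts, i % 4 ≠ 2} =
      Nat.card {π : Nat.Partition n // ∀ i, Odd i → π.parts.count i ≤ 1} := by
  apply Nat.card_congr
  refine
    { toFun := fun x =>
        ⟨⟨fMap x.1.parts, fun hi => pos_fMap _ (fun i h => x.1.parts_pos h) _ hi,
            by rw [sum_fMap _ x.2, x.1.parts_sum]⟩, fun i hi => by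
          show (fMap x.1.parts).count i ≤ 1
          rw [count_fMap_odd _ _ (Nat.odd_iff.1 hi)]
          omega⟩
      invFun := fun y =>
        ⟨⟨gMap y.1.parts, fun hi => pos_gMap _ (fun i h => y.1.parts_pos h) _ hi,
            by rw [sum_gMap, y.1.parts_sum]⟩, fun i hi hi2 =>
          (count_eq_zero.1 (count_gMap_two y.1.parts i hi2)) hi⟩
      left_inv := fun x => by
        apply Subtype.ext
        apply Nat.Partition.ext
        exact g_f _ x.2
      right_inv := fun y => by
        apply Subtype.ext
        apply Nat.Partition.ext
        exact f_g _ y.2 }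
end

section
/- As formal power series in q, Σ_{n≥0} N_ν(n) q^n = q^(ν(ν-1)/2) Σ_{τ=0}^∞ q^(τ(ν+τ)) / ((q;q)_τ (q;q)_{ν+τ-1}), for each fixed ν ≥ 1. -/
set_option maxHeartbeats 1000000

open PowerSeries

/-- The height of the `ν`-Durfee rectangle of the partition with parts `s`:
the largest `h` such that the diagram contains an `h × (h + ν)` rectangle,
i.e. at least `h` parts are `≥ h + ν`. -/
def durfee (ν : ℕ) (s : Multiset ℕ) : ℕ :=
  Nat.findGreatest (fun h => h ≤ (s.filter (fun i => h + ν ≤ i)).card) (Multiset.card s)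

/-- `Nnu ν n` counts the partitions of `n` such that every positive integer
less than `ν` occurs as a part, and all parts lying below the `ν`-Durfee rectangle
of the Young diagram are strictly less than the width `durfee ν + ν` of that
rectangle (equivalently, at most `durfee ν` parts are `≥ durfee ν + ν`). -/
noncomputable def Nnu (ν n : ℕ) : ℕ :=
  Nat.card {π : Nat.Partition n //
    (∀ j, 1 ≤ j → j < ν → j ∈ π.parts) ∧
    (π.parts.filter (fun i => durfee ν π.parts + ν ≤ i)).card ≤ durfee ν π.parts}

/-- The `q`-Pochhammer symbol `(q;q)_m = ∏_{i=1}^m (1 - q^i)`. -/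
noncomputable def qpoch (m : ℕ) : PowerSeries ℚ :=
  ∏ i ∈ Finset.range m, (1 - (X : PowerSeries ℚ) ^ (i + 1))

open Finset
open scoped Classical

noncomputable def Pser (k : ℕ) : PowerSeries ℚ :=
  ∏ i ∈ Finset.range k, (1 - (X : PowerSeries ℚ) ^ (i + 1))⁻¹

lemma constCoeff_fac (i : ℕ) : constantCoeff (1 - (X : PowerSeries ℚ) ^ (i + 1)) ≠ 0 := by
  simp [zero_pow]

lemma qpoch_mul_Pser (k : ℕ) : qpoch k * Pser k = 1 := by
  induction k with
  | zero => simp [qpoch, Pser]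
  | succ k ih =>
    rw [qpoch, Pser, prod_range_succ, prod_range_succ]
    have : (1 - (X : PowerSeries ℚ) ^ (k + 1)) * (1 - (X : PowerSeries ℚ) ^ (k + 1))⁻¹ = 1 :=
      PowerSeries.mul_inv_cancel _ (constCoeff_fac k)
    calc (qpoch k * (1 - X ^ (k + 1))) * (Pser k * (1 - X ^ (k + 1))⁻¹)
        = (qpoch k * Pser k) * ((1 - X ^ (k + 1)) * (1 - X ^ (k + 1))⁻¹) := by ring
      _ = 1 := by rw [ih, this, one_mul]

lemma inv_qpoch_mul (a b : ℕ) : (qpoch a * qpoch b)⁻¹ = Pser a * Pser b := by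
  have h : constantCoeff (qpoch a * qpoch b) ≠ 0 := by
    have : ∀ m, constantCoeff (qpoch m) = 1 := by
      intro m
      rw [qpoch, map_prod]
      apply Finset.prod_eq_one
      intro i _
      simp [zero_pow]
    simp [map_mul, this]
  symm
  rw [PowerSeries.eq_inv_iff_mul_eq_one h]
  calc Pser a * Pser b * (qpoch a * qpoch b)
      = (qpoch a * Pser a) * (qpoch b * Pser b) := by ring
    _ = 1 := by rw [qpoch_mul_Pser, qpoch_mul_Pser, one_mul]

lemma Pser_succ (k : ℕ) : Pser (k + 1) = Pser k + X ^ (k + 1) * Pser (k + 1) := by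
  have h1 : (1 - (X : PowerSeries ℚ) ^ (k + 1)) * Pser (k + 1) = Pser k := by
    rw [Pser, prod_range_succ, ← mul_assoc, mul_comm (1 - (X : PowerSeries ℚ)^(k+1)),
      mul_assoc, PowerSeries.mul_inv_cancel _ (constCoeff_fac k), mul_one, Pser]
  nth_rewrite 1 [← h1]
  ring

/-- number of partitions of `m` into at most `k` parts -/
noncomputable def cA (k m : ℕ) : ℕ :=
  #(univ.filter fun p : Nat.Partition m => Multiset.card p.parts ≤ k)

/-- number of partitions of `m` with all parts at most `k` -/
noncomputable def cB (k m : ℕ) : ℕ :=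
  #(univ.filter fun p : Nat.Partition m => ∀ j ∈ p.parts, j ≤ k)

lemma cA_zero (m : ℕ) : cA 0 m = if m = 0 then 1 else 0 := by
  rcases eq_or_ne m 0 with rfl | hm
  · rw [if_pos rfl, cA]
    rw [Finset.filter_true_of_mem, Finset.card_univ]
    · rfl
    · intro p _
      have : p.parts = 0 := by
        by_contra h
        obtain ⟨a, ha⟩ := Multiset.exists_mem_of_ne_zero h
        have h1 := p.parts_pos ha
        have h2 : a ≤ p.parts.sum := Multiset.le_sum_of_mem ha
        rw [p.parts_sum] at h2
        omega
      simp [this]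
  · rw [if_neg hm, cA, Finset.card_eq_zero, Finset.filter_eq_empty_iff]
    intro p _
    simp only [Nat.le_zero, Multiset.card_eq_zero]
    intro h
    apply hm
    rw [← p.parts_sum, h, Multiset.sum_zero]

lemma cB_zero (m : ℕ) : cB 0 m = if m = 0 then 1 else 0 := by
  rcases eq_or_ne m 0 with rfl | hm
  · rw [if_pos rfl, cB]
    rw [Finset.filter_true_of_mem, Finset.card_univ]
    · rfl
    · intro p _ j hj
      have h1 := p.parts_pos hj
      have h2 : j ≤ p.parts.sum := Multiset.le_sum_of_mem hj
      rw [p.parts_sum] at h2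
      omega
  · rw [if_neg hm, cB, Finset.card_eq_zero, Finset.filter_eq_empty_iff]
    intro p _ h
    apply hm
    rw [← p.parts_sum]
    apply Multiset.sum_eq_zero
    intro x hx
    have := h x hx
    omega

lemma card_split' {X : Type*} [DecidableEq X] {s t u : Finset X}
    (h : ∀ x, x ∈ s ↔ x ∈ t ∨ x ∈ u) (hd : ∀ x, x ∈ t → x ∈ u → False) :
    Finset.card s = Finset.card t + Finset.card u := by
  have hs : s = t ∪ u := Finset.ext (fun x => by simp [h x, Finset.mem_union])
  rw [hs, Finset.card_union_of_disjoint (Finset.disjoint_left.mpr (fun {x} hx hx2 => (hd x hx hx2).elim))]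

lemma cB_rec (k m : ℕ) :
    cB (k + 1) m = cB k m + (if k + 1 ≤ m then cB (k + 1) (m - (k + 1)) else 0) := by
  unfold cB
  rw [card_split' (u := univ.filter fun p : Nat.Partition m =>
        (∀ j ∈ p.parts, j ≤ k + 1) ∧ (k+1) ∈ p.parts)
      (t := univ.filter fun p : Nat.Partition m => ∀ j ∈ p.parts, j ≤ k)
      (h := by
        intro p
        simp only [Finset.mem_filter, Finset.mem_univ, true_and]
        constructor
        · intro hle
          by_cases hm : (k+1) ∈ p.parts
          · exact Or.inr ⟨hle, hm⟩
          · refine Or.inl (fun j hj => ?_)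
            have := hle j hj
            rcases Nat.lt_or_ge j (k+1) with h | h
            · omega
            · exfalso; apply hm; have hj' : j = k + 1 := by omega
              rwa [← hj']
        · rintro (hle | ⟨hle, -⟩)
          · exact fun j hj => le_trans (hle j hj) (by omega)
          · exact hle)
      (hd := by
        rintro p hp hp'
        simp only [Finset.mem_filter, Finset.mem_univ, true_and] at hp hp'
        have := hp _ hp'.2
        omega)]
  congr 1
  split_ifs with hkm
  · apply Finset.card_bij'
      (i := fun p (hp : p ∈ univ.filter fun p : Nat.Partition m =>
        (∀ j ∈ p.parts, j ≤ k + 1) ∧ (k+1) ∈ p.parts) =>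
        (⟨p.parts.erase (k+1),
          fun {i} hi => p.parts_pos (Multiset.mem_of_mem_erase hi),
          by
            have hm : (k+1) ∈ p.parts := (Finset.mem_filter.mp hp).2.2
            have hce := Multiset.cons_erase hm
            have hsum : p.parts.sum = m := p.parts_sum
            rw [← hce, Multiset.sum_cons] at hsum
            omega⟩ : Nat.Partition (m - (k+1))))
      (j := fun q (hq : q ∈ univ.filter fun q : Nat.Partition (m - (k+1)) =>
        ∀ j ∈ q.parts, j ≤ k + 1) =>
        (⟨(k+1) ::ₘ q.parts,
          fun {i} hi => by
            rcases Multiset.mem_cons.mp hi with rfl | h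
            · omega
            · exact q.parts_pos h,
          by rw [Multiset.sum_cons, q.parts_sum]; omega⟩ : Nat.Partition m))
    · intro p hp
      apply Nat.Partition.ext
      simp only
      exact Multiset.cons_erase (Finset.mem_filter.mp hp).2.2
    · intro q hq
      apply Nat.Partition.ext
      simp only
      exact Multiset.erase_cons_head _ _
    · intro p hp
      simp only [Finset.mem_filter, Finset.mem_univ, true_and] at hp ⊢
      intro j hj
      exact hp.1 j (Multiset.mem_of_mem_erase hj)
    · intro q hq
      simp only [Finset.mem_filter, Finset.mem_univ, true_and] at hq ⊢
      constructor
      · intro j hj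
        rcases Multiset.mem_cons.mp hj with rfl | h
        · omega
        · exact hq j h
      · exact Multiset.mem_cons_self _ _
  · rw [Finset.card_eq_zero, Finset.filter_eq_empty_iff]
    rintro p - ⟨-, hmem⟩
    have := Multiset.le_sum_of_mem hmem
    rw [p.parts_sum] at this
    omega

lemma sum_map_sub_one (s : Multiset ℕ) (h : ∀ t ∈ s, 0 < t) :
    (s.map (· - 1)).sum + Multiset.card s = s.sum := by
  induction s using Multiset.induction_on with
  | empty => simp
  | cons a s ih =>
    simp only [Multiset.map_cons, Multiset.sum_cons, Multiset.card_cons]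
    have ha : 0 < a := h a (Multiset.mem_cons_self a s)
    have := ih (fun t ht => h t (Multiset.mem_cons_of_mem ht))
    omega

lemma cA_rec (k m : ℕ) :
    cA (k + 1) m = cA k m + (if k + 1 ≤ m then cA (k + 1) (m - (k + 1)) else 0) := by
  unfold cA
  rw [card_split' (u := univ.filter fun p : Nat.Partition m =>
        Multiset.card p.parts ≤ k + 1 ∧ ¬ Multiset.card p.parts ≤ k)
      (t := univ.filter fun p : Nat.Partition m => Multiset.card p.parts ≤ k)
      (h := by
        intro p
        simp only [Finset.mem_filter, Finset.mem_univ, true_and]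
        omega)
      (hd := by
        rintro p hp hp'
        simp only [Finset.mem_filter, Finset.mem_univ, true_and] at hp hp'
        omega)]
  congr 1
  split_ifs with hkm
  · apply Finset.card_bij'
      (i := fun p (hp : p ∈ univ.filter fun p : Nat.Partition m =>
        Multiset.card p.parts ≤ k + 1 ∧ ¬ Multiset.card p.parts ≤ k) =>
        (⟨(p.parts.map (· - 1)).filter (· ≠ 0),
          fun {i} hi => by
            have := Multiset.of_mem_filter hi
            omega,
          by
            have hc : Multiset.card p.parts = k + 1 := by
              have := (Finset.mem_filter.mp hp).2
              omega
            have h1 := Multiset.filter_add_not (fun t => t ≠ 0) (p.parts.map (· - 1))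
            have h2 : ((p.parts.map (· - 1)).filter (fun t => ¬ t ≠ 0)).sum = 0 :=
              Multiset.sum_eq_zero (fun x hx => by
                have := Multiset.of_mem_filter hx
                omega)
            have h3 := congrArg Multiset.sum h1
            rw [Multiset.sum_add, h2, add_zero] at h3
            have h4 := sum_map_sub_one p.parts (fun t ht => p.parts_pos ht)
            rw [p.parts_sum, hc] at h4
            omega⟩ : Nat.Partition (m - (k + 1))))
      (j := fun q (hq : q ∈ univ.filter fun q : Nat.Partition (m - (k+1)) =>
        Multiset.card q.parts ≤ k + 1) =>
        (⟨q.parts.map (· + 1) + Multiset.replicate (k + 1 - Multiset.card q.parts) 1,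
          fun {i} hi => by
            rcases Multiset.mem_add.mp hi with h | h
            · obtain ⟨t, -, rfl⟩ := Multiset.mem_map.mp h
              omega
            · have := Multiset.eq_of_mem_replicate h
              omega,
          by
            have hc : Multiset.card q.parts ≤ k + 1 := (Finset.mem_filter.mp hq).2
            rw [Multiset.sum_add, Multiset.sum_replicate]
            have : (q.parts.map (· + 1)).sum = q.parts.sum + Multiset.card q.parts := by
              have := Multiset.sum_map_add (m := q.parts) (f := id) (g := fun _ => 1)
              simpa using this
            rw [this, q.parts_sum]
            simp only [smul_eq_mul, mul_one]
            omega⟩ : Nat.Partition m))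
    · -- left inverse
      intro p hp
      apply Nat.Partition.ext
      simp only
      have hc : Multiset.card p.parts = k + 1 := by
        have := (Finset.mem_filter.mp hp).2; omega
      have hfm : (p.parts.map (· - 1)).filter (· ≠ 0) =
          (p.parts.filter (fun t => t - 1 ≠ 0)).map (· - 1) := by
        rw [Multiset.filter_map]
        rfl
      rw [hfm, Multiset.map_map]
      have hmap : (p.parts.filter (fun t => t - 1 ≠ 0)).map ((· + 1) ∘ (· - 1)) =
          p.parts.filter (fun t => t - 1 ≠ 0) := by
        rw [show (p.parts.filter (fun t => t - 1 ≠ 0)).map ((· + 1) ∘ (· - 1)) =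
            (p.parts.filter (fun t => t - 1 ≠ 0)).map id from
          Multiset.map_congr rfl (fun x hx => by
            have := Multiset.of_mem_filter hx
            simp only [Function.comp_apply, id_eq]
            omega), Multiset.map_id]
      rw [hmap]
      have hsplit := Multiset.filter_add_not (fun t => t - 1 ≠ 0) p.parts
      have hrep : p.parts.filter (fun t => ¬ t - 1 ≠ 0) =
          Multiset.replicate (Multiset.card (p.parts.filter (fun t => ¬ t - 1 ≠ 0))) 1 := by
        rw [Multiset.eq_replicate]
        exact ⟨rfl, fun b hb => by
          have h1 := Multiset.of_mem_filter hb
          have h2 := p.parts_pos (Multiset.mem_of_mem_filter hb)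
          omega⟩
      have hcards := congrArg Multiset.card hsplit
      rw [Multiset.card_add] at hcards
      rw [Multiset.card_map]
      have hcc : k + 1 - Multiset.card (p.parts.filter (fun t => t - 1 ≠ 0)) =
          Multiset.card (p.parts.filter (fun t => ¬ t - 1 ≠ 0)) := by
        omega
      rw [hcc, ← hrep]
      exact hsplit
    · -- right inverse
      intro q hq
      apply Nat.Partition.ext
      simp only
      rw [Multiset.map_add, Multiset.map_map, Multiset.map_replicate, Multiset.filter_add]
      have h1 : q.parts.map ((· - 1) ∘ (· + 1)) = q.parts := by
        rw [show q.parts.map ((· - 1) ∘ (· + 1)) = q.parts.map id from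
          Multiset.map_congr rfl (fun x _ => by simp), Multiset.map_id]
      rw [h1]
      have h2 : (Multiset.replicate (k + 1 - Multiset.card q.parts) (1 - 1)).filter (· ≠ 0) =
          0 := by
        rw [Multiset.filter_eq_nil]
        intro a ha
        have := Multiset.eq_of_mem_replicate ha
        omega
      rw [h2, add_zero]
      rw [Multiset.filter_eq_self]
      intro a ha
      have := q.parts_pos ha
      omega
    · -- maps into
      intro p hp
      simp only [Finset.mem_filter, Finset.mem_univ, true_and]
      calc Multiset.card ((p.parts.map (· - 1)).filter (· ≠ 0))
          ≤ Multiset.card (p.parts.map (· - 1)) :=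
            Multiset.card_le_card (Multiset.filter_le _ _)
        _ = Multiset.card p.parts := Multiset.card_map _ _
        _ ≤ k + 1 := (Finset.mem_filter.mp hp).2.1
    · intro q hq
      simp only [Finset.mem_filter, Finset.mem_univ, true_and]
      have hc : Multiset.card q.parts ≤ k + 1 := (Finset.mem_filter.mp hq).2
      rw [Multiset.card_add, Multiset.card_map, Multiset.card_replicate]
      omega
  · rw [Finset.card_eq_zero, Finset.filter_eq_empty_iff]
    rintro p - ⟨h1, h2⟩
    have hcle : Multiset.card p.parts ≤ p.parts.sum := by
      calc Multiset.card p.parts = (p.parts.map (fun _ => 1)).sum := by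
            simp [Multiset.sum_replicate]
        _ ≤ p.parts.sum := by
            have := Multiset.card_nsmul_le_sum (s := p.parts) (a := 1)
              (fun x hx => p.parts_pos hx)
            simpa [Multiset.sum_replicate] using this
    rw [p.parts_sum] at hcle
    omega

lemma coeff_Pser (c : ℕ → ℕ → ℕ) (h0 : ∀ m, c 0 m = if m = 0 then 1 else 0)
    (hrec : ∀ k m, c (k+1) m = c k m + (if k+1 ≤ m then c (k+1) (m-(k+1)) else 0)) :
    ∀ k m, coeff m (Pser k) = (c k m : ℚ) := by
  intro k
  induction k with
  | zero =>
    intro m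
    rw [Pser, Finset.range_zero, Finset.prod_empty, h0]
    rcases eq_or_ne m 0 with rfl | hm
    · simp
    · simp [coeff_one, hm]
  | succ k ih =>
    intro m
    induction m using Nat.strong_induction_on with
    | _ m ihm =>
      rw [hrec k m]
      nth_rewrite 1 [Pser_succ k]
      rw [map_add, ih m, mul_comm ((X : PowerSeries ℚ) ^ (k+1)), coeff_mul_X_pow']
      push_cast
      congr 1
      split_ifs with h
      · exact ihm _ (by omega)
      · simp

lemma durfee_card_le (ν : ℕ) (s : Multiset ℕ) :
    durfee ν s ≤ Multiset.card (s.filter (fun i => durfee ν s + ν ≤ i)) := by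
  have h := Nat.findGreatest_spec
    (P := fun h => h ≤ Multiset.card (s.filter (fun i => h + ν ≤ i)))
    (m := 0) (n := Multiset.card s) (Nat.zero_le _) (Nat.zero_le _)
  exact h

lemma durfee_eq_of {ν τ : ℕ} {s : Multiset ℕ}
    (h1 : Multiset.card (s.filter (fun i => τ + ν ≤ i)) = τ)
    (h2 : τ ≤ Multiset.card s) : durfee ν s = τ := by
  apply le_antisymm
  · by_contra hlt
    push_neg at hlt
    have hP := durfee_card_le ν s
    have hmono : s.filter (fun i => durfee ν s + ν ≤ i) ≤ s.filter (fun i => τ + ν ≤ i) :=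
      Multiset.monotone_filter_right s (fun b hb => by omega)
    have := Multiset.card_le_card hmono
    omega
  · exact Nat.le_findGreatest h2 (by rw [h1])

noncomputable def Iset (ν : ℕ) : Multiset ℕ := (Multiset.range ν).filter (· ≠ 0)

lemma mem_Iset {ν j : ℕ} : j ∈ Iset ν ↔ 1 ≤ j ∧ j < ν := by
  simp only [Iset, Multiset.mem_filter, Multiset.mem_range]
  omega

lemma count_Iset (ν j : ℕ) :
    Multiset.count j (Iset ν) = if 1 ≤ j ∧ j < ν then 1 else 0 := by
  split_ifs with h
  · exact Multiset.count_eq_one_of_mem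
      ((Multiset.nodup_range ν).filter _) (mem_Iset.mpr h)
  · exact Multiset.count_eq_zero.mpr (fun hm => h (mem_Iset.mp hm))

lemma Iset_sum (ν : ℕ) : (Iset ν).sum = ν * (ν - 1) / 2 := by
  have h1 : (Iset ν).sum = (Multiset.range ν).sum := by
    have hsp := congrArg Multiset.sum
      (Multiset.filter_add_not (fun j => j ≠ 0) (Multiset.range ν))
    rw [Multiset.sum_add] at hsp
    have hz : (Multiset.filter (fun j => ¬ j ≠ 0) (Multiset.range ν)).sum = 0 :=
      Multiset.sum_eq_zero (fun x hx => by
        have := Multiset.of_mem_filter hx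
        omega)
    rw [Iset]
    omega
  have h2 : (∑ i ∈ Finset.range ν, i) = ((Multiset.range ν).map (fun i => i)).sum := rfl
  rw [Multiset.map_id'] at h2
  rw [h1, ← h2, ← Finset.sum_range_id_mul_two ν]
  omega

lemma sum_map_add_const (s : Multiset ℕ) (w : ℕ) :
    (s.map (· + w)).sum = s.sum + Multiset.card s * w := by
  have h := Multiset.sum_map_add (m := s) (f := fun i => i) (g := fun _ => w)
  rw [show (s.map (· + w)).sum = (s.map (fun i => i + w)).sum from rfl, h,
    Multiset.map_id', Multiset.map_const', Multiset.sum_replicate, smul_eq_mul]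

lemma sum_map_sub_const {s : Multiset ℕ} {w : ℕ} (h : ∀ x ∈ s, w ≤ x) :
    (s.map (· - w)).sum + Multiset.card s * w = s.sum := by
  have h1 : ((s.map (· - w)).map (· + w)) = s := by
    rw [Multiset.map_map]
    rw [show s.map ((· + w) ∘ (· - w)) = s.map id from
      Multiset.map_congr rfl (fun x hx => by
        have := h x hx
        simp only [Function.comp_apply, id_eq]
        omega), Multiset.map_id]
  have h2 := sum_map_add_const (s.map (· - w)) w
  rw [h1, Multiset.card_map] at h2
  omega

lemma sigma_pair_ext {u v u' v' : ℕ} {γ : Nat.Partition u} {β : Nat.Partition v}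
    {γ' : Nat.Partition u'} {β' : Nat.Partition v'}
    (hu : u = u') (hv : v = v') (hγ : γ.parts = γ'.parts) (hβ : β.parts = β'.parts) :
    (⟨(u, v), (γ, β)⟩ : (uv : ℕ × ℕ) × (Nat.Partition uv.1 × Nat.Partition uv.2)) =
      ⟨(u', v'), (γ', β')⟩ := by
  subst hu
  subst hv
  rw [Nat.Partition.ext hγ, Nat.Partition.ext hβ]

noncomputable def Tset (ν τ m : ℕ) :
    Finset ((uv : ℕ × ℕ) × (Nat.Partition uv.1 × Nat.Partition uv.2)) :=
  (Finset.HasAntidiagonal.antidiagonal m).sigma (fun uv =>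
    (univ.filter fun γ : Nat.Partition uv.1 => Multiset.card γ.parts ≤ τ) ×ˢ
    (univ.filter fun β : Nat.Partition uv.2 => ∀ j ∈ β.parts, j ≤ ν + τ - 1))

lemma Tset_card (ν τ m : ℕ) :
    #(Tset ν τ m) = ∑ uv ∈ Finset.HasAntidiagonal.antidiagonal m, cA τ uv.1 * cB (ν + τ - 1) uv.2 := by
  rw [Tset, Finset.card_sigma]
  exact Finset.sum_congr rfl (fun uv _ => by rw [Finset.card_product, cA, cB])

lemma filter_recomposed_big {ν τ : ℕ} (hν : 1 ≤ ν) (g b : Multiset ℕ)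
    (hb : ∀ j ∈ b, j ≤ ν + τ - 1) (r : ℕ) :
    Multiset.filter (fun i => τ + ν ≤ i)
        (g.map (· + (τ + ν)) + Multiset.replicate r (τ + ν) + b + Iset ν) =
      g.map (· + (τ + ν)) + Multiset.replicate r (τ + ν) := by
  rw [Multiset.filter_add, Multiset.filter_add, Multiset.filter_add]
  rw [Multiset.filter_eq_self.mpr (fun a ha => by
    obtain ⟨t, -, rfl⟩ := Multiset.mem_map.mp ha
    omega)]
  rw [Multiset.filter_eq_self.mpr (fun a ha => by
    have := Multiset.eq_of_mem_replicate ha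
    omega)]
  rw [Multiset.filter_eq_nil.mpr (fun a ha => by
    have := hb a ha
    omega)]
  rw [Multiset.filter_eq_nil.mpr (fun a ha => by
    have := mem_Iset.mp ha
    omega)]
  rw [add_zero, add_zero]

lemma filter_recomposed_small {ν τ : ℕ} (hν : 1 ≤ ν) (g b : Multiset ℕ)
    (hb : ∀ j ∈ b, j ≤ ν + τ - 1) (r : ℕ) :
    Multiset.filter (fun i => ¬ τ + ν ≤ i)
        (g.map (· + (τ + ν)) + Multiset.replicate r (τ + ν) + b + Iset ν) =
      b + Iset ν := by
  rw [Multiset.filter_add, Multiset.filter_add, Multiset.filter_add]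
  rw [Multiset.filter_eq_nil.mpr (fun a ha => by
    obtain ⟨t, -, rfl⟩ := Multiset.mem_map.mp ha
    omega)]
  rw [Multiset.filter_eq_nil.mpr (fun a ha => by
    have := Multiset.eq_of_mem_replicate ha
    omega)]
  rw [Multiset.filter_eq_self.mpr (fun a ha => by
    have := hb a ha
    omega)]
  rw [Multiset.filter_eq_self.mpr (fun a ha => by
    have := mem_Iset.mp ha
    omega)]
  rw [zero_add, zero_add]

lemma Dc_eq (ν : ℕ) (hν : 1 ≤ ν) (τ n : ℕ) :
    #(univ.filter fun π : Nat.Partition n =>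
        ((∀ j, 1 ≤ j → j < ν → j ∈ π.parts) ∧
          Multiset.card (π.parts.filter (fun i => durfee ν π.parts + ν ≤ i)) ≤
            durfee ν π.parts) ∧
        durfee ν π.parts = τ) =
      if ν * (ν - 1) / 2 + τ * (ν + τ) ≤ n
        then #(Tset ν τ (n - (ν * (ν - 1) / 2 + τ * (ν + τ)))) else 0 := by
  -- generic facts about any member π of the LHS set
  have key : ∀ π : Nat.Partition n,
      (((∀ j, 1 ≤ j → j < ν → j ∈ π.parts) ∧
        Multiset.card (π.parts.filter (fun i => durfee ν π.parts + ν ≤ i)) ≤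
          durfee ν π.parts) ∧
        durfee ν π.parts = τ) →
      Multiset.card (π.parts.filter (fun i => τ + ν ≤ i)) = τ ∧
      Iset ν ≤ π.parts.filter (fun i => ¬ τ + ν ≤ i) ∧
      ((π.parts.filter (fun i => τ + ν ≤ i)).map (fun i => i - (τ + ν))).sum +
        (π.parts.filter (fun i => ¬ τ + ν ≤ i) - Iset ν).sum +
        (ν * (ν - 1) / 2 + τ * (ν + τ)) = n := by
    rintro π ⟨⟨hall, hle⟩, hd⟩
    rw [hd] at hle
    have hge := durfee_card_le ν π.parts
    rw [hd] at hge
    have hbigcard : Multiset.card (π.parts.filter (fun i => τ + ν ≤ i)) = τ :=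
      le_antisymm hle hge
    have hIle : Iset ν ≤ π.parts.filter (fun i => ¬ τ + ν ≤ i) := by
      rw [Multiset.le_iff_count]
      intro j
      rw [count_Iset]
      split_ifs with hj
      · rw [Multiset.count_filter, if_pos (by omega)]
        exact Multiset.one_le_count_iff_mem.mpr (hall j hj.1 hj.2)
      · exact Nat.zero_le _
    refine ⟨hbigcard, hIle, ?_⟩
    have hsum := congrArg Multiset.sum
      (Multiset.filter_add_not (fun i => τ + ν ≤ i) π.parts)
    rw [Multiset.sum_add, π.parts_sum] at hsum
    have hgs := sum_map_sub_const (s := π.parts.filter (fun i => τ + ν ≤ i))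
      (w := τ + ν) (fun x hx => Multiset.of_mem_filter hx)
    rw [hbigcard] at hgs
    have hmul : τ * (τ + ν) = τ * (ν + τ) := by ring
    rw [hmul] at hgs
    have hss := congrArg Multiset.sum (tsub_add_cancel_of_le hIle)
    rw [Multiset.sum_add, Iset_sum] at hss
    omega
  split_ifs with hif
  · set m := n - (ν * (ν - 1) / 2 + τ * (ν + τ)) with hm
    refine Finset.card_bij'
      (i := fun π (hπ : π ∈ univ.filter fun π : Nat.Partition n =>
          ((∀ j, 1 ≤ j → j < ν → j ∈ π.parts) ∧
            Multiset.card (π.parts.filter (fun i => durfee ν π.parts + ν ≤ i)) ≤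
              durfee ν π.parts) ∧
          durfee ν π.parts = τ) =>
        (⟨((((π.parts.filter (fun i => τ + ν ≤ i)).map (fun i => i - (τ + ν)))).sum,
            (π.parts.filter (fun i => ¬ τ + ν ≤ i) - Iset ν).sum),
          (Nat.Partition.ofMultiset ((π.parts.filter (fun i => τ + ν ≤ i)).map
              (fun i => i - (τ + ν))),
            Nat.Partition.ofMultiset (π.parts.filter (fun i => ¬ τ + ν ≤ i) - Iset ν))⟩ :
          (uv : ℕ × ℕ) × (Nat.Partition uv.1 × Nat.Partition uv.2)))
      (j := fun x (hx : x ∈ Tset ν τ m) =>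
        (⟨x.2.1.parts.map (· + (τ + ν)) +
            Multiset.replicate (τ - Multiset.card x.2.1.parts) (τ + ν) +
            x.2.2.parts + Iset ν,
          fun {i} hi => by
            rcases Multiset.mem_add.mp hi with hi | hi
            · rcases Multiset.mem_add.mp hi with hi | hi
              · rcases Multiset.mem_add.mp hi with hi | hi
                · obtain ⟨t, -, rfl⟩ := Multiset.mem_map.mp hi
                  omega
                · have := Multiset.eq_of_mem_replicate hi
                  omega
              · exact x.2.2.parts_pos hi
            · have := mem_Iset.mp hi
              omega,
          by
            obtain ⟨hx1, hx2⟩ := Finset.mem_sigma.mp hx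
            obtain ⟨hxg, hxb⟩ := Finset.mem_product.mp hx2
            have hga : Multiset.card x.2.1.parts ≤ τ := (Finset.mem_filter.mp hxg).2
            have huv : x.1.1 + x.1.2 = m := Finset.HasAntidiagonal.mem_antidiagonal.mp hx1
            rw [Multiset.sum_add, Multiset.sum_add, Multiset.sum_add,
              sum_map_add_const, Multiset.sum_replicate, x.2.1.parts_sum,
              x.2.2.parts_sum, Iset_sum, smul_eq_mul]
            have hmul : Multiset.card x.2.1.parts * (τ + ν) +
                (τ - Multiset.card x.2.1.parts) * (τ + ν) = τ * (ν + τ) := by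
              rw [← add_mul]
              have : Multiset.card x.2.1.parts + (τ - Multiset.card x.2.1.parts) = τ := by
                omega
              rw [this]
              ring
            omega⟩ : Nat.Partition n))
      ?hi ?hj ?li ?ri
    -- forward membership
    case hi =>
      intro π hπ
      simp only [Finset.mem_filter] at hπ
      have hπ' := hπ.2
      obtain ⟨hbigcard, hIle, hsum⟩ := key π hπ'
      dsimp only
      rw [Tset]
      rw [Finset.mem_sigma]
      constructor
      · rw [Finset.HasAntidiagonal.mem_antidiagonal]
        show ((π.parts.filter (fun i => τ + ν ≤ i)).map (fun i => i - (τ + ν))).sum +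
          (π.parts.filter (fun i => ¬ τ + ν ≤ i) - Iset ν).sum = m
        omega
      · rw [Finset.mem_product]
        constructor
        · rw [Finset.mem_filter]
          refine ⟨Finset.mem_univ _, ?_⟩
          simp only [Nat.Partition.ofMultiset_parts]
          calc Multiset.card (Multiset.filter (fun x => ¬ x = 0)
                ((π.parts.filter (fun i => τ + ν ≤ i)).map (fun i => i - (τ + ν))))
              ≤ Multiset.card ((π.parts.filter (fun i => τ + ν ≤ i)).map
                (fun i => i - (τ + ν))) := Multiset.card_le_card (Multiset.filter_le _ _)
            _ = τ := by rw [Multiset.card_map, hbigcard]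
        · rw [Finset.mem_filter]
          refine ⟨Finset.mem_univ _, ?_⟩
          intro j hj
          simp only [Nat.Partition.ofMultiset_parts] at hj
          have hj1 : j ∈ π.parts.filter (fun i => ¬ τ + ν ≤ i) :=
            Multiset.mem_of_le (Multiset.sub_le_self _ _) (Multiset.mem_of_mem_filter hj)
          have := Multiset.of_mem_filter hj1
          omega
    -- backward membership
    case hj =>
      rintro ⟨⟨u, v⟩, γ, β⟩ hx
      obtain ⟨hx1, hx2⟩ := Finset.mem_sigma.mp hx
      obtain ⟨hxg, hxb⟩ := Finset.mem_product.mp hx2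
      have hga : Multiset.card γ.parts ≤ τ := (Finset.mem_filter.mp hxg).2
      have hbb : ∀ j ∈ β.parts, j ≤ ν + τ - 1 := (Finset.mem_filter.mp hxb).2
      have hbig := filter_recomposed_big (τ := τ) hν γ.parts β.parts hbb
        (τ - Multiset.card γ.parts)
      simp only [Finset.mem_filter, Finset.mem_univ, true_and]
      have hbigcard : Multiset.card
          ((γ.parts.map (· + (τ + ν)) +
            Multiset.replicate (τ - Multiset.card γ.parts) (τ + ν) +
            β.parts + Iset ν).filter (fun i => τ + ν ≤ i)) = τ := by
        rw [hbig, Multiset.card_add, Multiset.card_map, Multiset.card_replicate]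
        omega
      have hcle : τ ≤ Multiset.card
          (γ.parts.map (· + (τ + ν)) +
            Multiset.replicate (τ - Multiset.card γ.parts) (τ + ν) +
            β.parts + Iset ν) := by
        rw [Multiset.card_add, Multiset.card_add, Multiset.card_add,
          Multiset.card_map, Multiset.card_replicate]
        omega
      have hd : durfee ν (γ.parts.map (· + (τ + ν)) +
          Multiset.replicate (τ - Multiset.card γ.parts) (τ + ν) +
          β.parts + Iset ν) = τ := durfee_eq_of hbigcard hcle
      refine ⟨⟨?_, ?_⟩, hd⟩
      · intro j hj1 hjν
        rw [Multiset.mem_add]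
        exact Or.inr (mem_Iset.mpr ⟨hj1, hjν⟩)
      · rw [hd, hbigcard]
    -- left inverse
    case li =>
      intro π hπ
      simp only [Finset.mem_filter] at hπ
      have hπ' := hπ.2
      obtain ⟨hbigcard, hIle, hsum⟩ := key π hπ'
      apply Nat.Partition.ext
      simp only [Nat.Partition.ofMultiset_parts]
      set big := π.parts.filter (fun i => τ + ν ≤ i) with hbigdef
      set sml := π.parts.filter (fun i => ¬ τ + ν ≤ i) with hsmldef
      have hb0 : Multiset.filter (fun x => ¬ x = 0) (sml - Iset ν) = sml - Iset ν :=
        Multiset.filter_eq_self.mpr (fun a ha => by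
          have ham : a ∈ sml := Multiset.mem_of_le (Multiset.sub_le_self _ _) ha
          have := π.parts_pos (Multiset.mem_filter.mp ham).1
          omega)
      have hg1 : Multiset.filter (fun x => ¬ x = 0) (big.map (fun i => i - (τ + ν))) =
          (big.filter (fun i => ¬ i - (τ + ν) = 0)).map (fun i => i - (τ + ν)) := by
        rw [Multiset.filter_map]
        rfl
      have hg2 : ((big.filter (fun i => ¬ i - (τ + ν) = 0)).map
            (fun i => i - (τ + ν))).map (· + (τ + ν)) =
          big.filter (fun i => ¬ i - (τ + ν) = 0) := by
        rw [Multiset.map_map]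
        rw [show (big.filter (fun i => ¬ i - (τ + ν) = 0)).map
              ((· + (τ + ν)) ∘ (fun i => i - (τ + ν))) =
            (big.filter (fun i => ¬ i - (τ + ν) = 0)).map id from
          Multiset.map_congr rfl (fun x hx => by
            have hxb : x ∈ big := Multiset.mem_of_mem_filter hx
            have := Multiset.of_mem_filter hxb
            simp only [Function.comp_apply, id_eq]
            omega), Multiset.map_id]
      have hgsplit := Multiset.filter_add_not (fun i => ¬ i - (τ + ν) = 0) big
      have hrep : big.filter (fun i => ¬ ¬ i - (τ + ν) = 0) =
          Multiset.replicate
            (Multiset.card (big.filter (fun i => ¬ ¬ i - (τ + ν) = 0))) (τ + ν) := by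
        rw [Multiset.eq_replicate]
        refine ⟨rfl, fun b hb => ?_⟩
        have h1 := Multiset.of_mem_filter hb
        have h2 := Multiset.of_mem_filter (Multiset.mem_of_mem_filter hb)
        omega
      have hcards := congrArg Multiset.card hgsplit
      rw [Multiset.card_add, hbigcard] at hcards
      rw [hb0, hg1, hg2, Multiset.card_map]
      have hcc : τ - Multiset.card (big.filter (fun i => ¬ i - (τ + ν) = 0)) =
          Multiset.card (big.filter (fun i => ¬ ¬ i - (τ + ν) = 0)) := by
        omega
      rw [hcc, ← hrep, hgsplit]
      rw [add_assoc, tsub_add_cancel_of_le hIle, hbigdef, hsmldef]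
      exact Multiset.filter_add_not _ _
    -- right inverse
    case ri =>
      rintro ⟨⟨u, v⟩, γ, β⟩ hx
      obtain ⟨hx1, hx2⟩ := Finset.mem_sigma.mp hx
      obtain ⟨hxg, hxb⟩ := Finset.mem_product.mp hx2
      have hga : Multiset.card γ.parts ≤ τ := (Finset.mem_filter.mp hxg).2
      have hbb : ∀ j ∈ β.parts, j ≤ ν + τ - 1 := (Finset.mem_filter.mp hxb).2
      have hbig := filter_recomposed_big (τ := τ) hν γ.parts β.parts hbb
        (τ - Multiset.card γ.parts)
      have hsml := filter_recomposed_small (τ := τ) hν γ.parts β.parts hbb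
        (τ - Multiset.card γ.parts)
      have hgm : (γ.parts.map (· + (τ + ν)) +
            Multiset.replicate (τ - Multiset.card γ.parts) (τ + ν)).map
            (fun i => i - (τ + ν)) =
          γ.parts + Multiset.replicate (τ - Multiset.card γ.parts) 0 := by
        rw [Multiset.map_add, Multiset.map_map, Multiset.map_replicate]
        congr 1
        · rw [show γ.parts.map ((fun i => i - (τ + ν)) ∘ (· + (τ + ν))) =
              γ.parts.map id from
            Multiset.map_congr rfl (fun x _ => by
              simp only [Function.comp_apply, id_eq]
              omega), Multiset.map_id]
        · congr 1
          omega
      have hbm : (β.parts + Iset ν) - Iset ν = β.parts := by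
        rw [add_tsub_cancel_right]
      apply sigma_pair_ext
      · simp only [hbig, hgm, Multiset.sum_add, Multiset.sum_replicate, smul_eq_mul,
          mul_zero, add_zero]
        exact γ.parts_sum
      · simp only [hsml, hbm]
        exact β.parts_sum
      · simp only [Nat.Partition.ofMultiset_parts, hbig, hgm]
        rw [Multiset.filter_add]
        rw [Multiset.filter_eq_self.mpr (fun a ha => by
          have := γ.parts_pos ha
          omega)]
        rw [Multiset.filter_eq_nil.mpr (fun a ha => by
          have := Multiset.eq_of_mem_replicate ha
          omega), add_zero]
      · simp only [Nat.Partition.ofMultiset_parts, hsml, hbm]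
        rw [Multiset.filter_eq_self.mpr (fun a ha => by
          have := β.parts_pos ha
          omega)]
  · rw [Finset.card_eq_zero, Finset.eq_empty_iff_forall_notMem]
    intro π hπ
    simp only [Finset.mem_filter] at hπ
    obtain ⟨-, -, hsum⟩ := key π hπ.2
    omega

lemma durfee_le_n (ν n : ℕ) (π : Nat.Partition n) : durfee ν π.parts ≤ n := by
  have h1 : durfee ν π.parts ≤ Multiset.card π.parts := Nat.findGreatest_le _
  have h2 : Multiset.card π.parts ≤ π.parts.sum := by
    have := Multiset.card_nsmul_le_sum (s := π.parts) (a := 1)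
      (fun x hx => π.parts_pos hx)
    simpa using this
  rw [π.parts_sum] at h2
  omega

/-- Generating function for `N_ν`:
`Σ_n N_ν(n) q^n = q^(ν(ν-1)/2) Σ_{τ≥0} q^(τ(ν+τ)) / ((q;q)_τ (q;q)_{ν+τ-1})`. -/
theorem stmt6 (ν : ℕ) (hν : 1 ≤ ν) :
    PowerSeries.mk (fun n => (Nnu ν n : ℚ)) =
      (X : PowerSeries ℚ) ^ (ν * (ν - 1) / 2) *
        isum (fun τ => X ^ (τ * (ν + τ)) * (qpoch τ * qpoch (ν + τ - 1))⁻¹) := by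
  have hA : ∀ k m, coeff m (Pser k) = cA k m := coeff_Pser cA cA_zero cA_rec
  have hB : ∀ k m, coeff m (Pser k) = cB k m := coeff_Pser cB cB_zero cB_rec
  have coeff_f : ∀ τ k : ℕ,
      coeff k ((X : PowerSeries ℚ) ^ (τ * (ν + τ)) * (qpoch τ * qpoch (ν + τ - 1))⁻¹) =
        if τ * (ν + τ) ≤ k
          then ((∑ uv ∈ Finset.HasAntidiagonal.antidiagonal (k - τ * (ν + τ)),
            cA τ uv.1 * cB (ν + τ - 1) uv.2 : ℕ) : ℚ) else 0 := by
    intro τ k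
    rw [inv_qpoch_mul, mul_comm, coeff_mul_X_pow']
    split_ifs with h
    · rw [coeff_mul]
      push_cast
      exact Finset.sum_congr rfl (fun uv _ => by rw [hA τ uv.1, hB (ν + τ - 1) uv.2])
    · rfl
  ext n
  rw [coeff_mk]
  -- left side
  have hL : Nnu ν n = ∑ τ ∈ Finset.range (n + 1),
      (if ν * (ν - 1) / 2 + τ * (ν + τ) ≤ n
        then #(Tset ν τ (n - (ν * (ν - 1) / 2 + τ * (ν + τ)))) else 0) := by
    rw [Nnu]
    rw [Nat.card_eq_fintype_card, Fintype.card_subtype]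
    rw [Finset.card_eq_sum_card_fiberwise (f := fun π : Nat.Partition n => durfee ν π.parts)
      (t := Finset.range (n + 1))
      (fun π _ => Finset.mem_range.mpr (Nat.lt_succ_of_le (durfee_le_n ν n π)))]
    apply Finset.sum_congr rfl
    intro τ _
    rw [← Dc_eq ν hν τ n]
    apply congrArg Finset.card
    apply Finset.ext
    intro π
    simp only [Finset.mem_filter, Finset.mem_univ, true_and]
    try tauto
  rw [hL]
  push_cast
  -- right side
  rw [mul_comm ((X : PowerSeries ℚ) ^ (ν * (ν - 1) / 2)), coeff_mul_X_pow']
  split_ifs with hDn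
  · rw [isum, coeff_mk]
    rw [map_sum]
    have hterm : ∀ τ ∈ Finset.range (n - ν * (ν - 1) / 2 + 1),
        coeff (n - ν * (ν - 1) / 2)
            ((X : PowerSeries ℚ) ^ (τ * (ν + τ)) * (qpoch τ * qpoch (ν + τ - 1))⁻¹) =
          (if ν * (ν - 1) / 2 + τ * (ν + τ) ≤ n
            then ((∑ uv ∈ Finset.HasAntidiagonal.antidiagonal (n - (ν * (ν - 1) / 2 + τ * (ν + τ))),
              cA τ uv.1 * cB (ν + τ - 1) uv.2 : ℕ) : ℚ) else 0) := by
      intro τ _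
      rw [coeff_f τ (n - ν * (ν - 1) / 2)]
      have hiff : τ * (ν + τ) ≤ n - ν * (ν - 1) / 2 ↔
          ν * (ν - 1) / 2 + τ * (ν + τ) ≤ n := by omega
      simp only [hiff]
      split_ifs with h1
      · have : n - ν * (ν - 1) / 2 - τ * (ν + τ) =
            n - (ν * (ν - 1) / 2 + τ * (ν + τ)) := by omega
        rw [this]
      · rfl
    rw [Finset.sum_congr rfl hterm]
    rw [← Finset.sum_subset (Finset.range_subset_range.mpr (by omega : n - ν * (ν - 1) / 2 + 1 ≤ n + 1))
      (fun τ _ hτ => by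
        rw [if_neg]
        intro hcon
        rw [Finset.mem_range, not_lt] at hτ
        have hττ : τ ≤ τ * (ν + τ) := Nat.le_mul_of_pos_right τ (by omega)
        omega)]
    apply Finset.sum_congr rfl
    intro τ _
    split_ifs with h
    · exact_mod_cast congrArg (Nat.cast (R := ℚ))
        (Tset_card ν τ (n - (ν * (ν - 1) / 2 + τ * (ν + τ))))
    · rfl
  · apply Finset.sum_eq_zero
    intro τ _
    rw [if_neg (by omega)]
end

section
/- For each fixed ν ≥ 1: as formal power series, Σ_{n≥0} N_ν(n) q^n = (Σ_{n≥0} p(n) q^n)·q^(ν(ν-1)/2) − Σ_{n≥0} N_{ν+1}(n) q^n. -/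
open PowerSeries


open Multiset

lemma filter_ge_ext (s : Multiset ℕ) {a b : ℕ} (h : a = b) :
    s.filter (fun i => a ≤ i) = s.filter (fun i => b ≤ i) := by subst h; rfl

lemma fcard_mono (s : Multiset ℕ) {a b : ℕ} (h : a ≤ b) :
    (s.filter (fun i => b ≤ i)).card ≤ (s.filter (fun i => a ≤ i)).card :=
  Multiset.card_le_card (monotone_filter_right s (fun i hi => by omega))

lemma durfee_le_fcard (ν : ℕ) (s : Multiset ℕ) {a : ℕ} (ha : a = durfee ν s + ν) :
    durfee ν s ≤ (s.filter (fun i => a ≤ i)).card := by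
  subst ha
  exact Nat.findGreatest_spec (P := fun h => h ≤ (s.filter (fun i => h + ν ≤ i)).card)
    (Nat.zero_le _) (Nat.zero_le _)

lemma fcard_durfee_succ_le (ν : ℕ) (s : Multiset ℕ) {a : ℕ} (ha : a = durfee ν s + ν + 1) :
    (s.filter (fun i => a ≤ i)).card ≤ durfee ν s := by
  rw [filter_ge_ext s (show a = (durfee ν s + 1) + ν by omega)]
  by_cases h : durfee ν s + 1 ≤ Multiset.card s
  · have := Nat.findGreatest_is_greatest (P := fun h => h ≤ (s.filter (fun i => h + ν ≤ i)).card)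
      (n := Multiset.card s) (k := durfee ν s + 1) (Nat.lt_succ_self _) h
    omega
  · calc (s.filter (fun i => (durfee ν s + 1) + ν ≤ i)).card ≤ Multiset.card s :=
        Multiset.card_le_card (Multiset.filter_le _ s)
      _ ≤ durfee ν s := by omega

lemma durfee_eq (ν : ℕ) (s : Multiset ℕ) {k a b : ℕ} (ha : a = k + ν) (hb : b = k + ν + 1)
    (hcard : k ≤ Multiset.card s)
    (h1 : k ≤ (s.filter (fun i => a ≤ i)).card)
    (h2 : (s.filter (fun i => b ≤ i)).card ≤ k) :
    durfee ν s = k := by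
  subst ha hb
  refine le_antisymm ?_ (Nat.le_findGreatest hcard h1)
  by_contra hlt
  push_neg at hlt
  have hd := durfee_le_fcard ν s rfl
  have : (s.filter (fun i => durfee ν s + ν ≤ i)).card ≤
      (s.filter (fun i => k + ν + 1 ≤ i)).card := fcard_mono s (by omega)
  omega

lemma filter_ge_split (a : ℕ) (s : Multiset ℕ) :
    s.filter (fun i => a ≤ i) =
      s.filter (fun i => a + 1 ≤ i) + Multiset.replicate (s.count a) a := by
  rw [Multiset.ext]
  intro b
  rw [Multiset.count_add, Multiset.count_filter, Multiset.count_filter,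
    Multiset.count_replicate]
  rcases eq_or_ne b a with rfl | hb
  · split_ifs <;> omega
  · rw [if_neg (Ne.symm hb)]
    split_ifs <;> omega

lemma split_ge_le (a : ℕ) (s : Multiset ℕ) :
    s.filter (fun i => a + 1 ≤ i) + s.filter (fun i => i ≤ a) = s := by
  have : s.filter (fun i => i ≤ a) = s.filter (fun i => ¬ (a + 1 ≤ i)) :=
    Multiset.filter_congr (fun x _ => by omega)
  rw [this]
  exact Multiset.filter_add_not _ s

lemma sum_map_succ (A : Multiset ℕ) :
    (A.map (fun i => i + 1)).sum = A.sum + Multiset.card A := by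
  induction A using Multiset.induction_on with
  | empty => simp
  | cons a A ih => simp [ih]; omega

lemma sum_map_pred (A : Multiset ℕ) (h : ∀ i ∈ A, 1 ≤ i) :
    (A.map (fun i => i - 1)).sum + Multiset.card A = A.sum := by
  induction A using Multiset.induction_on with
  | empty => simp
  | cons a A ih =>
    simp only [Multiset.map_cons, Multiset.sum_cons, Multiset.card_cons]
    have ha := h a (Multiset.mem_cons_self a A)
    have := ih (fun i hi => h i (Multiset.mem_cons_of_mem hi))
    omega

/-- The forward move: on a partition violating the `ν`-Durfee condition. -/
def fwdM (ν : ℕ) (s : Multiset ℕ) : Multiset ℕ :=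
  (s.filter (fun i => durfee ν s + ν + 1 ≤ i)).map (fun i => i + 1) +
    Multiset.replicate (durfee ν s - (s.filter (fun i => durfee ν s + ν + 1 ≤ i)).card)
      (durfee ν s + ν + 1) +
    (s.filter (fun i => i ≤ durfee ν s + ν) -
      Multiset.replicate (durfee ν s - (s.filter (fun i => durfee ν s + ν + 1 ≤ i)).card + 1)
        (durfee ν s + ν)) +
    {ν}

/-- The backward move: on a partition satisfying the `ν+1`-Durfee condition. -/
def bwdM (ν : ℕ) (t : Multiset ℕ) : Multiset ℕ :=
  (t.filter (fun i => durfee (ν + 1) t + ν + 2 ≤ i)).map (fun i => i - 1) +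
    Multiset.replicate
      (durfee (ν + 1) t - (t.filter (fun i => durfee (ν + 1) t + ν + 2 ≤ i)).card)
      (durfee (ν + 1) t + ν) +
    (t.filter (fun i => i ≤ durfee (ν + 1) t + ν)).erase ν +
    {durfee (ν + 1) t + ν}

lemma fwd_main (ν : ℕ) (hν : 1 ≤ ν) (s : Multiset ℕ)
    (hpos : ∀ i ∈ s, 0 < i)
    (hQ : ∀ j, 1 ≤ j → j < ν → j ∈ s)
    (hA : durfee ν s < (s.filter (fun i => durfee ν s + ν ≤ i)).card) :
    (fwdM ν s).sum = s.sum ∧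
    (∀ i ∈ fwdM ν s, 0 < i) ∧
    (∀ j, 1 ≤ j → j < ν + 1 → j ∈ fwdM ν s) ∧
    durfee (ν + 1) (fwdM ν s) = durfee ν s ∧
    ((fwdM ν s).filter (fun i => durfee (ν + 1) (fwdM ν s) + (ν + 1) ≤ i)).card ≤
      durfee (ν + 1) (fwdM ν s) ∧
    bwdM ν (fwdM ν s) = s := by
  classical
  set d := durfee ν s with hd
  set H := s.filter (fun i => d + ν + 1 ≤ i) with hH
  set F := s.filter (fun i => i ≤ d + ν) with hF
  set c := H.card with hc
  set k := s.count (d + ν) with hk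
  -- basic facts
  have hH_mem : ∀ i ∈ H, d + ν + 1 ≤ i := fun i hi => (Multiset.mem_filter.1 hi).2
  have hF_mem : ∀ i ∈ F, i ≤ d + ν := fun i hi => (Multiset.mem_filter.1 hi).2
  have hsplit : H + F = s := split_ge_le (d + ν) s
  have hfd : (s.filter (fun i => d + ν ≤ i)).card = c + k := by
    rw [filter_ge_split (d + ν) s]
    simp [hc, hk, hH]
  have hAc : d < c + k := by rw [← hfd]; exact hA
  have hcd : c ≤ d := fcard_durfee_succ_le ν s rfl
  set rep := Multiset.replicate (d - c + 1) (d + ν) with hrep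
  have hcountF : F.count (d + ν) = k := by
    rw [hF, Multiset.count_filter, if_pos (le_refl _)]
  have hrep_le : rep ≤ F := by
    rw [Multiset.le_iff_count]
    intro a
    rw [hrep, Multiset.count_replicate]
    rcases eq_or_ne (d + ν) a with rfl | hne
    · rw [if_pos rfl, hcountF]; omega
    · rw [if_neg hne]; exact Nat.zero_le _
  have hFR_le : F - rep ≤ F := tsub_le_self
  have hFR_mem : ∀ i ∈ F - rep, i ≤ d + ν := fun i hi => hF_mem i (Multiset.mem_of_le hFR_le hi)
  have hcardF : F.card = Multiset.card s - c := by
    have := congrArg Multiset.card hsplit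
    rw [Multiset.card_add] at this
    omega
  have hrepF_card : d - c + 1 ≤ F.card := by
    have := Multiset.card_le_card hrep_le
    rw [hrep, Multiset.card_replicate] at this
    exact this
  have hfwd : fwdM ν s =
      H.map (fun i => i + 1) + Multiset.replicate (d - c) (d + ν + 1) + (F - rep) + {ν} := rfl
  have hcardt : Multiset.card (fwdM ν s) = Multiset.card s := by
    rw [hfwd]
    simp only [Multiset.card_add, Multiset.card_map, Multiset.card_replicate,
      Multiset.card_sub hrep_le, Multiset.card_singleton, hrep, Multiset.card_replicate]
    have hcle : c + k ≤ Multiset.card s := by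
      rw [← hfd]; exact Multiset.card_le_card (Multiset.filter_le _ s)
    have hcs := Multiset.card_sub hrep_le
    rw [hrep, Multiset.card_replicate] at hcs
    omega
  -- the three filter computations on t
  have hfilt2 : (fwdM ν s).filter (fun i => d + ν + 2 ≤ i) = H.map (fun i => i + 1) := by
    rw [hfwd, Multiset.filter_add, Multiset.filter_add, Multiset.filter_add,
      Multiset.filter_eq_self.2 (fun a ha => by
        obtain ⟨i, hi, rfl⟩ := Multiset.mem_map.1 ha
        have := hH_mem i hi; omega),
      Multiset.filter_eq_nil.2 (fun a ha => by
        have := Multiset.eq_of_mem_replicate ha; omega),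
      Multiset.filter_eq_nil.2 (fun a ha => by
        have := hFR_mem a ha; omega),
      Multiset.filter_eq_nil.2 (fun a ha => by
        rw [Multiset.mem_singleton] at ha; omega)]
    simp
  have hfilt1 : (fwdM ν s).filter (fun i => d + ν + 1 ≤ i) =
      H.map (fun i => i + 1) + Multiset.replicate (d - c) (d + ν + 1) := by
    rw [hfwd, Multiset.filter_add, Multiset.filter_add, Multiset.filter_add,
      Multiset.filter_eq_self.2 (fun a ha => by
        obtain ⟨i, hi, rfl⟩ := Multiset.mem_map.1 ha
        have := hH_mem i hi; omega),
      Multiset.filter_eq_self.2 (fun a ha => by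
        have := Multiset.eq_of_mem_replicate ha; omega),
      Multiset.filter_eq_nil.2 (fun a ha => by
        have := hFR_mem a ha; omega),
      Multiset.filter_eq_nil.2 (fun a ha => by
        rw [Multiset.mem_singleton] at ha; omega)]
    simp
  have hfilt0 : (fwdM ν s).filter (fun i => i ≤ d + ν) = (F - rep) + {ν} := by
    rw [hfwd, Multiset.filter_add, Multiset.filter_add, Multiset.filter_add,
      Multiset.filter_eq_nil.2 (fun a ha => by
        obtain ⟨i, hi, rfl⟩ := Multiset.mem_map.1 ha
        have := hH_mem i hi; omega),
      Multiset.filter_eq_nil.2 (fun a ha => by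
        have := Multiset.eq_of_mem_replicate ha; omega),
      Multiset.filter_eq_self.2 hFR_mem,
      Multiset.filter_eq_self.2 (fun a ha => by
        rw [Multiset.mem_singleton] at ha; omega)]
    simp
  have hcard2 : ((fwdM ν s).filter (fun i => d + ν + 2 ≤ i)).card = c := by
    rw [hfilt2, Multiset.card_map]
  have hcard1 : ((fwdM ν s).filter (fun i => d + ν + 1 ≤ i)).card = d := by
    rw [hfilt1, Multiset.card_add, Multiset.card_map, Multiset.card_replicate]
    omega
  have hdle : d ≤ Multiset.card s := by
    have : (s.filter (fun i => d + ν ≤ i)).card ≤ Multiset.card s :=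
      Multiset.card_le_card (Multiset.filter_le _ s)
    omega
  have hdurf : durfee (ν + 1) (fwdM ν s) = d := by
    refine durfee_eq (ν + 1) (fwdM ν s) (show d + ν + 1 = d + (ν+1) by omega)
      (show d + ν + 2 = d + (ν+1) + 1 by omega) (by rw [hcardt]; exact hdle) ?_ ?_
    · rw [hcard1]
    · rw [hcard2]; omega
  refine ⟨?_, ?_, ?_, hdurf, ?_, ?_⟩
  · -- sum preserved
    have hsumF : F.sum = (F - rep).sum + (d - c + 1) * (d + ν) := by
      conv_lhs => rw [← tsub_add_cancel_of_le hrep_le]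
      rw [Multiset.sum_add, Multiset.sum_replicate, smul_eq_mul]
    have e2 : (d - c + 1) * (d + ν) = (d - c) * (d + ν) + (d + ν) := Nat.succ_mul _ _
    rw [e2] at hsumF
    rw [hfwd, Multiset.sum_add, Multiset.sum_add, Multiset.sum_add, sum_map_succ,
      Multiset.sum_replicate, smul_eq_mul, Multiset.sum_singleton, ← hsplit,
      Multiset.sum_add, hsumF, Nat.mul_succ]
    have hcH : Multiset.card H = c := hc.symm
    generalize (d - c) * (d + ν) = q at *
    omega
  · -- positivity
    intro i hi
    rw [hfwd] at hi
    simp only [Multiset.mem_add] at hi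
    rcases hi with ((hi | hi) | hi) | hi
    · obtain ⟨j, hj, rfl⟩ := Multiset.mem_map.1 hi; omega
    · have := Multiset.eq_of_mem_replicate hi; omega
    · exact hpos i (Multiset.mem_of_le (le_trans hFR_le (Multiset.filter_le _ s)) hi)
    · rw [Multiset.mem_singleton] at hi; omega
  · -- contains 1..ν
    intro j hj1 hj2
    rw [hfwd]
    rcases eq_or_lt_of_le (Nat.lt_succ_iff.1 hj2) with rfl | hjν
    · exact Multiset.mem_add.2 (Or.inr (Multiset.mem_singleton_self j))
    · have hjF : j ∈ F := Multiset.mem_filter.2 ⟨hQ j hj1 hjν, by omega⟩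
      have hjrep : Multiset.count j rep = 0 := by
        rw [hrep, Multiset.count_replicate, if_neg (by omega)]
      have hjc : 0 < Multiset.count j (F - rep) := by
        rw [Multiset.count_sub, hjrep]
        have := Multiset.count_pos.2 hjF
        omega
      exact Multiset.mem_add.2 (Or.inl (Multiset.mem_add.2 (Or.inr (Multiset.count_pos.1 hjc))))
  · -- Durfee condition for ν+1
    rw [hdurf, filter_ge_ext (fwdM ν s) (show d + (ν + 1) = d + ν + 1 by omega), hcard1]
  · -- bwd ∘ fwd = id
    unfold bwdM
    rw [hdurf, hfilt2, hfilt0, Multiset.map_map]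
    have hmapid : Multiset.map ((fun i => i - 1) ∘ fun i => i + 1) H = H := by
      rw [show ((fun i => i - 1) ∘ fun i => i + 1) = id from funext fun i => by simp]
      exact Multiset.map_id H
    rw [hmapid, Multiset.card_map]
    rw [show (F - rep + {ν}).erase ν = F - rep by
      rw [add_comm, Multiset.singleton_add, Multiset.erase_cons_head]]
    have hFdecomp : F - rep + ({d + ν} + Multiset.replicate (d - c) (d + ν)) = F := by
      rw [Multiset.singleton_add, ← Multiset.replicate_succ, ← hrep,
        tsub_add_cancel_of_le hrep_le]
    rw [← hc]
    conv_rhs => rw [← hsplit, ← hFdecomp]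
    ac_rfl


lemma bwd_main (ν : ℕ) (hν : 1 ≤ ν) (t : Multiset ℕ)
    (hpos : ∀ i ∈ t, 0 < i)
    (hQ : ∀ j, 1 ≤ j → j < ν + 1 → j ∈ t)
    (hB : (t.filter (fun i => durfee (ν + 1) t + (ν + 1) ≤ i)).card ≤ durfee (ν + 1) t) :
    (bwdM ν t).sum = t.sum ∧
    (∀ i ∈ bwdM ν t, 0 < i) ∧
    (∀ j, 1 ≤ j → j < ν → j ∈ bwdM ν t) ∧
    durfee ν (bwdM ν t) = durfee (ν + 1) t ∧
    ¬ (((bwdM ν t).filter (fun i => durfee ν (bwdM ν t) + ν ≤ i)).card ≤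
        durfee ν (bwdM ν t)) ∧
    fwdM ν (bwdM ν t) = t := by
  classical
  set e := durfee (ν + 1) t with he
  set G := t.filter (fun i => e + ν + 2 ≤ i) with hG
  set L := t.filter (fun i => i ≤ e + ν) with hL
  set c := G.card with hc
  have hG_mem : ∀ i ∈ G, e + ν + 2 ≤ i := fun i hi => (Multiset.mem_filter.1 hi).2
  have hL_mem : ∀ i ∈ L, i ≤ e + ν := fun i hi => (Multiset.mem_filter.1 hi).2
  have hB' : (t.filter (fun i => e + ν + 1 ≤ i)).card ≤ e := by
    rw [filter_ge_ext t (show e + ν + 1 = e + (ν + 1) by omega)]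
    exact hB
  have hBe : (t.filter (fun i => e + ν + 1 ≤ i)).card = e :=
    le_antisymm hB' (durfee_le_fcard (ν + 1) t (show e + ν + 1 = e + (ν + 1) by omega))
  have hc_le : c ≤ e := by
    rw [hc, hG]
    exact fcard_durfee_succ_le (ν + 1) t (show e + ν + 2 = e + (ν + 1) + 1 by omega)
  have hcount : t.count (e + ν + 1) = e - c := by
    have := congrArg Multiset.card (filter_ge_split (e + ν + 1) t)
    rw [hBe, Multiset.card_add, Multiset.card_replicate, ← hG, ← hc] at this
    omega
  set M := Multiset.replicate (e - c) (e + ν + 1) with hM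
  have hmid : t.filter (fun i => e + ν + 1 ≤ i) = G + M := by
    rw [filter_ge_split (e + ν + 1) t, hcount, ← hG, ← hM]
  have hsplit : (G + M) + L = t := by
    rw [← hmid, hL]
    exact split_ge_le (e + ν) t
  have hνL : ν ∈ L := Multiset.mem_filter.2 ⟨hQ ν hν (Nat.lt_succ_self ν), by omega⟩
  have hbwd : bwdM ν t = G.map (fun i => i - 1) + Multiset.replicate (e - c) (e + ν) +
      L.erase ν + {e + ν} := rfl
  have hLe_le : L.erase ν ≤ L := Multiset.erase_le ν L
  have hLe_mem : ∀ i ∈ L.erase ν, i ≤ e + ν := fun i hi => hL_mem i (Multiset.mem_of_le hLe_le hi)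
  have hLcons : ν ::ₘ L.erase ν = L := Multiset.cons_erase hνL
  have hcardL : Multiset.card L = Multiset.card (L.erase ν) + 1 := by
    have h1 := Multiset.card_erase_of_mem hνL
    rw [Nat.pred_eq_sub_one] at h1
    have hL0 : L ≠ 0 := fun h => absurd (h ▸ hνL) (Multiset.notMem_zero ν)
    have h2 := Multiset.card_pos.2 hL0
    omega
  -- filter computations on s' = bwdM ν t
  have hfilt1 : (bwdM ν t).filter (fun i => e + ν + 1 ≤ i) = G.map (fun i => i - 1) := by
    rw [hbwd, Multiset.filter_add, Multiset.filter_add, Multiset.filter_add,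
      Multiset.filter_eq_self.2 (fun a ha => by
        obtain ⟨i, hi, rfl⟩ := Multiset.mem_map.1 ha
        have := hG_mem i hi; omega),
      Multiset.filter_eq_nil.2 (fun a ha => by
        have := Multiset.eq_of_mem_replicate ha; omega),
      Multiset.filter_eq_nil.2 (fun a ha => by
        have := hLe_mem a ha; omega),
      Multiset.filter_eq_nil.2 (fun a ha => by
        rw [Multiset.mem_singleton] at ha; omega)]
    simp
  have hcard1 : ((bwdM ν t).filter (fun i => e + ν + 1 ≤ i)).card = c := by
    rw [hfilt1, Multiset.card_map]
  have hfilt0 : (bwdM ν t).filter (fun i => e + ν ≤ i) =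
      G.map (fun i => i - 1) + Multiset.replicate (e - c) (e + ν) +
        (L.erase ν).filter (fun i => e + ν ≤ i) + {e + ν} := by
    rw [hbwd, Multiset.filter_add, Multiset.filter_add, Multiset.filter_add,
      Multiset.filter_eq_self.2 (fun a ha => by
        obtain ⟨i, hi, rfl⟩ := Multiset.mem_map.1 ha
        have := hG_mem i hi; omega),
      (Multiset.filter_eq_self (s := Multiset.replicate (e - c) (e + ν))).2 (fun a ha => by
        have := Multiset.eq_of_mem_replicate ha; omega),
      (Multiset.filter_eq_self (s := {e + ν})).2 (fun a ha => by
        rw [Multiset.mem_singleton] at ha; omega)]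
  have hcard0 : e < ((bwdM ν t).filter (fun i => e + ν ≤ i)).card := by
    rw [hfilt0, Multiset.card_add, Multiset.card_add, Multiset.card_add,
      Multiset.card_map, Multiset.card_replicate, Multiset.card_singleton]
    omega
  have hcards' : Multiset.card (bwdM ν t) = Multiset.card t := by
    have ht := congrArg Multiset.card hsplit
    rw [Multiset.card_add, Multiset.card_add, ← hc, hM, Multiset.card_replicate] at ht
    rw [hbwd, Multiset.card_add, Multiset.card_add, Multiset.card_add,
      Multiset.card_map, Multiset.card_replicate, Multiset.card_singleton]
    omega
  have he_le : e ≤ Multiset.card t := Nat.findGreatest_le _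
  have hdurf : durfee ν (bwdM ν t) = e := by
    refine durfee_eq ν (bwdM ν t) rfl rfl (by rw [hcards']; exact he_le) ?_ ?_
    · omega
    · rw [hcard1]; exact hc_le
  refine ⟨?_, ?_, ?_, hdurf, ?_, ?_⟩
  · -- sum preserved
    have hsg := sum_map_pred G (fun i hi => by have := hG_mem i hi; omega)
    have hsumL : L.sum = ν + (L.erase ν).sum := by
      conv_lhs => rw [← hLcons]
      rw [Multiset.sum_cons]
    have hsumt : t.sum = (G.sum + (e - c) * (e + ν + 1)) + L.sum := by
      rw [← hsplit, Multiset.sum_add, Multiset.sum_add, hM, Multiset.sum_replicate,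
        smul_eq_mul]
    have e1 : (e - c) * (e + ν + 1) = (e - c) * (e + ν) + (e - c) := Nat.mul_succ _ _
    rw [hbwd, Multiset.sum_add, Multiset.sum_add, Multiset.sum_add,
      Multiset.sum_replicate, smul_eq_mul, Multiset.sum_singleton, hsumt, hsumL, e1]
    generalize (e - c) * (e + ν) = q at *
    omega
  · -- positivity
    intro i hi
    rw [hbwd] at hi
    simp only [Multiset.mem_add] at hi
    rcases hi with ((hi | hi) | hi) | hi
    · obtain ⟨j, hj, rfl⟩ := Multiset.mem_map.1 hi
      have := hG_mem j hj; omega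
    · have := Multiset.eq_of_mem_replicate hi; omega
    · exact hpos i (Multiset.mem_of_le (le_trans hLe_le (Multiset.filter_le _ t)) hi)
    · rw [Multiset.mem_singleton] at hi; omega
  · -- contains 1..ν-1
    intro j hj1 hj2
    have hjt : j ∈ t := hQ j hj1 (by omega)
    have hjL : j ∈ L := Multiset.mem_filter.2 ⟨hjt, by omega⟩
    have hjc : 0 < Multiset.count j (L.erase ν) := by
      rw [Multiset.count_erase_of_ne (by omega)]
      exact Multiset.count_pos.2 hjL
    rw [hbwd]
    exact Multiset.mem_add.2 (Or.inl (Multiset.mem_add.2 (Or.inr (Multiset.count_pos.1 hjc))))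
  · -- violates the ν-Durfee condition
    rw [hdurf]
    omega
  · -- fwd ∘ bwd = id
    unfold fwdM
    rw [hdurf, hfilt1, Multiset.card_map, ← hc, Multiset.map_map]
    have hmapid : Multiset.map ((fun i => i + 1) ∘ fun i => i - 1) G = G := by
      refine (Multiset.map_congr rfl (fun i hi => ?_)).trans (Multiset.map_id G)
      have := hG_mem i hi
      show i - 1 + 1 = i
      omega
    have hfiltle : (bwdM ν t).filter (fun i => i ≤ e + ν) =
        Multiset.replicate (e - c) (e + ν) + L.erase ν + {e + ν} := by
      rw [hbwd, Multiset.filter_add, Multiset.filter_add, Multiset.filter_add,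
        Multiset.filter_eq_nil.2 (fun a ha => by
          obtain ⟨i, hi, rfl⟩ := Multiset.mem_map.1 ha
          have := hG_mem i hi; omega),
        Multiset.filter_eq_self.2 (fun a ha => by
          have := Multiset.eq_of_mem_replicate ha; omega),
        Multiset.filter_eq_self.2 hLe_mem,
        Multiset.filter_eq_self.2 (fun a ha => by
          rw [Multiset.mem_singleton] at ha; omega)]
      simp
    rw [hmapid, hfiltle]
    have hsub : Multiset.replicate (e - c) (e + ν) + L.erase ν + {e + ν} -
        Multiset.replicate (e - c + 1) (e + ν) = L.erase ν := by
      have hx : Multiset.replicate (e - c) (e + ν) + L.erase ν + {e + ν} =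
          L.erase ν + Multiset.replicate (e - c + 1) (e + ν) := by
        rw [Multiset.replicate_succ, ← Multiset.singleton_add]
        ac_rfl
      rw [hx, add_tsub_cancel_right]
    rw [hsub]
    conv_rhs => rw [← hsplit, ← hLcons, ← Multiset.singleton_add]
    rw [hM]
    ac_rfl

def fwdEquiv (ν n : ℕ) (hν : 1 ≤ ν) :
    {π : Nat.Partition n // (∀ j, 1 ≤ j → j < ν → j ∈ π.parts) ∧
      ¬ ((π.parts.filter (fun i => durfee ν π.parts + ν ≤ i)).card ≤ durfee ν π.parts)} ≃
    {π : Nat.Partition n // (∀ j, 1 ≤ j → j < ν + 1 → j ∈ π.parts) ∧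
      (π.parts.filter (fun i => durfee (ν + 1) π.parts + (ν + 1) ≤ i)).card ≤
        durfee (ν + 1) π.parts} where
  toFun x :=
    have h := fwd_main ν hν x.1.parts (fun i hi => x.1.parts_pos hi) x.2.1
      (Nat.lt_of_not_le x.2.2)
    ⟨⟨fwdM ν x.1.parts, fun {i} hi => h.2.1 i hi, by rw [h.1, x.1.parts_sum]⟩,
      h.2.2.1, h.2.2.2.2.1⟩
  invFun x :=
    have h := bwd_main ν hν x.1.parts (fun i hi => x.1.parts_pos hi) x.2.1 x.2.2
    ⟨⟨bwdM ν x.1.parts, fun {i} hi => h.2.1 i hi, by rw [h.1, x.1.parts_sum]⟩,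
      h.2.2.1, h.2.2.2.2.1⟩
  left_inv x := Subtype.ext (Nat.Partition.ext
    ((fwd_main ν hν x.1.parts (fun i hi => x.1.parts_pos hi) x.2.1
      (Nat.lt_of_not_le x.2.2)).2.2.2.2.2))
  right_inv x := Subtype.ext (Nat.Partition.ext
    ((bwd_main ν hν x.1.parts (fun i hi => x.1.parts_pos hi) x.2.1 x.2.2).2.2.2.2.2))

lemma add_eq (ν n : ℕ) (hν : 1 ≤ ν) :
    Nnu ν n + Nnu (ν + 1) n =
      Nat.card {π : Nat.Partition n // ∀ j, 1 ≤ j → j < ν → j ∈ π.parts} := by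
  classical
  unfold Nnu
  rw [← Nat.card_congr (fwdEquiv ν n hν), ← Nat.card_sum]
  refine Nat.card_congr ?_
  exact (Equiv.sumCongr
      (Equiv.subtypeSubtypeEquivSubtypeInter _ _).symm
      (Equiv.subtypeSubtypeEquivSubtypeInter _ _).symm).trans
    (Equiv.sumCompl fun x : {π : Nat.Partition n // ∀ j, 1 ≤ j → j < ν → j ∈ π.parts} =>
      (x.1.parts.filter (fun i => durfee ν x.1.parts + ν ≤ i)).card ≤ durfee ν x.1.parts)

lemma card_contains (ν n : ℕ) :
    Nat.card {π : Nat.Partition n // ∀ j, 1 ≤ j → j < ν → j ∈ π.parts} =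
      if ν * (ν - 1) / 2 ≤ n then Fintype.card (Nat.Partition (n - ν * (ν - 1) / 2)) else 0 := by
  classical
  set R := (Multiset.range ν).filter (fun j => 1 ≤ j) with hR
  have h0 : (Multiset.range ν).sum = ν * (ν - 1) / 2 := by
    rw [← Multiset.map_id' (Multiset.range ν)]
    exact Finset.sum_range_id ν
  have hRsum : R.sum = ν * (ν - 1) / 2 := by
    have hsplit := Multiset.filter_add_not (fun j => 1 ≤ j) (Multiset.range ν)
    have := congrArg Multiset.sum hsplit
    rw [Multiset.sum_add, h0] at this
    have hz : ((Multiset.range ν).filter (fun j => ¬ 1 ≤ j)).sum = 0 :=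
      Multiset.sum_eq_zero (fun x hx => by
        have := (Multiset.mem_filter.1 hx).2; omega)
    rw [hz] at this
    rw [hR]
    omega
  have hRnodup : R.Nodup := (Multiset.nodup_range ν).filter _
  have hmemR : ∀ j, j ∈ R ↔ (1 ≤ j ∧ j < ν) := fun j => by
    rw [hR, Multiset.mem_filter, Multiset.mem_range]
    tauto
  have hle : ∀ (π : Nat.Partition n), (∀ j, 1 ≤ j → j < ν → j ∈ π.parts) → R ≤ π.parts := by
    intro π hP
    rw [Multiset.le_iff_count]
    intro a
    by_cases haR : a ∈ R
    · rw [Multiset.count_eq_one_of_mem hRnodup haR]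
      obtain ⟨h1, h2⟩ := (hmemR a).1 haR
      exact Multiset.count_pos.2 (hP a h1 h2)
    · rw [Multiset.count_eq_zero.2 haR]
      exact Nat.zero_le _
  by_cases h : ν * (ν - 1) / 2 ≤ n
  · rw [if_pos h, ← Nat.card_eq_fintype_card]
    refine Nat.card_congr ?_
    refine
      { toFun := fun x => ⟨x.1.parts - R, fun {i} hi =>
          x.1.parts_pos (Multiset.mem_of_le tsub_le_self hi), ?_⟩
        invFun := fun p => ⟨⟨p.parts + R, fun {i} hi => ?_, by
            rw [Multiset.sum_add, p.parts_sum, hRsum]; omega⟩,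
          fun j hj1 hj2 => Multiset.mem_add.2 (Or.inr ((hmemR j).2 ⟨hj1, hj2⟩))⟩
        left_inv := fun x => Subtype.ext (Nat.Partition.ext
          (tsub_add_cancel_of_le (hle x.1 x.2)))
        right_inv := fun p => Nat.Partition.ext (by simp) }
    · have h1 := congrArg Multiset.sum (tsub_add_cancel_of_le (hle x.1 x.2))
      rw [Multiset.sum_add, x.1.parts_sum, hRsum] at h1
      omega
    · rcases Multiset.mem_add.1 hi with hi | hi
      · exact p.parts_pos hi
      · have := (hmemR i).1 hi; omega
  · rw [if_neg h]
    have : IsEmpty {π : Nat.Partition n // ∀ j, 1 ≤ j → j < ν → j ∈ π.parts} := by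
      refine ⟨fun x => ?_⟩
      have h1 := congrArg Multiset.sum (tsub_add_cancel_of_le (hle x.1 x.2))
      rw [Multiset.sum_add, x.1.parts_sum, hRsum] at h1
      omega
    exact Nat.card_of_isEmpty


/-- Recurrence for the generating function of `N_ν`:
`Σ N_ν(n) q^n = (Σ p(n) q^n)·q^(ν(ν-1)/2) − Σ N_{ν+1}(n) q^n`. -/
theorem stmt7 (ν : ℕ) (hν : 1 ≤ ν) :
    PowerSeries.mk (fun n => (Nnu ν n : ℚ)) =
      PowerSeries.mk (fun n => (Fintype.card (Nat.Partition n) : ℚ)) *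
          (X : PowerSeries ℚ) ^ (ν * (ν - 1) / 2) -
        PowerSeries.mk (fun n => (Nnu (ν + 1) n : ℚ)) := by
  ext n
  rw [map_sub, PowerSeries.coeff_mul_X_pow', PowerSeries.coeff_mk, PowerSeries.coeff_mk,
    PowerSeries.coeff_mk]
  have key : Nnu ν n + Nnu (ν + 1) n =
      if ν * (ν - 1) / 2 ≤ n then Fintype.card (Nat.Partition (n - ν * (ν - 1) / 2)) else 0 := by
    rw [add_eq ν n hν, card_contains]
  rw [eq_sub_iff_add_eq, ← Nat.cast_add, key]
  split <;> simp [PowerSeries.coeff_mk]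
end

section
/- For each fixed ν ≥ 1 and every m ≥ 0, as formal power series: Σ_{n≥0} N_ν(n) q^n = (Σ_{n≥0} p(n) q^n)·Σ_{τ=0}^m (-1)^τ q^((ν+τ)(ν+τ-1)/2) + (-1)^(m+1) Σ_{n≥0} N_{ν+m+1}(n) q^n. -/
open PowerSeries


open Multiset

namespace St8

/-- number of parts `≥ k` -/
def cnt (k : ℕ) (s : Multiset ℕ) : ℕ := (s.filter (fun i => k ≤ i)).card

lemma cnt_le_card (k : ℕ) (s : Multiset ℕ) : cnt k s ≤ Multiset.card s :=
  card_le_card (filter_le _ _)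

lemma durfee_le (ν : ℕ) (s : Multiset ℕ) : durfee ν s ≤ Multiset.card s :=
  Nat.findGreatest_le _

lemma durfee_spec (ν : ℕ) (s : Multiset ℕ) : durfee ν s ≤ cnt (durfee ν s + ν) s :=
  Nat.findGreatest_spec (P := fun h => h ≤ (s.filter (fun i => h + ν ≤ i)).card)
    (Nat.zero_le _) (Nat.zero_le _)

lemma durfee_max (ν : ℕ) (s : Multiset ℕ) {h : ℕ} (h1 : durfee ν s < h)
    (h2 : h ≤ Multiset.card s) : cnt (h + ν) s < h := by
  have := Nat.findGreatest_is_greatest (P := fun h => h ≤ (s.filter (fun i => h + ν ≤ i)).card)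
    h1 h2
  exact Nat.lt_of_not_le this

lemma durfee_eq (ν : ℕ) (s : Multiset ℕ) {m : ℕ} (hm : m ≤ Multiset.card s)
    (h1 : m ≤ cnt (m + ν) s)
    (h2 : ∀ h, m < h → h ≤ Multiset.card s → cnt (h + ν) s < h) :
    durfee ν s = m := by
  rw [durfee, Nat.findGreatest_eq_iff]
  exact ⟨hm, fun _ => h1, fun h hh1 hh2 hP => absurd hP (Nat.not_le_of_lt (h2 h hh1 hh2))⟩

lemma dec_ge (k : ℕ) (s : Multiset ℕ) :
    s.filter (fun i => k ≤ i) = replicate (s.count k) k + s.filter (fun i => k + 1 ≤ i) := by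
  ext j
  simp only [count_add, count_filter, count_replicate]
  rcases eq_or_ne k j with rfl | hne
  · simp only [if_pos rfl]; split_ifs <;> omega
  · simp only [if_neg hne]; split_ifs <;> omega

lemma dec_lt (k : ℕ) (s : Multiset ℕ) :
    s.filter (fun i => i < k + 1) = replicate (s.count k) k + s.filter (fun i => i < k) := by
  ext j
  simp only [count_add, count_filter, count_replicate]
  rcases eq_or_ne k j with rfl | hne
  · simp only [if_pos rfl]; split_ifs <;> omega
  · simp only [if_neg hne]; split_ifs <;> omega

lemma dec_all (k : ℕ) (s : Multiset ℕ) :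
    s = s.filter (fun i => k + 1 ≤ i) + replicate (s.count k) k + s.filter (fun i => i < k) := by
  ext j
  simp only [count_add, count_filter, count_replicate]
  rcases eq_or_ne k j with rfl | hne
  · simp only [if_pos rfl]; split_ifs <;> omega
  · simp only [if_neg hne]; split_ifs <;> omega

lemma cnt_succ (k : ℕ) (s : Multiset ℕ) : cnt k s = s.count k + cnt (k + 1) s := by
  rw [cnt, dec_ge, card_add, card_replicate, cnt]

lemma sum_map_add_one (t : Multiset ℕ) : (t.map (· + 1)).sum = t.sum + Multiset.card t := by
  induction t using Multiset.induction_on with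
  | empty => simp
  | cons a t ih => simp [ih]; omega

lemma sum_map_sub_one (t : Multiset ℕ) (ht : ∀ x ∈ t, 1 ≤ x) :
    (t.map (· - 1)).sum + Multiset.card t = t.sum := by
  induction t using Multiset.induction_on with
  | empty => simp
  | cons a t ih =>
    have ha : 1 ≤ a := ht a (mem_cons_self _ _)
    have := ih (fun x hx => ht x (mem_cons_of_mem hx))
    simp only [map_cons, sum_cons, card_cons]
    omega

end St8

namespace St8
open Multiset

lemma filter_replicate' (p : ℕ → Prop) [DecidablePred p] (n a : ℕ) :
    (replicate n a).filter p = if p a then replicate n a else 0 := by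
  induction n with
  | zero => simp
  | succ n ih => rw [replicate_succ, filter_cons]; split_ifs <;> simp_all [replicate_succ]

def Fm (ν : ℕ) (s : Multiset ℕ) : Multiset ℕ :=
  (s.filter (fun i => durfee ν s + ν + 1 ≤ i)).map (· + 1)
    + replicate (durfee ν s - cnt (durfee ν s + ν + 1) s) (durfee ν s + ν + 1)
    + replicate (s.count (durfee ν s + ν) - 1 - (durfee ν s - cnt (durfee ν s + ν + 1) s))
        (durfee ν s + ν)
    + s.filter (fun i => i < durfee ν s + ν)
    + {ν}

variable {ν : ℕ} {s : Multiset ℕ}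

lemma hb_of_fail (hfail : durfee ν s < cnt (durfee ν s + ν) s) :
    cnt (durfee ν s + ν + 1) s ≤ durfee ν s := by
  have h1 : durfee ν s + 1 ≤ Multiset.card s := le_trans hfail (cnt_le_card _ _)
  have h2 := durfee_max ν s (Nat.lt_succ_self _) h1
  rw [show durfee ν s + 1 + ν = durfee ν s + ν + 1 by omega] at h2
  omega

lemma hab_of_fail (hfail : durfee ν s < cnt (durfee ν s + ν) s) :
    durfee ν s + 1 ≤ s.count (durfee ν s + ν) + cnt (durfee ν s + ν + 1) s := by
  have := cnt_succ (durfee ν s + ν) s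
  omega

lemma Fm_sum (hfail : durfee ν s < cnt (durfee ν s + ν) s) : (Fm ν s).sum = s.sum := by
  have hb := hb_of_fail hfail
  have hab := hab_of_fail hfail
  rw [Fm, sum_add, sum_add, sum_add, sum_add, sum_map_add_one, sum_replicate, sum_replicate,
    sum_singleton]
  conv_rhs => rw [dec_all (durfee ν s + ν) s, sum_add, sum_add, sum_replicate]
  simp only [smul_eq_mul, cnt] at *
  generalize (Multiset.filter (fun i => durfee ν s + ν + 1 ≤ i) s).sum = B
  generalize (Multiset.filter (fun i => i < durfee ν s + ν) s).sum = L
  generalize hA : Multiset.count (durfee ν s + ν) s = a at hab ⊢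
  generalize hB : Multiset.card (Multiset.filter (fun i => durfee ν s + ν + 1 ≤ i) s) = b at hb hab ⊢
  generalize hD : durfee ν s = d at hb hab ⊢
  obtain ⟨c, hc⟩ := Nat.le.dest hb
  obtain ⟨e, he⟩ : ∃ e, a = (d - b) + 1 + e := ⟨a - (d - b) - 1, by omega⟩
  subst hc
  have h1 : b + c - b = c := by omega
  rw [h1] at he ⊢
  rw [he]
  have h2 : c + 1 + e - 1 - c = e := by omega
  rw [h2]
  ring

lemma cnt_add (k : ℕ) (X Y : Multiset ℕ) : cnt k (X + Y) = cnt k X + cnt k Y := by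
  rw [cnt, cnt, cnt, filter_add, card_add]

lemma cnt_map_succ (k : ℕ) (t : Multiset ℕ) (hk : 1 ≤ k) :
    cnt k (t.map (· + 1)) = cnt (k - 1) t := by
  rw [cnt, filter_map, card_map, cnt]
  congr 1
  apply filter_congr
  intro x _
  simp only [Function.comp_apply]
  omega

lemma cnt_replicate (k n a : ℕ) : cnt k (replicate n a) = if k ≤ a then n else 0 := by
  rw [cnt, filter_replicate']
  split_ifs <;> simp

lemma cnt_singleton (k a : ℕ) : cnt k ({a} : Multiset ℕ) = if k ≤ a then 1 else 0 := by
  rw [cnt, filter_singleton]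
  split_ifs <;> simp

lemma cnt_filter_ge_of_le {k l : ℕ} (h : k ≤ l) (s : Multiset ℕ) :
    cnt k (s.filter (fun i => l ≤ i)) = cnt l s := by
  rw [cnt, filter_filter, cnt]
  congr 1
  apply filter_congr
  intro x _
  constructor <;> intro hx <;> omega

lemma cnt_filter_ge_of_ge {k l : ℕ} (h : l ≤ k) (s : Multiset ℕ) :
    cnt k (s.filter (fun i => l ≤ i)) = cnt k s := by
  rw [cnt, filter_filter, cnt]
  congr 1
  apply filter_congr
  intro x _
  constructor <;> intro hx <;> omega

lemma cnt_filter_lt {k l : ℕ} (h : l ≤ k) (s : Multiset ℕ) :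
    cnt k (s.filter (fun i => i < l)) = 0 := by
  rw [cnt, filter_filter]
  rw [card_eq_zero, filter_eq_nil]
  intro x _
  omega

lemma Fm_card (hfail : durfee ν s < cnt (durfee ν s + ν) s) :
    Multiset.card (Fm ν s) = Multiset.card s := by
  have hb := hb_of_fail hfail
  have hab := hab_of_fail hfail
  rw [Fm]
  simp only [card_add, card_map, card_replicate, card_singleton]
  conv_rhs => rw [dec_all (durfee ν s + ν) s]
  simp only [card_add, card_replicate, cnt] at *
  omega

lemma Fm_pos (hν : 1 ≤ ν) (hpos : ∀ x ∈ s, 0 < x) : ∀ x ∈ Fm ν s, 0 < x := by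
  intro x hx
  rw [Fm] at hx
  simp only [mem_add, mem_map, mem_filter, mem_replicate, mem_singleton] at hx
  rcases hx with ((((⟨y, ⟨hy, hy2⟩, rfl⟩ | ⟨_, rfl⟩) | ⟨_, rfl⟩) | ⟨hy, hlt⟩) | rfl) <;>
    first
      | omega
      | exact hpos _ hy

lemma Fm_cnt_top (hfail : durfee ν s < cnt (durfee ν s + ν) s) :
    cnt (durfee ν s + ν + 1) (Fm ν s) = durfee ν s := by
  have hb := hb_of_fail hfail
  rw [Fm, cnt_add, cnt_add, cnt_add, cnt_add, cnt_map_succ _ _ (by omega),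
    cnt_replicate, cnt_replicate, cnt_singleton,
    show durfee ν s + ν + 1 - 1 = durfee ν s + ν from rfl,
    cnt_filter_ge_of_le (by omega) s, cnt_filter_lt (by omega) s]
  rw [if_pos le_rfl, if_neg (by omega), if_neg (by omega)]
  omega

lemma Fm_cnt_high (hfail : durfee ν s < cnt (durfee ν s + ν) s) {h : ℕ}
    (hh : durfee ν s < h) :
    cnt (h + ν + 1) (Fm ν s) = cnt (h + ν) s := by
  rw [Fm, cnt_add, cnt_add, cnt_add, cnt_add, cnt_map_succ _ _ (by omega),
    cnt_replicate, cnt_replicate, cnt_singleton,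
    show h + ν + 1 - 1 = h + ν from rfl,
    cnt_filter_ge_of_ge (by omega) s, cnt_filter_lt (by omega) s]
  rw [if_neg (by omega), if_neg (by omega), if_neg (by omega)]
  omega

lemma Fm_durfee (hfail : durfee ν s < cnt (durfee ν s + ν) s) :
    durfee (ν + 1) (Fm ν s) = durfee ν s := by
  have hcard : durfee ν s ≤ Multiset.card s := durfee_le ν s
  apply durfee_eq
  · rw [Fm_card hfail]; exact hcard
  · exact le_of_eq (Fm_cnt_top hfail).symm
  · intro h hh hcard'
    rw [Fm_card hfail] at hcard'
    have : cnt (h + (ν + 1)) (Fm ν s) = cnt (h + ν) s := Fm_cnt_high hfail hh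
    rw [this]
    exact durfee_max ν s hh hcard'

lemma Fm_mem (hν : 1 ≤ ν) (hmem : ∀ j, 1 ≤ j → j < ν → j ∈ s) :
    ∀ j, 1 ≤ j → j < ν + 1 → j ∈ Fm ν s := by
  intro j h1 h2
  rw [Fm]
  rcases eq_or_lt_of_le (Nat.lt_succ_iff.1 h2) with rfl | hj
  · simp
  · refine mem_add.2 (Or.inl (mem_add.2 (Or.inr ?_)))
    rw [mem_filter]
    exact ⟨hmem j h1 hj, by omega⟩

lemma Fm_fail (hfail : durfee ν s < cnt (durfee ν s + ν) s) :
    cnt (durfee (ν + 1) (Fm ν s) + (ν + 1)) (Fm ν s) ≤ durfee (ν + 1) (Fm ν s) := by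
  rw [Fm_durfee hfail]
  exact le_of_eq (Fm_cnt_top hfail)

/-- the parts of `Fm ν s` which are `≥ d + ν + 1` -/
lemma Fm_filter_ge (hfail : durfee ν s < cnt (durfee ν s + ν) s) :
    (Fm ν s).filter (fun i => durfee ν s + ν + 1 ≤ i) =
      (s.filter (fun i => durfee ν s + ν + 1 ≤ i)).map (· + 1)
        + replicate (durfee ν s - cnt (durfee ν s + ν + 1) s) (durfee ν s + ν + 1) := by
  have e1 : Multiset.filter (fun i => durfee ν s + ν + 1 ≤ i)
      ((s.filter (fun i => durfee ν s + ν + 1 ≤ i)).map (· + 1)) =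
      (s.filter (fun i => durfee ν s + ν + 1 ≤ i)).map (· + 1) := by
    rw [filter_eq_self]
    intro x hx
    obtain ⟨y, hy, rfl⟩ := mem_map.1 hx
    have := (mem_filter.1 hy).2
    omega
  have e2 : Multiset.filter (fun i => durfee ν s + ν + 1 ≤ i)
      (s.filter (fun i => i < durfee ν s + ν)) = 0 := by
    rw [filter_eq_nil]
    intro x hx
    have := (mem_filter.1 hx).2
    omega
  rw [Fm, filter_add, filter_add, filter_add, filter_add, e1, e2,
    filter_replicate', filter_replicate', filter_singleton,
    if_pos le_rfl, if_neg (by omega), if_neg (by omega)]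
  simp

/-- the parts of `Fm ν s` which are `≤ d + ν` -/
lemma Fm_filter_lt (hfail : durfee ν s < cnt (durfee ν s + ν) s) :
    (Fm ν s).filter (fun i => i < durfee ν s + ν + 1) =
      replicate (s.count (durfee ν s + ν) - 1 -
          (durfee ν s - cnt (durfee ν s + ν + 1) s)) (durfee ν s + ν)
        + s.filter (fun i => i < durfee ν s + ν) + {ν} := by
  have e1 : Multiset.filter (fun i => i < durfee ν s + ν + 1)
      ((s.filter (fun i => durfee ν s + ν + 1 ≤ i)).map (· + 1)) = 0 := by
    rw [filter_eq_nil]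
    intro x hx
    obtain ⟨y, hy, rfl⟩ := mem_map.1 hx
    have := (mem_filter.1 hy).2
    omega
  have e2 : Multiset.filter (fun i => i < durfee ν s + ν + 1)
      (s.filter (fun i => i < durfee ν s + ν)) =
      s.filter (fun i => i < durfee ν s + ν) := by
    rw [filter_eq_self]
    intro x hx
    have := (mem_filter.1 hx).2
    omega
  rw [Fm, filter_add, filter_add, filter_add, filter_add, e1, e2,
    filter_replicate', filter_replicate', filter_singleton,
    if_neg (by omega), if_pos (by omega), if_pos (by omega)]
  simp [add_comm, add_assoc, add_left_comm]

def Gm (ν : ℕ) (s : Multiset ℕ) : Multiset ℕ :=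
  (s.filter (fun i => durfee (ν + 1) s + ν + 1 ≤ i)).map (· - 1)
    + (s.filter (fun i => i < durfee (ν + 1) s + ν + 1)).erase ν
    + {durfee (ν + 1) s + ν}

section Aside

variable (hν : 1 ≤ ν) (hmem : ∀ j, 1 ≤ j → j < ν + 1 → j ∈ s)
  (hcond : cnt (durfee (ν + 1) s + (ν + 1)) s ≤ durfee (ν + 1) s)

include hcond in
lemma hd_of_cond : cnt (durfee (ν + 1) s + ν + 1) s = durfee (ν + 1) s :=
  le_antisymm hcond (durfee_spec (ν + 1) s)

include hν hmem in
lemma nu_mem_low : ν ∈ s.filter (fun i => i < durfee (ν + 1) s + ν + 1) :=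
  mem_filter.2 ⟨hmem ν hν (by omega), by omega⟩

include hν hmem hcond in
lemma Gm_sum : (Gm ν s).sum = s.sum := by
  have h1 := sum_map_sub_one (s.filter (fun i => durfee (ν + 1) s + ν + 1 ≤ i))
    (fun x hx => by have := (mem_filter.1 hx).2; omega)
  have hcard : Multiset.card (s.filter (fun i => durfee (ν + 1) s + ν + 1 ≤ i)) =
      durfee (ν + 1) s := hd_of_cond hcond
  have h2 : ν + ((s.filter (fun i => i < durfee (ν + 1) s + ν + 1)).erase ν).sum =
      (s.filter (fun i => i < durfee (ν + 1) s + ν + 1)).sum := by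
    conv_rhs => rw [← cons_erase (nu_mem_low hν hmem), sum_cons]
  have h3 : s.sum = (s.filter (fun i => durfee (ν + 1) s + ν + 1 ≤ i)).sum +
      (s.filter (fun i => i < durfee (ν + 1) s + ν + 1)).sum := by
    conv_lhs => rw [dec_all (durfee (ν + 1) s + ν) s, sum_add, sum_add, sum_replicate]
    rw [dec_lt (durfee (ν + 1) s + ν) s, sum_add, sum_replicate]
    simp only [smul_eq_mul]
    omega
  rw [Gm, sum_add, sum_add, sum_singleton]
  omega

include hν hmem hcond in
lemma Gm_card : Multiset.card (Gm ν s) = Multiset.card s := by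
  have hcard : Multiset.card (s.filter (fun i => durfee (ν + 1) s + ν + 1 ≤ i)) =
      durfee (ν + 1) s := hd_of_cond hcond
  have h2 : Multiset.card (s.filter (fun i => i < durfee (ν + 1) s + ν + 1)) =
      Multiset.card ((s.filter (fun i => i < durfee (ν + 1) s + ν + 1)).erase ν) + 1 := by
    conv_lhs => rw [← cons_erase (nu_mem_low hν hmem), card_cons]
  have h3 : Multiset.card s = Multiset.card (s.filter (fun i => durfee (ν + 1) s + ν + 1 ≤ i)) +
      Multiset.card (s.filter (fun i => i < durfee (ν + 1) s + ν + 1)) := by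
    conv_lhs => rw [dec_all (durfee (ν + 1) s + ν) s, card_add, card_add, card_replicate]
    rw [dec_lt (durfee (ν + 1) s + ν) s, card_add, card_replicate]
    omega
  rw [Gm, card_add, card_add, card_map, card_singleton]
  omega

include hν in
lemma Gm_pos (hpos : ∀ x ∈ s, 0 < x) : ∀ x ∈ Gm ν s, 0 < x := by
  intro x hx
  rw [Gm] at hx
  simp only [mem_add, mem_map, mem_filter, mem_singleton] at hx
  rcases hx with ((⟨y, ⟨hy, hy2⟩, rfl⟩ | hy) | rfl)
  · omega
  · exact hpos _ (mem_filter.1 (mem_of_mem_erase hy)).1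
  · omega

include hν hmem hcond in
lemma Gm_cnt_width : durfee (ν + 1) s + 1 ≤ cnt (durfee (ν + 1) s + ν) (Gm ν s) := by
  have hcard : Multiset.card (s.filter (fun i => durfee (ν + 1) s + ν + 1 ≤ i)) =
      durfee (ν + 1) s := hd_of_cond hcond
  rw [Gm, cnt_add, cnt_add, cnt_singleton, if_pos le_rfl]
  have h1 : cnt (durfee (ν + 1) s + ν)
      ((s.filter (fun i => durfee (ν + 1) s + ν + 1 ≤ i)).map (· - 1)) =
      durfee (ν + 1) s := by
    rw [cnt, filter_eq_self.2, card_map, hcard]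
    intro x hx
    obtain ⟨y, hy, rfl⟩ := mem_map.1 hx
    have := (mem_filter.1 hy).2
    omega
  omega

include hcond in
lemma Gm_cnt_high {h : ℕ} (hh : durfee (ν + 1) s < h) :
    cnt (h + ν) (Gm ν s) = cnt (h + ν + 1) s := by
  rw [Gm, cnt_add, cnt_add, cnt_singleton, if_neg (by omega)]
  have h1 : cnt (h + ν) ((s.filter (fun i => durfee (ν + 1) s + ν + 1 ≤ i)).map (· - 1)) =
      cnt (h + ν + 1) s := by
    rw [cnt, filter_map, card_map, cnt, filter_filter]
    congr 1
    apply filter_congr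
    intro x _
    simp only [Function.comp_apply]
    constructor <;> intro hx <;> omega
  have h2 : cnt (h + ν) ((s.filter (fun i => i < durfee (ν + 1) s + ν + 1)).erase ν) = 0 := by
    rw [cnt, card_eq_zero, filter_eq_nil]
    intro x hx
    have := (mem_filter.1 (mem_of_mem_erase hx)).2
    omega
  omega

include hν hmem hcond in
lemma Gm_durfee : durfee ν (Gm ν s) = durfee (ν + 1) s := by
  have hcard : Multiset.card (Gm ν s) = Multiset.card s := Gm_card hν hmem hcond
  apply durfee_eq
  · rw [hcard]; exact durfee_le (ν + 1) s
  · exact le_trans (by omega) (Gm_cnt_width hν hmem hcond)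
  · intro h hh hcard'
    rw [hcard] at hcard'
    rw [Gm_cnt_high hcond hh]
    exact durfee_max (ν + 1) s hh hcard'

include hν hmem hcond in
lemma Gm_fail : durfee ν (Gm ν s) < cnt (durfee ν (Gm ν s) + ν) (Gm ν s) := by
  rw [Gm_durfee hν hmem hcond]
  exact Gm_cnt_width hν hmem hcond

include hν hmem hcond in
lemma Gm_mem : ∀ j, 1 ≤ j → j < ν → j ∈ Gm ν s := by
  intro j h1 h2
  rw [Gm]
  refine mem_add.2 (Or.inl (mem_add.2 (Or.inr ?_)))
  rw [mem_erase_of_ne (by omega)]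
  exact mem_filter.2 ⟨hmem j h1 (by omega), by omega⟩

end Aside

lemma GF (hfail : durfee ν s < cnt (durfee ν s + ν) s) : Gm ν (Fm ν s) = s := by
  have hb := hb_of_fail hfail
  have hab := hab_of_fail hfail
  rw [Gm, Fm_durfee hfail, Fm_filter_ge hfail, Fm_filter_lt hfail]
  rw [map_add, map_map, map_replicate]
  have e1 : ((· - 1) ∘ (· + 1) : ℕ → ℕ) = id := by funext x; simp
  rw [e1, map_id, show durfee ν s + ν + 1 - 1 = durfee ν s + ν from rfl]
  have e2 : (replicate (s.count (durfee ν s + ν) - 1 -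
        (durfee ν s - cnt (durfee ν s + ν + 1) s)) (durfee ν s + ν)
      + s.filter (fun i => i < durfee ν s + ν) + {ν}).erase ν =
      replicate (s.count (durfee ν s + ν) - 1 -
        (durfee ν s - cnt (durfee ν s + ν + 1) s)) (durfee ν s + ν)
      + s.filter (fun i => i < durfee ν s + ν) := by
    rw [add_comm _ ({ν} : Multiset ℕ), singleton_add, erase_cons_head]
  rw [e2]
  conv_rhs => rw [dec_all (durfee ν s + ν) s]
  ext j
  simp only [count_add, count_replicate, count_singleton, count_filter]
  rcases eq_or_ne j (durfee ν s + ν) with rfl | hne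
  · split_ifs <;> omega
  · split_ifs <;> omega

section Aside2

variable (hν : 1 ≤ ν) (hmem : ∀ j, 1 ≤ j → j < ν + 1 → j ∈ s)
  (hcond : cnt (durfee (ν + 1) s + (ν + 1)) s ≤ durfee (ν + 1) s)

lemma Gm_filter_ge : (Gm ν s).filter (fun i => durfee (ν + 1) s + ν + 1 ≤ i) =
    (s.filter (fun i => durfee (ν + 1) s + ν + 2 ≤ i)).map (· - 1) := by
  rw [Gm, filter_add, filter_add, filter_singleton, if_neg (by omega), filter_map]
  have e1 : (s.filter (fun i => durfee (ν + 1) s + ν + 1 ≤ i)).filter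
      ((fun i => durfee (ν + 1) s + ν + 1 ≤ i) ∘ (· - 1)) =
      s.filter (fun i => durfee (ν + 1) s + ν + 2 ≤ i) := by
    rw [filter_filter]
    apply filter_congr
    intro x _
    simp only [Function.comp_apply]
    constructor <;> intro hx <;> omega
  have e2 : ((s.filter (fun i => i < durfee (ν + 1) s + ν + 1)).erase ν).filter
      (fun i => durfee (ν + 1) s + ν + 1 ≤ i) = 0 := by
    rw [filter_eq_nil]
    intro x hx
    have := (mem_filter.1 (mem_of_mem_erase hx)).2
    omega
  rw [e1, e2]
  simp

lemma Gm_cnt_top : cnt (durfee (ν + 1) s + ν + 1) (Gm ν s) =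
    cnt (durfee (ν + 1) s + ν + 2) s := by
  rw [cnt, Gm_filter_ge, card_map, cnt]

lemma Gm_filter_lt : (Gm ν s).filter (fun i => i < durfee (ν + 1) s + ν) =
    ((s.filter (fun i => i < durfee (ν + 1) s + ν + 1)).erase ν).filter
      (fun i => i < durfee (ν + 1) s + ν) := by
  rw [Gm, filter_add, filter_add, filter_singleton, if_neg (by omega)]
  have e1 : ((s.filter (fun i => durfee (ν + 1) s + ν + 1 ≤ i)).map (· - 1)).filter
      (fun i => i < durfee (ν + 1) s + ν) = 0 := by
    rw [filter_eq_nil]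
    intro x hx
    obtain ⟨y, hy, rfl⟩ := mem_map.1 hx
    have := (mem_filter.1 hy).2
    omega
  rw [e1]
  simp

lemma Gm_count_width : (Gm ν s).count (durfee (ν + 1) s + ν) =
    s.count (durfee (ν + 1) s + ν + 1) +
      ((s.filter (fun i => i < durfee (ν + 1) s + ν + 1)).erase ν).count
        (durfee (ν + 1) s + ν) + 1 := by
  rw [Gm, count_add, count_add, count_singleton_self, count_map]
  congr 2
  rw [filter_filter, count_eq_card_filter_eq]
  congr 1
  apply filter_congr
  intro x _
  constructor <;> intro hx <;> omega

include hν hmem hcond in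
lemma FG : Fm ν (Gm ν s) = s := by
  have hd2 : cnt (durfee (ν + 1) s + ν + 1) s = durfee (ν + 1) s := hd_of_cond hcond
  have hsplit := cnt_succ (durfee (ν + 1) s + ν + 1) s
  rw [show durfee (ν + 1) s + ν + 1 + 1 = durfee (ν + 1) s + ν + 2 by omega] at hsplit
  have hnu : ν ∈ s.filter (fun i => i < durfee (ν + 1) s + ν + 1) := nu_mem_low hν hmem
  rw [Fm, Gm_durfee hν hmem hcond, Gm_filter_ge, Gm_filter_lt, Gm_cnt_top, Gm_count_width]
  rw [map_map]
  rw [map_congr rfl (f := (· + 1) ∘ (· - 1)) (g := id) (fun x hx => by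
    have := (mem_filter.1 hx).2
    simp only [Function.comp_apply, id]
    omega), map_id]
  have e1 : durfee (ν + 1) s - cnt (durfee (ν + 1) s + ν + 2) s =
      s.count (durfee (ν + 1) s + ν + 1) := by omega
  rw [e1]
  have e2 : s.count (durfee (ν + 1) s + ν + 1) +
      ((s.filter (fun i => i < durfee (ν + 1) s + ν + 1)).erase ν).count
        (durfee (ν + 1) s + ν) + 1 - 1 - s.count (durfee (ν + 1) s + ν + 1) =
      ((s.filter (fun i => i < durfee (ν + 1) s + ν + 1)).erase ν).count
        (durfee (ν + 1) s + ν) := by omega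
  rw [e2]
  conv_rhs => rw [dec_all (durfee (ν + 1) s + ν + 1) s]
  have e3 : ((s.filter (fun i => i < durfee (ν + 1) s + ν + 1)).erase ν).filter
      (fun i => durfee (ν + 1) s + ν + 1 ≤ i) = 0 := by
    rw [filter_eq_nil]
    intro x hx
    have := (mem_filter.1 (mem_of_mem_erase hx)).2
    omega
  have e4 := dec_all (durfee (ν + 1) s + ν)
    ((s.filter (fun i => i < durfee (ν + 1) s + ν + 1)).erase ν)
  rw [show durfee (ν + 1) s + ν + 1 = durfee (ν + 1) s + ν + 1 from rfl] at e4
  rw [e3, zero_add] at e4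
  have key : replicate (((s.filter (fun i => i < durfee (ν + 1) s + ν + 1)).erase ν).count
        (durfee (ν + 1) s + ν)) (durfee (ν + 1) s + ν) +
      (((s.filter (fun i => i < durfee (ν + 1) s + ν + 1)).erase ν).filter
        (fun i => i < durfee (ν + 1) s + ν) + {ν}) =
      s.filter (fun i => i < durfee (ν + 1) s + ν + 1) := by
    rw [← add_assoc, ← e4, add_comm, singleton_add, cons_erase hnu]
  conv_rhs => rw [← key]
  simp only [add_assoc]

end Aside2

/-! ### Counting -/

lemma card_split {α : Type*} [Finite α] (p q : α → Prop) :
    Nat.card {x // p x} = Nat.card {x // p x ∧ q x} + Nat.card {x // p x ∧ ¬ q x} := by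
  classical
  rw [← Nat.card_sum]
  apply Nat.card_congr
  exact ((Equiv.sumCongr (Equiv.subtypeSubtypeEquivSubtypeInter p q)
    (Equiv.subtypeSubtypeEquivSubtypeInter p (fun x => ¬ q x))).symm.trans
    (Equiv.sumCompl (fun y : {x // p x} => q y.1))).symm

def stair (ν : ℕ) : Multiset ℕ := (Multiset.range ν).filter (fun j => 1 ≤ j)

lemma stair_sum (ν : ℕ) : (stair ν).sum = ν * (ν - 1) / 2 := by
  have h0 : (Multiset.range ν).sum = ν * (ν - 1) / 2 := by
    rw [← Finset.sum_range_id ν, Finset.sum, Finset.range_val]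
    rw [Multiset.map_id']
  have h1 := filter_add_not (fun j => 1 ≤ j) (Multiset.range ν)
  have h2 : ((Multiset.range ν).filter (fun j => ¬ 1 ≤ j)).sum = 0 := by
    apply Multiset.sum_eq_zero
    intro x hx
    have := (mem_filter.1 hx).2
    omega
  have := congrArg Multiset.sum h1
  rw [sum_add, h2, add_zero] at this
  rw [stair, this, h0]

lemma mem_stair {ν j : ℕ} : j ∈ stair ν ↔ 1 ≤ j ∧ j < ν := by
  rw [stair, mem_filter, Multiset.mem_range]
  tauto

lemma stair_le {ν : ℕ} {s : Multiset ℕ} (h : ∀ j, 1 ≤ j → j < ν → j ∈ s) :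
    stair ν ≤ s := by
  rw [le_iff_count]
  intro j
  have hn : (stair ν).Nodup := Multiset.Nodup.filter _ (Multiset.nodup_range ν)
  rcases Nat.lt_or_ge (count j (stair ν)) 1 with h1 | h1
  · omega
  · have h2 : count j (stair ν) ≤ 1 := Multiset.nodup_iff_count_le_one.1 hn j
    have h3 : j ∈ stair ν := Multiset.count_pos.1 (by omega)
    have h4 := mem_stair.1 h3
    have h5 : j ∈ s := h j h4.1 h4.2
    have := Multiset.count_pos.2 h5
    omega

def eqvStair (ν n : ℕ) (hle : ν * (ν - 1) / 2 ≤ n) :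
    {π : Nat.Partition n // ∀ j, 1 ≤ j → j < ν → j ∈ π.parts} ≃
      Nat.Partition (n - ν * (ν - 1) / 2) where
  toFun x := ⟨x.1.parts - stair ν,
    fun {i} hi => x.1.parts_pos (Multiset.mem_of_le (Multiset.sub_le_self _ _) hi),
    by
      have hst : stair ν ≤ x.1.parts := stair_le x.2
      have h1 : (x.1.parts - stair ν) + stair ν = x.1.parts := tsub_add_cancel_of_le hst
      have := congrArg Multiset.sum h1
      rw [sum_add, stair_sum, x.1.parts_sum] at this
      omega⟩
  invFun y := ⟨⟨y.parts + stair ν,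
    fun {i} hi => by
      rcases mem_add.1 hi with h | h
      · exact y.parts_pos h
      · have := mem_stair.1 h; omega,
    by rw [sum_add, stair_sum, y.parts_sum]; omega⟩,
    fun j h1 h2 => mem_add.2 (Or.inr (mem_stair.2 ⟨h1, h2⟩))⟩
  left_inv x := by
    apply Subtype.ext
    apply Nat.Partition.ext
    exact tsub_add_cancel_of_le (stair_le x.2)
  right_inv y := by
    apply Nat.Partition.ext
    simp

lemma card_stair_le (ν n : ℕ) (hle : ν * (ν - 1) / 2 ≤ n) :
    Nat.card {π : Nat.Partition n // ∀ j, 1 ≤ j → j < ν → j ∈ π.parts} =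
      Fintype.card (Nat.Partition (n - ν * (ν - 1) / 2)) := by
  rw [Nat.card_congr (eqvStair ν n hle), Nat.card_eq_fintype_card]

lemma card_stair_gt (ν n : ℕ) (hlt : n < ν * (ν - 1) / 2) :
    Nat.card {π : Nat.Partition n // ∀ j, 1 ≤ j → j < ν → j ∈ π.parts} = 0 := by
  have : IsEmpty {π : Nat.Partition n // ∀ j, 1 ≤ j → j < ν → j ∈ π.parts} := by
    constructor
    rintro ⟨π, hπ⟩
    have hst : stair ν ≤ π.parts := stair_le hπ
    obtain ⟨u, hu⟩ := Multiset.le_iff_exists_add.1 hst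
    have h1 := π.parts_sum
    rw [hu, sum_add, stair_sum] at h1
    omega
  exact Nat.card_of_isEmpty

noncomputable def Nnu' (ν n : ℕ) : ℕ :=
  Nat.card {π : Nat.Partition n //
    (∀ j, 1 ≤ j → j < ν → j ∈ π.parts) ∧
    (π.parts.filter (fun i => durfee ν π.parts + ν ≤ i)).card ≤ durfee ν π.parts}

def eqvBA (hν : 1 ≤ ν) (n : ℕ) :
    {π : Nat.Partition n // (∀ j, 1 ≤ j → j < ν → j ∈ π.parts) ∧
        ¬ (π.parts.filter (fun i => durfee ν π.parts + ν ≤ i)).card ≤ durfee ν π.parts} ≃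
    {π : Nat.Partition n // (∀ j, 1 ≤ j → j < ν + 1 → j ∈ π.parts) ∧
        (π.parts.filter (fun i => durfee (ν + 1) π.parts + (ν + 1) ≤ i)).card ≤
          durfee (ν + 1) π.parts} where
  toFun x := ⟨⟨Fm ν x.1.parts,
      fun {i} hi => Fm_pos hν (fun y hy => x.1.parts_pos hy) i hi,
      by rw [Fm_sum (Nat.lt_of_not_le x.2.2)]; exact x.1.parts_sum⟩,
    ⟨Fm_mem hν x.2.1, Fm_fail (Nat.lt_of_not_le x.2.2)⟩⟩
  invFun x := ⟨⟨Gm ν x.1.parts,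
      fun {i} hi => Gm_pos hν (fun y hy => x.1.parts_pos hy) i hi,
      by rw [Gm_sum hν x.2.1 x.2.2]; exact x.1.parts_sum⟩,
    ⟨Gm_mem hν x.2.1 x.2.2, Nat.not_le_of_lt (Gm_fail hν x.2.1 x.2.2)⟩⟩
  left_inv x := Subtype.ext (Nat.Partition.ext (GF (Nat.lt_of_not_le x.2.2)))
  right_inv x := Subtype.ext (Nat.Partition.ext (FG hν x.2.1 x.2.2))

lemma key_nat (hν : 1 ≤ ν) (n : ℕ) :
    Nnu' ν n + Nnu' (ν + 1) n =
      if ν * (ν - 1) / 2 ≤ n then Fintype.card (Nat.Partition (n - ν * (ν - 1) / 2)) else 0 := by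
  have hsplit := card_split (α := Nat.Partition n)
    (fun π => ∀ j, 1 ≤ j → j < ν → j ∈ π.parts)
    (fun π => (π.parts.filter (fun i => durfee ν π.parts + ν ≤ i)).card ≤ durfee ν π.parts)
  have hBA : Nat.card {π : Nat.Partition n // (∀ j, 1 ≤ j → j < ν → j ∈ π.parts) ∧
      ¬ (π.parts.filter (fun i => durfee ν π.parts + ν ≤ i)).card ≤ durfee ν π.parts} =
      Nnu' (ν + 1) n := by
    unfold Nnu'
    exact Nat.card_congr (eqvBA hν n)
  rw [← hBA]
  unfold Nnu'
  rw [← hsplit]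
  split_ifs with h
  · exact card_stair_le ν n h
  · exact card_stair_gt ν n (by omega)

open PowerSeries in
lemma key_series (hν : 1 ≤ ν) :
    (PowerSeries.mk fun n => (Nnu' ν n : ℚ)) + (PowerSeries.mk fun n => (Nnu' (ν + 1) n : ℚ)) =
      (PowerSeries.mk fun n => (Fintype.card (Nat.Partition n) : ℚ)) *
        X ^ (ν * (ν - 1) / 2) := by
  ext n
  rw [_root_.map_add, coeff_mk, coeff_mk, coeff_mul_X_pow', ← Nat.cast_add, key_nat hν n]
  split_ifs with h
  · rw [coeff_mk]
  · simp

end St8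


/-- Iterated recurrence: for `ν ≥ 1` and `m ≥ 0`,
`Σ N_ν(n) q^n = (Σ p(n) q^n)·Σ_{τ=0}^m (-1)^τ q^((ν+τ)(ν+τ-1)/2) + (-1)^(m+1) Σ N_{ν+m+1}(n) q^n`. -/
theorem stmt8 (ν : ℕ) (hν : 1 ≤ ν) (m : ℕ) :
    PowerSeries.mk (fun n => (Nnu ν n : ℚ)) =
      PowerSeries.mk (fun n => (Fintype.card (Nat.Partition n) : ℚ)) *
          (∑ τ ∈ Finset.range (m + 1),
            (-1 : PowerSeries ℚ) ^ τ * X ^ ((ν + τ) * (ν + τ - 1) / 2)) +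
        (-1 : PowerSeries ℚ) ^ (m + 1) * PowerSeries.mk (fun n => (Nnu (ν + m + 1) n : ℚ)) := by
  rw [show Nnu = St8.Nnu' from rfl]
  induction m with
  | zero =>
    rw [Finset.sum_range_one]
    simp only [pow_zero, one_mul, Nat.add_zero]
    have K := St8.key_series hν
    linear_combination K
  | succ m ih =>
    rw [Finset.sum_range_succ]
    have K := St8.key_series (ν := ν + m + 1) (by omega)
    rw [show ν + (m + 1) = ν + m + 1 from rfl]
    linear_combination ih + (-1 : PowerSeries ℚ) ^ (m + 1) * K
end
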